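/- arXiv:2112.03361 — 8 statements merged into one kernel-verified Lean document; each statement's English description precedes it below -/
import Mathlib

section
/- The integral from 0 to 1 of arcsin(x)·arccos(x)/x dx equals (7/8)·ζ(3). -/
open Real MeasureTheory intervalIntegral Filter Topology Set

noncomputable def T : ℝ := ∑' n : ℕ, 1/(n+1:ℝ)^3
noncomputable def S : ℝ := ∑' k : ℕ, 1/(2*k+1:ℝ)^3

lemma sumT : Summable (fun n : ℕ => 1/(n+1:ℝ)^3) := by
  have := (Real.summable_one_div_nat_pow (p := 3)).2 (by norm_num)
  have h2 := this.comp_injective (i := fun n : ℕ => n + 1) (add_left_injective 1)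
  exact h2.congr (fun n => by simp [Function.comp]; try push_cast; try ring)

lemma sumS : Summable (fun k : ℕ => 1/(2*k+1:ℝ)^3) := by
  have h2 := sumT.comp_injective (i := fun k : ℕ => 2*k) (mul_right_injective₀ two_ne_zero)
  exact h2.congr (fun n => by simp [Function.comp]; try push_cast; try ring)

lemma sumOdd : Summable (fun k : ℕ => 1/(2*k+2:ℝ)^3) := by
  have h2 := sumT.comp_injective (i := fun k : ℕ => 2*k+1) (by intro a b h; simpa using h)
  exact h2.congr (fun n => by simp [Function.comp]; try push_cast; try ring)

lemma S_eq : S = 7/8 * T := by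
  have h := tsum_even_add_odd (f := fun n : ℕ => 1/(n+1:ℝ)^3)
    (sumS.congr (fun k => by push_cast; ring))
    (sumOdd.congr (fun k => by push_cast; ring))
  have h1 : (∑' k : ℕ, 1/((2*k:ℕ)+1:ℝ)^3) = S := tsum_congr fun k => by push_cast; ring
  have hodd : (∑' k : ℕ, 1/(((2*k+1:ℕ):ℝ)+1)^3) = (1/8) * T := by
    rw [T, ← tsum_mul_left]
    exact tsum_congr fun k => by push_cast; field_simp; ring
  rw [h1, hodd] at h
  rw [show (∑' n : ℕ, 1/((n:ℝ)+1)^3) = T from rfl] at h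
  linarith

lemma zeta3 : riemannZeta 3 = (T : ℂ) := by
  rw [zeta_eq_tsum_one_div_nat_add_one_cpow (by norm_num)]
  rw [T, Complex.ofReal_tsum]
  congr 1; ext n
  rw [show ((n:ℂ)+1)^(3:ℂ) = ((n:ℂ)+1)^(3:ℕ) by
    rw [← Complex.cpow_natCast]; norm_num]
  push_cast; norm_num

lemma intW (m : ℝ) (hm : m ≠ 0) (hsin : Real.sin (m*π) = 0) :
    ∫ u in (0:ℝ)..π, u*(π-u)*Real.sin (m*u)
      = 2*(1 - Real.cos (m*π))/m^3 := by
  have key : ∀ u : ℝ, HasDerivAt (fun u : ℝ =>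
      -(u*(π-u))*Real.cos (m*u)/m + (π-2*u)*Real.sin (m*u)/m^2 - 2*Real.cos (m*u)/m^3)
      (u*(π-u)*Real.sin (m*u)) u := by
    intro u
    have hc : HasDerivAt (fun u : ℝ => Real.cos (m*u)) (-Real.sin (m*u) * m) u := by
      simpa [Function.comp_def] using (Real.hasDerivAt_cos (m*u)).comp u ((hasDerivAt_id u).const_mul m)
    have hs : HasDerivAt (fun u : ℝ => Real.sin (m*u)) (Real.cos (m*u) * m) u := by
      simpa [Function.comp_def] using (Real.hasDerivAt_sin (m*u)).comp u ((hasDerivAt_id u).const_mul m)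
    have h1 : HasDerivAt (fun u : ℝ => -(u*(π-u))) (-(π - 2*u)) u := by
      have : HasDerivAt (fun u : ℝ => -(u*(π-u))) (-((1:ℝ)*(π-u) + u*(0-1))) u :=
        (((hasDerivAt_id u).mul ((hasDerivAt_const u π).sub (hasDerivAt_id u)))).neg
      convert this using 1; ring
    have h2 : HasDerivAt (fun u : ℝ => (π-2*u)) (-2 : ℝ) u := by
      simpa using (((hasDerivAt_id u).const_mul 2).const_sub π)
    have := (((h1.mul hc).div_const m).add (((h2.mul hs).div_const (m^2)))).sub
      ((hc.const_mul 2).div_const (m^3))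
    refine this.congr_deriv ?_
    field_simp
    ring
  rw [intervalIntegral.integral_eq_sub_of_hasDerivAt (fun u _ => key u) ?_]
  · rw [mul_comm m π] at hsin
    simp only [Real.sin_pi, mul_zero, Real.cos_zero, mul_one, Real.sin_zero, zero_mul]
    rw [show Real.sin (m*π) = 0 from by rwa [mul_comm]]
    field_simp
    ring
  · apply Continuous.intervalIntegrable
    fun_prop

lemma sin_odd_pi (k : ℕ) : Real.sin ((2*(k:ℝ)+1)*π) = 0 := by
  rw [show (2*(k:ℝ)+1)*π = ((2*k+1 : ℕ):ℝ)*π from by push_cast; ring]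
  exact Real.sin_nat_mul_pi (2*k+1)

lemma intW' (k : ℕ) :
    ∫ u in (0:ℝ)..π, u*(π-u)*Real.sin ((2*k+1)*u) = 4/(2*k+1:ℝ)^3 := by
  have h1 : ((2*k+1:ℝ)) ≠ 0 := by positivity
  rw [intW _ h1 (sin_odd_pi k)]
  have : Real.cos ((2*(k:ℝ)+1)*π) = -1 := by
    rw [show ((2*(k:ℝ)+1))*π = k*(2*π) + π from by ring, Real.cos_nat_mul_two_pi_add_pi]
  rw [this]; norm_num

lemma kernel_hasSum (r u : ℝ) (hr0 : 0 < r) (hr1 : r < 1) :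
    HasSum (fun k : ℕ => 2 * r^(2*k+1) * Real.sin ((2*k+1)*u))
      (2*r*(1+r^2)*Real.sin u / ((1-r^2)^2 + 4*r^2*(Real.sin u)^2)) := by
  set z : ℂ := (r:ℂ) * Complex.exp (u*Complex.I) with hz
  have hnz : ‖z‖ = r := by
    rw [hz, norm_mul, Complex.norm_exp_ofReal_mul_I]
    simp [abs_of_pos hr0]
  have hz2 : ‖z^2‖ < 1 := by
    rw [norm_pow, hnz]; nlinarith
  have hgeo := hasSum_geometric_of_norm_lt_one hz2
  have h2 := hgeo.mul_left (2*z)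
  have him := (Complex.hasSum_iff _ _).1 h2 |>.2
  have hterm : ∀ k : ℕ, (2*z*(z^2)^k).im = 2 * r^(2*k+1) * Real.sin ((2*k+1)*u) := by
    intro k
    have e1 : 2*z*(z^2)^k = ((2 * r^(2*k+1) : ℝ) : ℂ) * Complex.exp ((((2*k+1)*u : ℝ) : ℂ) * Complex.I) := by
      rw [← pow_mul, hz, mul_pow, ← Complex.exp_nat_mul,
        show (((2*k : ℕ)) : ℂ) * ((u:ℂ)*Complex.I) = (((2*k*u : ℝ)) : ℂ) * Complex.I by push_cast; ring,
        show ((((2*(k:ℝ)+1))*u : ℝ) : ℂ) * Complex.I = (u:ℂ)*Complex.I + (((2*k*u:ℝ)):ℂ)*Complex.I by push_cast; ring,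
        Complex.exp_add]
      push_cast; ring
    rw [e1]
    simp only [Complex.mul_im, Complex.ofReal_re, Complex.ofReal_im,
      Complex.exp_ofReal_mul_I_im, Complex.exp_ofReal_mul_I_re]
    push_cast; ring
  have pyth := Real.sin_sq_add_cos_sq u
  have hr2 : r^2 < 1 := by nlinarith
  have hd : (0:ℝ) < (1-r^2)^2 + 4*r^2*(Real.sin u)^2 := by
    have h0 : (0:ℝ) < 1 - r^2 := by nlinarith
    nlinarith [sq_nonneg (r*Real.sin u), sq_nonneg (1-r^2)]
  have hval : (2*z*(1-z^2)⁻¹).im = 2*r*(1+r^2)*Real.sin u / ((1-r^2)^2 + 4*r^2*(Real.sin u)^2) := by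
    have hzre : z.re = r * Real.cos u := by
      simp [hz, Complex.exp_ofReal_mul_I_re]
    have hzim : z.im = r * Real.sin u := by
      simp [hz, Complex.exp_ofReal_mul_I_im]
    rw [mul_comm (2*z), ← div_eq_inv_mul, Complex.div_im]
    have hre2 : (z^2).re = r^2 * ((Real.cos u)^2 - (Real.sin u)^2) := by
      rw [pow_two, Complex.mul_re, hzre, hzim]; ring
    have him2 : (z^2).im = r^2 * (2 * Real.sin u * Real.cos u) := by
      rw [pow_two, Complex.mul_im, hzre, hzim]; ring
    have hnsq : Complex.normSq (1 - z^2) = (1-r^2)^2 + 4*r^2*(Real.sin u)^2 := by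
      rw [Complex.normSq_apply]
      simp only [Complex.sub_re, Complex.sub_im, Complex.one_re, Complex.one_im, hre2, him2]
      linear_combination (-2*r^2 + r^4*(Real.cos u^2 + Real.sin u^2 + 1)) * pyth
    rw [hnsq]
    simp only [Complex.mul_im, Complex.mul_re, Complex.sub_re, Complex.sub_im, Complex.one_re,
      Complex.one_im, Complex.re_ofNat, Complex.im_ofNat, hre2, him2, hzre, hzim]
    rw [div_sub_div_same, div_eq_div_iff hd.ne' hd.ne']
    ring_nf
    linear_combination (2*r^3*Real.sin u*((1-r^2)^2 + 4*r^2*(Real.sin u)^2)) * pyth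
  rw [← hval]
  exact him.congr_fun fun k => (hterm k).symm

noncomputable def gk (r : ℝ) (u : ℝ) : ℝ :=
  2*r*(1+r^2)*Real.sin u / ((1-r^2)^2 + 4*r^2*(Real.sin u)^2)

lemma gk_cont (r : ℝ) (hr0 : 0 < r) (hr1 : r < 1) : Continuous (gk r) := by
  apply Continuous.div
  · continuity
  · continuity
  · intro u
    have h0 : (0:ℝ) < 1 - r^2 := by nlinarith
    nlinarith [sq_nonneg (r*Real.sin u), sq_nonneg (Real.sin u)]

lemma abel_eval (r : ℝ) (hr0 : 0 < r) (hr1 : r < 1) :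
    ∫ u in Ioo (0:ℝ) π, u*(π-u) * gk r u
      = 8 * ∑' k : ℕ, r^(2*k+1)/(2*k+1:ℝ)^3 := by
  have hsum2 : Summable (fun k : ℕ => 2*π^3 * r^(2*k+1)) := by
    apply Summable.mul_left
    have : Summable (fun k : ℕ => r * (r^2)^k) := by
      apply Summable.mul_left
      exact summable_geometric_of_lt_one (by positivity) (by nlinarith)
    exact this.congr (fun k => by rw [← pow_mul]; ring)
  set F : ℕ → ℝ → ℝ := fun k u => u*(π-u) * (2*r^(2*k+1)*Real.sin ((2*k+1)*u)) with hF
  have hFc : ∀ k, Continuous (F k) := by intro k; fun_prop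
  have hF_int : ∀ k, IntegrableOn (F k) (Ioo 0 π) := fun k =>
    ((hFc k).continuousOn.integrableOn_compact isCompact_Icc).mono_set Ioo_subset_Icc_self
  have hF_bd : ∀ k, ∀ u ∈ Ioo (0:ℝ) π, ‖F k u‖ ≤ 2*π^2 * r^(2*k+1) := by
    intro k u hu
    obtain ⟨h0, hπ⟩ := hu
    have hrp : (0:ℝ) < r^(2*k+1) := by positivity
    rw [hF, Real.norm_eq_abs, abs_mul]
    have h1 : |u*(π-u)| ≤ π^2 := by
      rw [abs_mul, abs_of_pos h0, abs_of_pos (by linarith)]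
      nlinarith [Real.pi_pos]
    have h3 : |2*r^(2*k+1)*Real.sin ((2*k+1)*u)| ≤ 2*r^(2*k+1) := by
      rw [abs_mul, abs_of_pos (by positivity : (0:ℝ) < 2*r^(2*k+1))]
      nth_rewrite 2 [show (2*r^(2*k+1) : ℝ) = 2*r^(2*k+1)*1 from by ring]
      exact mul_le_mul_of_nonneg_left (Real.abs_sin_le_one _) (by positivity)
    calc |u*(π-u)| * |2*r^(2*k+1)*Real.sin ((2*k+1)*u)|
        ≤ π^2 * (2*r^(2*k+1)) := mul_le_mul h1 h3 (abs_nonneg _) (by positivity)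
      _ = 2*π^2 * r^(2*k+1) := by ring
  have hF_sum : Summable (fun k : ℕ => ∫ u in Ioo (0:ℝ) π, ‖F k u‖) := by
    apply Summable.of_nonneg_of_le
      (fun k => integral_nonneg (fun u => norm_nonneg _)) (fun k => ?_) hsum2
    calc (∫ u in Ioo (0:ℝ) π, ‖F k u‖)
        ≤ ∫ _u in Ioo (0:ℝ) π, 2*π^2 * r^(2*k+1) := by
          apply setIntegral_mono_on (hF_int k).norm
            (integrableOn_const measure_Ioo_lt_top.ne)
            measurableSet_Ioo (hF_bd k)
      _ = 2*π^3 * r^(2*k+1) := by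
          rw [setIntegral_const, Real.volume_real_Ioo_of_le Real.pi_pos.le, sub_zero, smul_eq_mul]
          ring
  have hswap := integral_tsum_of_summable_integral_norm (μ := volume.restrict (Ioo 0 π))
    (F := F) (fun k => hF_int k) hF_sum
  have hptwise : ∀ u : ℝ, (∑' k, F k u) = u*(π-u) * gk r u := by
    intro u
    exact ((kernel_hasSum r u hr0 hr1).mul_left (u*(π-u))).tsum_eq.trans (by rw [gk])
  have hFval : ∀ k : ℕ, (∫ u in Ioo (0:ℝ) π, F k u) = 8 * (r^(2*k+1)/(2*k+1:ℝ)^3) := by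
    intro k
    rw [← integral_Ioc_eq_integral_Ioo, ← intervalIntegral.integral_of_le Real.pi_pos.le]
    have : ∀ u : ℝ, F k u = (2*r^(2*k+1)) * (u*(π-u)*Real.sin ((2*k+1)*u)) := by
      intro u; rw [hF]; ring
    simp_rw [this]
    rw [intervalIntegral.integral_const_mul, intW' k]
    ring
  calc (∫ u in Ioo (0:ℝ) π, u*(π-u) * gk r u)
      = ∫ u in Ioo (0:ℝ) π, (∑' k, F k u) := by
        apply setIntegral_congr_fun measurableSet_Ioo
        intro u _; exact (hptwise u).symm
    _ = ∑' k, ∫ u in Ioo (0:ℝ) π, F k u := hswap.symm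
    _ = ∑' k : ℕ, 8 * (r^(2*k+1)/(2*k+1:ℝ)^3) := tsum_congr hFval
    _ = 8 * ∑' k : ℕ, r^(2*k+1)/(2*k+1:ℝ)^3 := tsum_mul_left

lemma jordan {u : ℝ} (h0 : 0 < u) (hπ : u < π) : u*(π-u) ≤ π^2/2 * Real.sin u := by
  rcases le_or_gt u (π/2) with hu | hu
  · have hs := Real.mul_le_sin h0.le hu
    have key : π^2/2*(2/π*u) = π*u := by
      field_simp
    nlinarith [Real.pi_pos, mul_le_mul_of_nonneg_left hs (by positivity : (0:ℝ) ≤ π^2/2)]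
  · have h1 : (0:ℝ) < π - u := by linarith
    have h2 : π - u ≤ π/2 := by linarith
    have hs := Real.mul_le_sin h1.le h2
    rw [← Real.sin_pi_sub]
    have key : π^2/2*(2/π*(π-u)) = π*(π-u) := by
      field_simp
    nlinarith [Real.pi_pos, mul_le_mul_of_nonneg_left hs (by positivity : (0:ℝ) ≤ π^2/2)]

lemma sin_pos_of_Ioo {u : ℝ} (hu : u ∈ Ioo (0:ℝ) π) : 0 < Real.sin u :=
  Real.sin_pos_of_pos_of_lt_pi hu.1 hu.2

lemma gk_bound {r u : ℝ} (hr0 : 1/2 ≤ r) (hr1 : r < 1) (hu : u ∈ Ioo (0:ℝ) π) :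
    ‖u*(π-u) * gk r u‖ ≤ 5/4 * (π^2/2) := by
  obtain ⟨h0, hπ⟩ := hu
  have hs : 0 < Real.sin u := Real.sin_pos_of_pos_of_lt_pi h0 hπ
  have hrpos : (0:ℝ) < r := by linarith
  have hD : 4*r^2*(Real.sin u)^2 ≤ (1-r^2)^2 + 4*r^2*(Real.sin u)^2 := by nlinarith
  have hDpos : (0:ℝ) < 4*r^2*(Real.sin u)^2 := by positivity
  have hgk0 : 0 ≤ gk r u := by
    rw [gk]; positivity
  have hgk : gk r u ≤ 5/4 / Real.sin u := by
    rw [gk, div_le_div_iff₀ (by linarith) hs]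
    have key : 2*r*(1+r^2)*Real.sin u * Real.sin u ≤ (5/4) * (4*r^2*(Real.sin u)^2) := by
      have : 2*(1+r^2) ≤ 5*r := by nlinarith
      nlinarith [sq_nonneg (Real.sin u)]
    calc 2*r*(1+r^2)*Real.sin u * Real.sin u ≤ 5/4 * (4*r^2*(Real.sin u)^2) := key
      _ ≤ 5/4 * ((1-r^2)^2 + 4*r^2*(Real.sin u)^2) := by nlinarith
  rw [Real.norm_eq_abs, abs_of_nonneg (mul_nonneg (mul_nonneg h0.le (by linarith)) hgk0)]
  have hj := jordan h0 hπ
  calc u*(π-u) * gk r u ≤ u*(π-u) * (5/4 / Real.sin u) := mul_le_mul_of_nonneg_left hgk (mul_nonneg h0.le (by linarith))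
    _ = 5/4 * (u*(π-u) / Real.sin u) := by ring
    _ ≤ 5/4 * (π^2/2) := by
        apply mul_le_mul_of_nonneg_left _ (by norm_num)
        rw [div_le_iff₀ hs]
        nlinarith

lemma int_eq_8S : ∫ u in Ioo (0:ℝ) π, u*(π-u)/Real.sin u = 8*S := by
  set r : ℕ → ℝ := fun n => 1 - 1/(n+2) with hrdef
  have hr1 : ∀ n, r n < 1 := by
    intro n
    have : (0:ℝ) < 1/(n+2) := by positivity
    simp only [hrdef]; linarith
  have hrhalf : ∀ n, 1/2 ≤ r n := by
    intro n
    have h2 : (2:ℝ) ≤ (n:ℝ)+2 := by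
      have := Nat.cast_nonneg (α := ℝ) n
      linarith
    have : 1/((n:ℝ)+2) ≤ 1/2 := by
      apply div_le_div_of_nonneg_left (by norm_num) (by norm_num) h2
    simp only [hrdef]; linarith
  have hr0 : ∀ n, 0 < r n := fun n => lt_of_lt_of_le (by norm_num) (hrhalf n)
  have hrlim : Tendsto r atTop (𝓝 1) := by
    have h2 : Tendsto (fun n:ℕ => ((n:ℝ)+2)) atTop atTop :=
      tendsto_atTop_add_const_right _ 2 tendsto_natCast_atTop_atTop
    have h3 := h2.inv_tendsto_atTop
    have h4 := tendsto_const_nhds (x := (1:ℝ)) (f := atTop (α := ℕ)) |>.sub h3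
    simpa [hrdef, one_div] using h4
  have hA : Tendsto (fun n => ∫ u in Ioo (0:ℝ) π, u*(π-u) * gk (r n) u) atTop
      (𝓝 (∫ u in Ioo (0:ℝ) π, u*(π-u)/Real.sin u)) := by
    apply tendsto_integral_of_dominated_convergence (bound := fun _ => 5/4*(π^2/2))
    · intro n
      exact (Continuous.aestronglyMeasurable (by
        have := gk_cont (r n) (hr0 n) (hr1 n)
        fun_prop))
    · exact (integrableOn_const measure_Ioo_lt_top.ne)
    · intro n
      rw [ae_restrict_iff' measurableSet_Ioo]
      exact Eventually.of_forall fun u hu => gk_bound (hrhalf n) (hr1 n) hu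
    · rw [ae_restrict_iff' measurableSet_Ioo]
      apply Eventually.of_forall
      intro u hu
      have hs : 0 < Real.sin u := sin_pos_of_Ioo hu
      have hc : ContinuousAt (fun x : ℝ => u*(π-u) * gk x u) 1 := by
        apply ContinuousAt.mul continuousAt_const
        apply ContinuousAt.div (by fun_prop) (by fun_prop)
        simp only [one_pow, sub_self]
        positivity
      have := hc.tendsto.comp hrlim
      simp only [Function.comp_def] at this
      convert this using 2
      simp only [gk, one_pow, sub_self]
      rw [eq_comm]
      field_simp
      ring
  have hB : Tendsto (fun n => (8:ℝ) * ∑' k : ℕ, (r n)^(2*k+1)/(2*k+1:ℝ)^3) atTop (𝓝 (8*S)) := by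
    rw [show (8:ℝ)*S = 8*S from rfl, S]
    apply Tendsto.const_mul
    apply tendsto_tsum_of_dominated_convergence (bound := fun k : ℕ => 1/(2*k+1:ℝ)^3) sumS
    · intro k
      have := (hrlim.pow (2*k+1)).div_const ((2*(k:ℝ)+1)^3)
      simpa using this
    · apply Eventually.of_forall
      intro n k
      rw [Real.norm_eq_abs, abs_div, abs_of_nonneg (pow_nonneg (hr0 n).le _),
        abs_of_pos (by positivity : (0:ℝ) < (2*(k:ℝ)+1)^3)]
      gcongr
      exact pow_le_one₀ (hr0 n).le (hr1 n).le
  have hA' : Tendsto (fun n => (8:ℝ) * ∑' k : ℕ, (r n)^(2*k+1)/(2*k+1:ℝ)^3) atTop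
      (𝓝 (∫ u in Ioo (0:ℝ) π, u*(π-u)/Real.sin u)) := by
    apply hA.congr
    intro n
    exact abel_eval (r n) (hr0 n) (hr1 n)
  exact tendsto_nhds_unique hA' hB

lemma sin_image : Real.sin '' Ioo 0 (π/2) = Ioo (0:ℝ) 1 := by
  ext x
  constructor
  · rintro ⟨θ, ⟨h0, h1⟩, rfl⟩
    constructor
    · exact Real.sin_pos_of_pos_of_lt_pi h0 (by linarith [Real.pi_pos])
    · calc Real.sin θ < Real.sin (π/2) := by
            apply Real.strictMonoOn_sin ⟨by linarith [Real.pi_pos], by linarith⟩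
              ⟨by linarith [Real.pi_pos], le_refl _⟩ h1
        _ = 1 := Real.sin_pi_div_two
  · rintro ⟨h0, h1⟩
    exact ⟨Real.arcsin x, ⟨Real.arcsin_pos.2 h0, Real.arcsin_lt_pi_div_two.2 h1⟩,
      Real.sin_arcsin (by linarith) (by linarith)⟩

lemma double_image : (fun θ : ℝ => 2*θ) '' Ioo 0 (π/2) = Ioo (0:ℝ) π := by
  ext x
  constructor
  · rintro ⟨θ, ⟨h0, h1⟩, rfl⟩
    exact ⟨by dsimp; linarith, by dsimp; linarith⟩
  · rintro ⟨h0, h1⟩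
    exact ⟨x/2, ⟨by linarith, by linarith⟩, by dsimp; ring⟩

lemma refl_image : (fun θ : ℝ => π/2 - θ) '' Ioo 0 (π/2) = Ioo (0:ℝ) (π/2) := by
  ext x
  constructor
  · rintro ⟨θ, ⟨h0, h1⟩, rfl⟩
    exact ⟨by dsimp; linarith, by dsimp; linarith⟩
  · rintro ⟨h0, h1⟩
    exact ⟨π/2 - x, ⟨by linarith, by linarith⟩, by dsimp; ring⟩

lemma step6a :
    ∫ x in Ioo (0:ℝ) 1, Real.arcsin x * Real.arccos x / x
      = ∫ θ in Ioo (0:ℝ) (π/2), θ*(π/2-θ)*Real.cos θ/Real.sin θ := by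
  rw [← sin_image]
  rw [integral_image_eq_integral_abs_deriv_smul measurableSet_Ioo
    (fun θ _ => (Real.hasDerivAt_sin θ).hasDerivWithinAt)
    (Real.injOn_sin.mono (by
      intro θ hθ
      simp only [mem_Ioo] at hθ
      exact mem_Icc.2 ⟨by linarith [hθ.1, Real.pi_pos], by linarith [hθ.2]⟩))]
  apply setIntegral_congr_fun measurableSet_Ioo
  intro θ hθ
  obtain ⟨h0, h1⟩ := hθ
  have hcos : 0 < Real.cos θ := Real.cos_pos_of_mem_Ioo ⟨by linarith [Real.pi_pos], h1⟩
  have hsin : 0 < Real.sin θ := Real.sin_pos_of_pos_of_lt_pi h0 (by linarith [Real.pi_pos])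
  have ha : Real.arcsin (Real.sin θ) = θ :=
    Real.arcsin_sin (by linarith [Real.pi_pos]) (by linarith)
  have hb : Real.arccos (Real.sin θ) = π/2 - θ := by
    rw [Real.arccos, ha]
  simp only [smul_eq_mul]
  rw [ha, hb, abs_of_pos hcos]
  ring

lemma step6b :
    ∫ θ in Ioo (0:ℝ) (π/2), θ*(π/2-θ)*Real.sin θ/Real.cos θ
      = ∫ θ in Ioo (0:ℝ) (π/2), θ*(π/2-θ)*Real.cos θ/Real.sin θ := by
  conv_lhs => rw [← refl_image]
  rw [integral_image_eq_integral_abs_deriv_smul (f' := fun _ => (-1:ℝ)) measurableSet_Ioo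
    (fun θ _ => by
      simpa using ((hasDerivAt_id θ).const_sub (π/2)).hasDerivWithinAt)
    (fun a _ b _ h => by
      have h' : π/2 - a = π/2 - b := h
      linarith)]
  apply setIntegral_congr_fun measurableSet_Ioo
  intro θ hθ
  obtain ⟨h0, h1⟩ := hθ
  simp only [smul_eq_mul]
  rw [Real.sin_pi_div_two_sub, Real.cos_pi_div_two_sub]
  norm_num
  ring

lemma integrable_cot : IntegrableOn (fun θ : ℝ => θ*(π/2-θ)*Real.cos θ/Real.sin θ) (Ioo 0 (π/2)) := by
  apply Integrable.mono' (g := fun _ => π^2/4)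
    (integrableOn_const measure_Ioo_lt_top.ne)
  · apply Measurable.aestronglyMeasurable
    fun_prop
  · rw [ae_restrict_iff' measurableSet_Ioo]
    apply Eventually.of_forall
    intro θ hθ
    obtain ⟨h0, h1⟩ := hθ
    have hπ := Real.pi_pos
    have hs : 0 < Real.sin θ := Real.sin_pos_of_pos_of_lt_pi h0 (by linarith)
    have hc : Real.cos θ ≤ 1 := Real.cos_le_one θ
    have hc0 : 0 < Real.cos θ := Real.cos_pos_of_mem_Ioo ⟨by linarith, h1⟩
    have hj := Real.mul_le_sin h0.le h1.le
    have key : θ ≤ π/2 * Real.sin θ := by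
      have := mul_le_mul_of_nonneg_left hj (by positivity : (0:ℝ) ≤ π/2)
      calc θ = π/2 * (2/π*θ) := by field_simp
        _ ≤ π/2 * Real.sin θ := this
    rw [Real.norm_eq_abs, abs_of_nonneg
      (div_nonneg (mul_nonneg (mul_nonneg h0.le (by linarith)) hc0.le) hs.le)]
    rw [div_le_iff₀ hs]
    calc θ*(π/2-θ)*Real.cos θ ≤ θ*(π/2-θ)*1 :=
          mul_le_mul_of_nonneg_left hc (mul_nonneg h0.le (by linarith))
      _ = θ*(π/2-θ) := by ring
      _ ≤ (π/2 * Real.sin θ)*(π/2) := by nlinarith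
      _ = π^2/4 * Real.sin θ := by ring

lemma integrable_tan : IntegrableOn (fun θ : ℝ => θ*(π/2-θ)*Real.sin θ/Real.cos θ) (Ioo 0 (π/2)) := by
  apply Integrable.mono' (g := fun _ => π^2/4)
    (integrableOn_const measure_Ioo_lt_top.ne)
  · apply Measurable.aestronglyMeasurable
    fun_prop
  · rw [ae_restrict_iff' measurableSet_Ioo]
    apply Eventually.of_forall
    intro θ hθ
    obtain ⟨h0, h1⟩ := hθ
    have hπ := Real.pi_pos
    have hs : Real.sin θ ≤ 1 := Real.sin_le_one θ
    have hs0 : 0 < Real.sin θ := Real.sin_pos_of_pos_of_lt_pi h0 (by linarith)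
    have hc0 : 0 < Real.cos θ := Real.cos_pos_of_mem_Ioo ⟨by linarith, h1⟩
    have hj : 2/π*(π/2-θ) ≤ Real.sin (π/2-θ) := Real.mul_le_sin (by linarith) (by linarith)
    rw [Real.sin_pi_div_two_sub] at hj
    have key : π/2-θ ≤ π/2 * Real.cos θ := by
      have := mul_le_mul_of_nonneg_left hj (by positivity : (0:ℝ) ≤ π/2)
      calc π/2-θ = π/2 * (2/π*(π/2-θ)) := by field_simp
        _ ≤ π/2 * Real.cos θ := this
    rw [Real.norm_eq_abs, abs_of_nonneg
      (div_nonneg (mul_nonneg (mul_nonneg h0.le (by linarith)) hs0.le) hc0.le)]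
    rw [div_le_iff₀ hc0]
    calc θ*(π/2-θ)*Real.sin θ ≤ θ*(π/2-θ)*1 :=
          mul_le_mul_of_nonneg_left hs (mul_nonneg h0.le (by linarith))
      _ = θ*(π/2-θ) := by ring
      _ ≤ (π/2)*(π/2 * Real.cos θ) := by nlinarith
      _ = π^2/4 * Real.cos θ := by ring

lemma step6c :
    ∫ u in Ioo (0:ℝ) π, u*(π-u)/Real.sin u
      = 8 * ∫ θ in Ioo (0:ℝ) (π/2), θ*(π/2-θ)*Real.cos θ/Real.sin θ := by
  rw [← double_image]
  rw [integral_image_eq_integral_abs_deriv_smul (f' := fun _ => (2:ℝ)) measurableSet_Ioo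
    (fun θ _ => by simpa using ((hasDerivAt_id θ).const_mul (2:ℝ)).hasDerivWithinAt)
    (fun a _ b _ h => by
      have h' : 2*a = 2*b := h
      linarith)]
  have hsplit : ∀ θ ∈ Ioo (0:ℝ) (π/2),
      |(2:ℝ)| • ((2*θ)*(π-2*θ)/Real.sin (2*θ))
        = 4*(θ*(π/2-θ)*Real.cos θ/Real.sin θ) + 4*(θ*(π/2-θ)*Real.sin θ/Real.cos θ) := by
    intro θ hθ
    obtain ⟨h0, h1⟩ := hθ
    have hπ := Real.pi_pos
    have hs : 0 < Real.sin θ := Real.sin_pos_of_pos_of_lt_pi h0 (by linarith)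
    have hc : 0 < Real.cos θ := Real.cos_pos_of_mem_Ioo ⟨by linarith, h1⟩
    have pyth := Real.sin_sq_add_cos_sq θ
    rw [Real.sin_two_mul, smul_eq_mul, abs_of_pos (by norm_num : (0:ℝ) < 2)]
    field_simp
    linear_combination (8*θ - 4*π) * pyth
  rw [setIntegral_congr_fun measurableSet_Ioo hsplit]
  rw [integral_add (integrable_cot.const_mul 4) (integrable_tan.const_mul 4)]
  rw [MeasureTheory.integral_const_mul, MeasureTheory.integral_const_mul, step6b]
  ring

theorem stmt_2 :
    ((∫ x in (0:ℝ)..1, Real.arcsin x * Real.arccos x / x : ℝ) : ℂ)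
      = 7 / 8 * riemannZeta 3 := by
  have hI : (∫ x in (0:ℝ)..1, Real.arcsin x * Real.arccos x / x) = S := by
    rw [intervalIntegral.integral_of_le zero_le_one, integral_Ioc_eq_integral_Ioo, step6a]
    have h1 : (8:ℝ) * (∫ θ in Ioo (0:ℝ) (π/2), θ*(π/2-θ)*Real.cos θ/Real.sin θ) = 8*S := by
      rw [← step6c, int_eq_8S]
    linarith
  rw [hI, zeta3, S_eq]
  push_cast
  ring
end

section
/- The integral from 0 to 1 of (arcsin(x))²·arccos(x)/(2x) dx equals (π/16)·ζ(3). -/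
open Real MeasureTheory intervalIntegral Filter Set
open scoped FourierTransform

noncomputable def Faux (t : ℝ) : ℝ := t^2 * (π/2 - t) / 2
noncomputable def Gaux (t : ℝ) : ℝ := t^2 * (π/2 - t) * Real.cos t / (2 * Real.sin t)
noncomputable def S3 : ℝ := ∑' n : ℕ, 1/((n:ℝ)+1)^3

lemma trig_key (t : ℝ) (N : ℕ) :
    Real.cos t = 2 * Real.sin t * (∑ k ∈ Finset.range N, Real.sin (2*(k+1)*t))
      - Real.sin t * Real.sin (2*N*t) + Real.cos t * Real.cos (2*N*t) := by
  induction N with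
  | zero => simp
  | succ n ih =>
    rw [Finset.sum_range_succ]
    push_cast
    have e1 : 2*((n:ℝ)+1)*t = 2*n*t + 2*t := by ring
    rw [e1, Real.sin_add, Real.cos_add, Real.sin_two_mul, Real.cos_two_mul]
    push_cast at ih
    linear_combination ih - 2*Real.cos t*Real.cos (2*n*t)*(Real.sin_sq_add_cos_sq t)

lemma Gaux_eq (N : ℕ) {t : ℝ} (ht : t ∈ Set.uIcc (0:ℝ) (π/2)) :
    Gaux t = (∑ k ∈ Finset.range N, 2 * Faux t * Real.sin (2*(k+1)*t))
      - Faux t * Real.sin (2*N*t) + Gaux t * Real.cos (2*N*t) := by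
  rw [Set.uIcc_of_le (by positivity) ] at ht
  by_cases hs : Real.sin t = 0
  · have ht0 : t = 0 := by
      rcases ht with ⟨h1, h2⟩
      have := Real.sin_eq_zero_iff_of_lt_of_lt (x := t) (by nlinarith [pi_pos]) (by nlinarith [pi_pos])
      exact this.mp hs
    subst ht0; simp [Gaux, Faux]
  · have h := trig_key t N
    have hG : Gaux t = Faux t * Real.cos t / Real.sin t := by rw [Gaux, Faux]; ring
    simp only [show ∀ k:ℕ, 2 * Faux t * Real.sin (2*(k+1)*t) = (2 * Faux t) * Real.sin (2*(k+1)*t) from fun _ => rfl, ← Finset.mul_sum]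
    rw [hG]
    field_simp
    rw [show (2:ℝ)*t*N = 2*N*t by ring]
    linear_combination (Faux t) * h

lemma contG : ContinuousOn Gaux (Set.Icc 0 (π/2)) := by
  intro t ht
  rcases eq_or_ne t 0 with rfl | ht0
  · -- continuity at 0
    apply ContinuousAt.continuousWithinAt
    have key : ∀ s : ℝ, Gaux s = (Real.sin s / s)⁻¹ * (s * (π/2 - s) * Real.cos s / 2) := by
      intro s
      rcases eq_or_ne s 0 with rfl | hs0
      · simp [Gaux]
      rcases eq_or_ne (Real.sin s) 0 with hss | hss
      · simp [Gaux, hss, hs0]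
      · rw [Gaux]; field_simp
    have h1 : Tendsto (fun s : ℝ => Real.sin s / s) (nhdsWithin 0 {0}ᶜ) (nhds 1) := by
      have := (Real.hasDerivAt_sin 0)
      rw [hasDerivAt_iff_tendsto_slope] at this
      simp only [Real.cos_zero] at this
      refine this.congr (fun s => ?_)
      simp [slope_def_field]
    have h2 : Tendsto (fun s : ℝ => (Real.sin s / s)⁻¹ * (s * (π/2 - s) * Real.cos s / 2))
        (nhdsWithin 0 {0}ᶜ) (nhds 0) := by
      have hc : Tendsto (fun s : ℝ => s * (π/2 - s) * Real.cos s / 2) (nhdsWithin 0 {0}ᶜ) (nhds 0) := by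
        apply Filter.Tendsto.mono_left ?_ nhdsWithin_le_nhds
        have : Continuous (fun s : ℝ => s * (π/2 - s) * Real.cos s / 2) := by continuity
        simpa using this.tendsto 0
      simpa using (h1.inv₀ one_ne_zero).mul hc
    unfold ContinuousAt
    rw [show Gaux 0 = 0 by simp [Gaux]]
    have hsup : (nhds (0:ℝ)) = nhdsWithin 0 {0}ᶜ ⊔ pure 0 :=
      (nhdsNE_sup_pure 0).symm
    nth_rewrite 1 [hsup]
    rw [Filter.tendsto_sup]
    constructor
    · exact Filter.Tendsto.congr (fun s => (key s).symm) h2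
    · simpa [Gaux] using tendsto_pure_nhds Gaux 0
  · apply ContinuousAt.continuousWithinAt
    have hs : Real.sin t ≠ 0 := by
      have h1 : 0 < t := lt_of_le_of_ne ht.1 (Ne.symm ht0)
      have : 0 < Real.sin t := Real.sin_pos_of_pos_of_lt_pi h1 (by nlinarith [pi_pos, ht.2])
      positivity
    unfold Gaux
    exact ContinuousAt.div (by fun_prop) (by fun_prop) (by simpa using hs)

noncomputable def Phi (k : ℕ) (t : ℝ) : ℝ :=
  -(Faux t) * Real.cos (2*k*t)/(2*k) + (π/2*t - 3/2*t^2) * Real.sin (2*k*t)/(2*k)^2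
    + (π/2 - 3*t)*Real.cos (2*k*t)/(2*k)^3 + 3*Real.sin (2*k*t)/(2*k)^4

lemma contFaux : Continuous Faux := by unfold Faux; continuity

lemma hasDerivAt_Phi (k : ℕ) (hk : k ≠ 0) (t : ℝ) :
    HasDerivAt (Phi k) (Faux t * Real.sin (2*k*t)) t := by
  have hc : (2*(k:ℝ)) ≠ 0 := by positivity
  have hid : HasDerivAt (fun x : ℝ => 2*(k:ℝ)*x) (2*(k:ℝ)) t := by
    simpa using (hasDerivAt_id t).const_mul (2*(k:ℝ))
  have hcos : HasDerivAt (fun x : ℝ => Real.cos (2*k*x)) (-Real.sin (2*k*t)*(2*k)) t := hid.cos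
  have hsin : HasDerivAt (fun x : ℝ => Real.sin (2*k*x)) (Real.cos (2*k*t)*(2*k)) t := hid.sin
  have hP : HasDerivAt Faux (π/2*t - 3/2*t^2) t := by
    have h := ((hasDerivAt_pow 2 t).mul ((hasDerivAt_const t (π/2)).sub (hasDerivAt_id t))).div_const 2
    unfold Faux
    exact h.congr_deriv (by simp; ring)
  have hP1 : HasDerivAt (fun t : ℝ => π/2*t - 3/2*t^2) (π/2 - 3*t) t := by
    have h := (((hasDerivAt_id t).const_mul (π/2)).sub ((hasDerivAt_pow 2 t).const_mul (3/2)))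
    exact h.congr_deriv (by simp; ring)
  have hP2 : HasDerivAt (fun t : ℝ => π/2 - 3*t) (-3 : ℝ) t := by
    have h := (hasDerivAt_const t (π/2)).sub ((hasDerivAt_id t).const_mul 3)
    exact h.congr_deriv (by simp)
  have h := ((((hP.neg.mul hcos).div_const (2*k)).add ((hP1.mul hsin).div_const ((2*k)^2))).add
      ((hP2.mul hcos).div_const ((2*k)^3))).add ((hsin.const_mul 3).div_const ((2*k)^4))
  refine h.congr_deriv ?_
  rw [Pi.neg_apply]
  unfold Faux
  field_simp
  ring

lemma A_eq (k : ℕ) (hk : k ≠ 0) :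
    ∫ t in (0:ℝ)..(π/2), Faux t * Real.sin (2*k*t) = -(π/8) * ((-1:ℝ)^k + 1/2) / k^3 := by
  rw [intervalIntegral.integral_eq_sub_of_hasDerivAt (fun t _ => hasDerivAt_Phi k hk t)
    (((contFaux.mul (by continuity)).intervalIntegrable _ _))]
  have hk' : (k:ℝ) ≠ 0 := Nat.cast_ne_zero.mpr hk
  have e1 : 2*(k:ℝ)*(π/2) = k*π := by ring
  have e2 : 2*(k:ℝ)*0 = 0 := by ring
  have hcos : Real.cos ((k:ℝ)*π) = (-1)^k := by
    simpa using Real.cos_nat_mul_pi_sub 0 k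
  unfold Phi Faux
  rw [e1, e2, Real.sin_nat_mul_pi, hcos]
  simp only [Real.cos_zero, Real.sin_zero]
  field_simp
  ring

lemma hf3 : HasSum (fun n : ℕ => 1/((n:ℝ)+1)^3) S3 := by
  have h : Summable (fun n : ℕ => 1/((n:ℝ)+1)^3) := by
    have h2 := (Real.summable_one_div_nat_pow (p := 3)).mpr (by norm_num)
    have h3 := (summable_nat_add_iff (f := fun n : ℕ => 1/(n:ℝ)^3) 1).mpr h2
    refine h3.congr fun n => ?_
    push_cast
    ring
  exact h.hasSum

lemma alt_hasSum : HasSum (fun n : ℕ => (-1:ℝ)^(n+1)/((n:ℝ)+1)^3) (-(3/4) * S3) := by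
  set f : ℕ → ℝ := fun n => 1/((n:ℝ)+1)^3 with hf
  set e : ℕ → ℝ := fun n => (-1:ℝ)^(n+1) * f n + f n with he
  have hinj : Function.Injective (fun m : ℕ => 2*m+1) := fun a b h => by
    simp only at h; omega
  have hzero : ∀ n ∉ Set.range (fun m : ℕ => 2*m+1), e n = 0 := by
    intro n hn
    have hev : Even n := by
      rcases Nat.even_or_odd n with h | h
      · exact h
      · obtain ⟨m, hm⟩ := h
        exact absurd ⟨m, by simp [hm]⟩ hn
    obtain ⟨m, rfl⟩ := hev
    simp only [he, hf]
    rw [show m + m + 1 = 2*m+1 by ring, pow_succ, pow_mul]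
    norm_num
  have hcomp : HasSum ((fun n => e n) ∘ (fun m : ℕ => 2*m+1)) ((1/4) * S3) := by
    have h8 : HasSum (fun m : ℕ => (1/4) * f m) ((1/4) * S3) := hf3.mul_left _
    refine HasSum.congr_fun h8 fun m => ?_
    simp only [he, hf, Function.comp]
    rw [show 2*m+1+1 = 2*(m+1) by ring, pow_mul]
    push_cast
    have h9 : ((m:ℝ)+1) ≠ 0 := by positivity
    field_simp
    ring
  have heSum : HasSum e ((1/4)*S3) :=
    (Function.Injective.hasSum_iff hinj hzero).mp hcomp
  have := heSum.sub hf3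
  have h2 : HasSum (fun n => e n - f n) ((1/4)*S3 - S3) := this
  have h3 : (fun n => e n - f n) = fun n : ℕ => (-1:ℝ)^(n+1)/((n:ℝ)+1)^3 := by
    funext n
    simp only [he, hf]
    ring
  rw [h3] at h2
  convert h2 using 1
  ring

lemma Cseq_tendsto :
    Tendsto (fun N : ℕ => ∫ t in (0:ℝ)..(π/2), Gaux t * Real.cos (2*N*t)) atTop (nhds 0) := by
  set h : ℝ → ℂ := Set.indicator (Set.Ioc 0 (π/2)) (fun t => (Gaux t : ℂ)) with hh
  have hRL := Real.tendsto_integral_exp_smul_cocompact h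
  have hw : Tendsto (fun N : ℕ => -(N:ℝ)/π) atTop (Filter.cocompact ℝ) := by
    rw [cocompact_eq_atBot_atTop]
    refine Tendsto.mono_right ?_ le_sup_left
    have h1 : Tendsto (fun N : ℕ => (N:ℝ)/π) atTop atTop :=
      (tendsto_natCast_atTop_atTop).atTop_div_const pi_pos
    refine Tendsto.congr (fun n => ?_) (tendsto_neg_atTop_atBot.comp h1)
    show -((n:ℝ)/π) = -(n:ℝ)/π
    ring
  have hcomp := hRL.comp hw
  have hint : ∀ N : ℕ, IntegrableOn (fun t : ℝ => Complex.exp (2*N*t*Complex.I) * (Gaux t : ℂ))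
      (Set.Ioc 0 (π/2)) := by
    intro N
    refine IntegrableOn.mono_set ?_ Set.Ioc_subset_Icc_self
    refine ContinuousOn.integrableOn_Icc ?_
    refine ContinuousOn.mul ?_ (Complex.continuous_ofReal.comp_continuousOn contG)
    fun_prop
  have key : ∀ N : ℕ, (∫ v : ℝ, 𝐞 (-(v * (-(N:ℝ)/π))) • h v)
      = ∫ t in Set.Ioc 0 (π/2), Complex.exp (2*N*t*Complex.I) * (Gaux t : ℂ) := by
    intro N
    rw [← MeasureTheory.integral_indicator measurableSet_Ioc]
    congr 1
    funext v
    by_cases hv : v ∈ Set.Ioc 0 (π/2)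
    · rw [hh]
      simp only [Set.indicator_of_mem hv]
      rw [Circle.smul_def, Real.fourierChar_apply]
      congr 1
      have hx : 2 * π * -(v * (-(N:ℝ)/π)) = 2*N*v := by field_simp
      rw [hx]
      push_cast
      ring
    · simp [hh, Set.indicator_of_notMem hv]
  have hre : ∀ N : ℕ, (∫ t in Set.Ioc 0 (π/2),
      Complex.exp (2*N*t*Complex.I) * (Gaux t : ℂ)).re
      = ∫ t in (0:ℝ)..(π/2), Gaux t * Real.cos (2*N*t) := by
    intro N
    rw [intervalIntegral.integral_of_le (by positivity)]
    have h2 := integral_re (hint N)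
    rw [RCLike.re_to_complex] at h2
    rw [← h2]
    congr 1
    funext t
    simp only [RCLike.re_to_complex, Complex.mul_re, Complex.ofReal_re, Complex.ofReal_im,
      mul_zero, sub_zero]
    rw [show ((2:ℂ)*N*t*Complex.I) = ((2*N*t : ℝ):ℂ)*Complex.I from by push_cast; ring,
      Complex.exp_ofReal_mul_I_re]
    push_cast
    ring
  have final := (Complex.continuous_re.tendsto 0).comp hcomp
  simp only [Function.comp, Complex.zero_re] at final
  refine final.congr fun N => ?_
  show (∫ v : ℝ, 𝐞 (-(v * (-(N:ℝ)/π))) • h v).re = ∫ t in (0:ℝ)..(π/2), Gaux t * Real.cos (2*N*t)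
  rw [key N, hre N]

lemma contf : ContinuousOn (fun x : ℝ => Real.arcsin x ^ 2 * Real.arccos x / (2*x)) (Set.Icc 0 1) := by
  intro x hx
  rcases eq_or_ne x 0 with rfl | hx0
  · apply ContinuousAt.continuousWithinAt
    have key : ∀ y : ℝ, Real.arcsin y ^ 2 * Real.arccos y / (2*y)
        = (Real.arcsin y / y) * (Real.arcsin y * Real.arccos y / 2) := by
      intro y
      rcases eq_or_ne y 0 with rfl | hy0
      · simp
      · field_simp
    have h1 : Tendsto (fun y : ℝ => Real.arcsin y / y) (nhdsWithin 0 {0}ᶜ) (nhds 1) := by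
      have hd := Real.hasDerivAt_arcsin (by norm_num : (0:ℝ) ≠ -1) (by norm_num : (0:ℝ) ≠ 1)
      rw [hasDerivAt_iff_tendsto_slope] at hd
      norm_num at hd
      refine hd.congr (fun y => ?_)
      simp [slope_def_field]
    have h2 : Tendsto (fun y : ℝ => (Real.arcsin y / y) * (Real.arcsin y * Real.arccos y / 2))
        (nhdsWithin 0 {0}ᶜ) (nhds 0) := by
      have hc : Tendsto (fun y : ℝ => Real.arcsin y * Real.arccos y / 2)
          (nhdsWithin 0 {0}ᶜ) (nhds 0) := by
        refine Filter.Tendsto.mono_left ?_ nhdsWithin_le_nhds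
        have hcont : Continuous (fun y : ℝ => Real.arcsin y * Real.arccos y / 2) := by
          exact (Real.continuous_arcsin.mul Real.continuous_arccos).div_const 2
        have := hcont.tendsto 0
        simpa using this
      simpa using h1.mul hc
    unfold ContinuousAt
    rw [show ((fun x : ℝ => Real.arcsin x ^ 2 * Real.arccos x / (2*x)) 0) = 0 from by norm_num]
    have hsup : (nhds (0:ℝ)) = nhdsWithin 0 {0}ᶜ ⊔ pure 0 :=
      (nhdsNE_sup_pure 0).symm
    nth_rewrite 1 [hsup]
    rw [Filter.tendsto_sup]
    refine ⟨Filter.Tendsto.congr (fun y => (key y).symm) h2, ?_⟩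
    have := tendsto_pure_nhds (fun x : ℝ => Real.arcsin x ^ 2 * Real.arccos x / (2*x)) 0
    simpa using this
  · apply ContinuousAt.continuousWithinAt
    refine ContinuousAt.div
      (((Real.continuous_arcsin.pow 2).mul Real.continuous_arccos).continuousAt)
      ((continuous_const.mul continuous_id).continuousAt) ?_
    simpa using hx0
lemma subst_lemma :
    (∫ x in (0:ℝ)..1, Real.arcsin x ^ 2 * Real.arccos x / (2*x))
      = ∫ t in (0:ℝ)..(π/2), Gaux t := by
  have himg : Real.sin '' (Set.uIcc 0 (π/2)) ⊆ Set.Icc 0 1 := by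
    rintro y ⟨t, ht, rfl⟩
    rw [Set.uIcc_of_le (by positivity)] at ht
    exact ⟨Real.sin_nonneg_of_nonneg_of_le_pi ht.1 (by nlinarith [pi_pos, ht.2]),
      Real.sin_le_one t⟩
  have h1 := intervalIntegral.integral_comp_smul_deriv'
    (f := Real.sin) (f' := Real.cos) (a := 0) (b := π/2)
    (g := fun x : ℝ => Real.arcsin x ^ 2 * Real.arccos x / (2*x))
    (fun t _ => Real.hasDerivAt_sin t) Real.continuous_cos.continuousOn
    (contf.mono himg)
  rw [Real.sin_zero, Real.sin_pi_div_two] at h1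
  rw [← h1]
  apply intervalIntegral.integral_congr
  intro t ht
  have ht' := ht
  rw [Set.uIcc_of_le (by positivity)] at ht'
  have harc : Real.arcsin (Real.sin t) = t :=
    Real.arcsin_sin (by linarith [ht'.1, pi_pos]) ht'.2
  show Real.cos t • (Real.arcsin (Real.sin t) ^ 2 * Real.arccos (Real.sin t) / (2 * Real.sin t)) = Gaux t
  rw [Real.arccos_eq_pi_div_two_sub_arcsin, harc, smul_eq_mul]
  unfold Gaux
  ring

lemma zeta3_eq : riemannZeta 3 = (S3 : ℂ) := by
  have h1 : riemannZeta 3 = ∑' n : ℕ, 1 / (n:ℂ)^3 := by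
    have h := zeta_nat_eq_tsum_of_gt_one (k := 3) (by norm_num)
    exact_mod_cast h
  have hsummable : Summable (fun n : ℕ => 1/(n:ℂ)^3) := by
    apply Summable.of_norm
    have he : (fun n : ℕ => ‖1/(n:ℂ)^3‖) = fun n : ℕ => 1/(n:ℝ)^3 := by
      funext n
      simp
    rw [he]
    exact (Real.summable_one_div_nat_pow).mpr (by norm_num)
  rw [h1, hsummable.tsum_eq_zero_add]
  have hc : HasSum (fun n : ℕ => (1:ℂ)/((n:ℂ)+1)^3) ((S3:ℂ)) := by
    have hm := hf3.mapL Complex.ofRealCLM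
    refine HasSum.congr_fun hm fun n => ?_
    simp
  rw [← hc.tsum_eq]
  norm_num

lemma main_value : (∫ t in (0:ℝ)..(π/2), Gaux t) = π/16 * S3 := by
  have hpi2 : (0:ℝ) ≤ π/2 := by positivity
  have hGint : IntervalIntegrable Gaux volume 0 (π/2) := by
    apply ContinuousOn.intervalIntegrable
    rw [Set.uIcc_of_le hpi2]
    exact contG
  have hGcosint : ∀ N : ℕ, IntervalIntegrable (fun t => Gaux t * Real.cos (2*N*t)) volume 0 (π/2) := by
    intro N
    apply ContinuousOn.intervalIntegrable
    rw [Set.uIcc_of_le hpi2]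
    exact contG.mul (by fun_prop)
  have hFsinint : ∀ c : ℝ, IntervalIntegrable (fun t => Faux t * Real.sin (c*t)) volume 0 (π/2) :=
    fun c => (contFaux.mul (by continuity)).intervalIntegrable _ _
  have split : ∀ N : ℕ,
      (∫ t in (0:ℝ)..(π/2), Gaux t)
        = (∑ k ∈ Finset.range N, 2 * (∫ t in (0:ℝ)..(π/2), Faux t * Real.sin (2*(k+1)*t)))
          - (∫ t in (0:ℝ)..(π/2), Faux t * Real.sin (2*N*t))
          + (∫ t in (0:ℝ)..(π/2), Gaux t * Real.cos (2*N*t)) := by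
    intro N
    have h1 : (∫ t in (0:ℝ)..(π/2), Gaux t)
        = ∫ t in (0:ℝ)..(π/2), ((∑ k ∈ Finset.range N, 2 * Faux t * Real.sin (2*(k+1)*t))
            - Faux t * Real.sin (2*N*t) + Gaux t * Real.cos (2*N*t)) :=
      intervalIntegral.integral_congr (fun t ht => Gaux_eq N ht)
    rw [h1]
    have hsumint : IntervalIntegrable
        (fun t => ∑ k ∈ Finset.range N, 2 * Faux t * Real.sin (2*(k+1)*t)) volume 0 (π/2) := by
      apply Continuous.intervalIntegrable
      refine continuous_finset_sum _ (fun k _ => ?_)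
      exact (continuous_const.mul contFaux).mul (Real.continuous_sin.comp (by continuity))
    rw [intervalIntegral.integral_add (hsumint.sub (hFsinint (2*N))) (hGcosint N),
      intervalIntegral.integral_sub hsumint (hFsinint (2*N)),
      intervalIntegral.integral_finset_sum]
    · congr 1
      congr 1
      apply Finset.sum_congr rfl
      intro k _
      rw [show (fun t => 2 * Faux t * Real.sin (2*((k:ℝ)+1)*t)) = fun t => 2 * (Faux t * Real.sin (2*((k:ℝ)+1)*t)) from funext fun t => by ring]
      rw [intervalIntegral.integral_const_mul]
    · intro k _
      exact ((continuous_const.mul contFaux).mul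
        (Real.continuous_sin.comp (by continuity))).intervalIntegrable _ _
  have hAtend : Tendsto (fun N : ℕ => ∫ t in (0:ℝ)..(π/2), Faux t * Real.sin (2*N*t))
      atTop (nhds 0) := by
    refine squeeze_zero_norm (a := fun N : ℕ => π * (1/(N:ℝ))) (fun N => ?_) ?_
    · rcases Nat.eq_zero_or_pos N with rfl | hN
      · simp
      · rw [A_eq N (Nat.pos_iff_ne_zero.mp hN)]
        have hN1 : (1:ℝ) ≤ (N:ℝ) := by exact_mod_cast hN
        have hN0 : (0:ℝ) < (N:ℝ) := by linarith
        have hcube : (N:ℝ) ≤ (N:ℝ)^3 := by nlinarith [hN1, hN0, sq_nonneg ((N:ℝ)-1), sq_nonneg ((N:ℝ)+1)]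
        have habs : |(-1:ℝ)^N + 1/2| ≤ 3/2 := by
          rcases Nat.even_or_odd N with h | h
          · rw [h.neg_one_pow, abs_le]; norm_num
          · rw [h.neg_one_pow, abs_le]; norm_num
        rw [Real.norm_eq_abs, abs_div, abs_mul, abs_neg,
          abs_of_pos (by positivity : (0:ℝ) < π/8),
          abs_of_pos (by positivity : (0:ℝ) < (N:ℝ)^3)]
        beta_reduce
        rw [mul_one_div, div_le_div_iff₀ (by positivity) hN0]
        nlinarith [pi_pos, hcube, habs, hN0,
          mul_le_mul_of_nonneg_left habs (by positivity : (0:ℝ) ≤ π/8*N),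
          mul_le_mul_of_nonneg_left hcube (le_of_lt pi_pos),
          mul_nonneg (le_of_lt pi_pos) (le_of_lt hN0)]
    · simpa using tendsto_one_div_atTop_nhds_zero_nat.const_mul π
  have hsum2A : HasSum (fun n : ℕ =>
      2 * (∫ t in (0:ℝ)..(π/2), Faux t * Real.sin (2*((n:ℝ)+1)*t))) (π/16 * S3) := by
    have h := (alt_hasSum.mul_left (-(π/4))).add (hf3.mul_left (-(π/8)))
    have h2 : -(π/4) * (-(3/4) * S3) + -(π/8) * S3 = π/16 * S3 := by ring
    rw [h2] at h
    refine HasSum.congr_fun h fun n => ?_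
    have := A_eq (n+1) (Nat.succ_ne_zero n)
    push_cast at this
    rw [this]
    have hn0 : ((n:ℝ)+1) ≠ 0 := by positivity
    field_simp
    ring
  have hps := hsum2A.tendsto_sum_nat
  have hL : Tendsto (fun N : ℕ => (∑ k ∈ Finset.range N,
      2 * (∫ t in (0:ℝ)..(π/2), Faux t * Real.sin (2*((k:ℝ)+1)*t))))
      atTop (nhds ((∫ t in (0:ℝ)..(π/2), Gaux t))) := by
    have : ∀ N : ℕ, (∑ k ∈ Finset.range N,
        2 * (∫ t in (0:ℝ)..(π/2), Faux t * Real.sin (2*((k:ℝ)+1)*t)))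
        = (∫ t in (0:ℝ)..(π/2), Gaux t)
          + (∫ t in (0:ℝ)..(π/2), Faux t * Real.sin (2*N*t))
          - (∫ t in (0:ℝ)..(π/2), Gaux t * Real.cos (2*N*t)) := by
      intro N
      have := split N
      push_cast at this ⊢
      linarith [this]
    simp only [this]
    have := (tendsto_const_nhds (x := (∫ t in (0:ℝ)..(π/2), Gaux t)) (f := atTop (α := ℕ))).add hAtend |>.sub Cseq_tendsto
    simpa using this
  exact tendsto_nhds_unique hL hps


theorem stmt_3 :
    ((∫ x in (0:ℝ)..1, (Real.arcsin x) ^ 2 * Real.arccos x / (2 * x) : ℝ) : ℂ)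
      = (π : ℂ) / 16 * riemannZeta 3 := by
  rw [zeta3_eq]
  rw [show (∫ x in (0:ℝ)..1, (Real.arcsin x) ^ 2 * Real.arccos x / (2 * x) : ℝ) = π/16 * S3 from
    by rw [subst_lemma, main_value]]
  push_cast
  ring
end

section
/- The integral from 0 to 1 of arcsinh(x)/sqrt(1-x²) dx equals the Catalan constant G = ∑_{k≥0} (-1)^k/(2k+1)². -/
open Real MeasureTheory intervalIntegral Finset

-- remainder bound for arctan partial sums
lemma arctan_rem (n : ℕ) {y : ℝ} (hy : 0 ≤ y) :
    |arctan y - ∑ k ∈ Finset.range n, (-1:ℝ)^k * y^(2*k+1)/(2*k+1)| ≤ y^(2*n+1)/(2*n+1) := by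
  have h1 : arctan y = ∫ t in (0:ℝ)..y, 1/(1+t^2) := by
    rw [integral_one_div_one_add_sq, arctan_zero, sub_zero]
  have h2 : ∑ k ∈ Finset.range n, (-1:ℝ)^k * y^(2*k+1)/(2*k+1)
      = ∫ t in (0:ℝ)..y, ∑ k ∈ Finset.range n, (-1:ℝ)^k * t^(2*k) := by
    rw [intervalIntegral.integral_finset_sum]
    · refine Finset.sum_congr rfl fun k _ => ?_
      rw [intervalIntegral.integral_const_mul, integral_pow]
      push_cast
      ring
    · intro k _
      exact (continuous_const.mul (continuous_pow _)).intervalIntegrable _ _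
  have hcont : ∀ k : ℕ, Continuous fun t : ℝ => (-1:ℝ)^k * t^(2*k) :=
    fun k => continuous_const.mul (continuous_pow _)
  have hint1 : IntervalIntegrable (fun t : ℝ => 1/(1+t^2)) volume 0 y := by
    apply Continuous.intervalIntegrable
    exact continuous_const.div (by continuity) (fun t => by positivity)
  have hint2 : IntervalIntegrable (fun t : ℝ => ∑ k ∈ Finset.range n, (-1:ℝ)^k * t^(2*k)) volume 0 y :=
    (continuous_finset_sum _ fun k _ => hcont k).intervalIntegrable _ _
  rw [h1, h2, ← intervalIntegral.integral_sub hint1 hint2]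
  have key : ∀ t : ℝ, 1/(1+t^2) - ∑ k ∈ Finset.range n, (-1:ℝ)^k * t^(2*k)
      = (-1)^n * t^(2*n) / (1+t^2) := by
    intro t
    have ht : (-t^2 : ℝ) ≠ 1 := by nlinarith [sq_nonneg t]
    have : ∑ k ∈ Finset.range n, (-1:ℝ)^k * t^(2*k) = ∑ k ∈ Finset.range n, (-t^2)^k := by
      refine Finset.sum_congr rfl fun k _ => ?_
      rw [neg_pow, pow_mul]
      ring
    rw [this, geom_sum_eq ht]
    have h0 : (1 + t^2 : ℝ) ≠ 0 := by positivity
    have hnp : ((-t^2:ℝ))^n = (-1)^n * t^(2*n) := by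
      rw [neg_pow, ← pow_mul]
    rw [hnp]
    have h0' : (-t^2 - 1 : ℝ) ≠ 0 := by nlinarith [sq_nonneg t]
    field_simp
    ring
  calc |∫ t in (0:ℝ)..y, (1/(1+t^2) - ∑ k ∈ Finset.range n, (-1:ℝ)^k * t^(2*k))|
      ≤ ∫ t in (0:ℝ)..y, |1/(1+t^2) - ∑ k ∈ Finset.range n, (-1:ℝ)^k * t^(2*k)| :=
        intervalIntegral.abs_integral_le_integral_abs hy
    _ ≤ ∫ t in (0:ℝ)..y, t^(2*n) := by
        apply intervalIntegral.integral_mono_on hy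
        · exact (hint1.sub hint2).abs
        · exact (continuous_pow _).intervalIntegrable _ _
        · intro t ht
          rw [key]
          rw [abs_div, abs_mul, abs_pow, abs_neg, abs_one, one_pow, one_mul]
          rw [abs_of_pos (by positivity : (0:ℝ) < 1 + t^2)]
          rw [div_le_iff₀ (by positivity)]
          rw [abs_of_nonneg (pow_nonneg ht.1 _)]
          nlinarith [pow_nonneg ht.1 (2*n), sq_nonneg t]
    _ = y^(2*n+1)/(2*n+1) := by
        rw [integral_pow]
        push_cast
        ring

lemma catalan_step : ∫ y in (0:ℝ)..1, arctan y / y = ∑' k : ℕ, (-1:ℝ)^k/(2*(k:ℝ)+1)^2 := by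
  have hsum : Summable (fun k : ℕ => (-1:ℝ)^k/(2*(k:ℝ)+1)^2) := by
    apply Summable.of_norm
    have hbase : Summable (fun k : ℕ => 1/((k:ℝ)+1)^2) := by
      have := (summable_nat_add_iff (f := fun n : ℕ => 1/(n:ℝ)^2) 1).mpr
        (summable_one_div_nat_pow.mpr one_lt_two)
      simpa using this
    apply Summable.of_nonneg_of_le (fun k => norm_nonneg _) _ hbase
    intro k
    rw [norm_div, norm_pow, norm_neg, norm_one, one_pow]
    rw [Real.norm_eq_abs, abs_of_pos (by positivity : (0:ℝ) < (2*(k:ℝ)+1)^2)]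
    apply one_div_le_one_div_of_le (by positivity)
    have hk : (0:ℝ) ≤ (k:ℝ) := Nat.cast_nonneg k
    nlinarith
  set I := ∫ y in (0:ℝ)..1, arctan y / y with hI
  have meas : Measurable (fun y : ℝ => arctan y / y) :=
    Real.continuous_arctan.measurable.div measurable_id
  have hintArc : IntervalIntegrable (fun y : ℝ => arctan y / y) volume 0 1 := by
    rw [intervalIntegrable_iff_integrableOn_Ioc_of_le zero_le_one]
    apply Integrable.mono' (integrable_const 1) (meas.aestronglyMeasurable.restrict)
    filter_upwards [ae_restrict_mem measurableSet_Ioc] with y hy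
    have h0 := arctan_rem 0 hy.1.le
    simp only [Finset.range_zero, Finset.sum_empty, sub_zero] at h0
    rw [Real.norm_eq_abs, abs_div, abs_of_pos hy.1]
    rw [div_le_one hy.1]
    calc |arctan y| ≤ y^(2*0+1)/(2*(0:ℕ)+1) := h0
      _ = y := by norm_num
  have hPS : ∀ n : ℕ, ∑ k ∈ Finset.range n, (-1:ℝ)^k/(2*(k:ℝ)+1)^2
      = ∫ y in (0:ℝ)..1, ∑ k ∈ Finset.range n, (-1:ℝ)^k * y^(2*k)/(2*(k:ℝ)+1) := by
    intro n
    rw [intervalIntegral.integral_finset_sum (f := fun (k:ℕ) (y:ℝ) => (-1:ℝ)^k * y^(2*k)/(2*(k:ℝ)+1)) (fun k _ =>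
      ((continuous_const.mul (continuous_pow _)).div_const _).intervalIntegrable _ _)]
    refine Finset.sum_congr rfl fun k _ => ?_
    rw [div_eq_mul_one_div ((-1:ℝ)^k)]
    simp only [mul_div_assoc]
    rw [intervalIntegral.integral_const_mul, intervalIntegral.integral_div, integral_pow]
    push_cast
    rw [one_pow, zero_pow (by omega)]
    field_simp
    ring
  have hbound : ∀ n : ℕ, |I - ∑ k ∈ Finset.range n, (-1:ℝ)^k/(2*(k:ℝ)+1)^2|
      ≤ 1/(2*(n:ℝ)+1)^2 := by
    intro n
    have hpoly : IntervalIntegrable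
        (fun y : ℝ => ∑ k ∈ Finset.range n, (-1:ℝ)^k * y^(2*k)/(2*(k:ℝ)+1)) volume 0 1 :=
      (continuous_finset_sum _ fun k _ =>
        ((continuous_const.mul (continuous_pow _)).div_const _)).intervalIntegrable _ _
    rw [hPS n, hI, ← intervalIntegral.integral_sub hintArc hpoly]
    rw [intervalIntegral.integral_of_le zero_le_one]
    have hgle : ∀ᵐ y ∂(volume.restrict (Set.Ioc (0:ℝ) 1)),
        ‖arctan y / y - ∑ k ∈ Finset.range n, (-1:ℝ)^k * y^(2*k)/(2*(k:ℝ)+1)‖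
          ≤ y^(2*n)/(2*(n:ℝ)+1) := by
      filter_upwards [ae_restrict_mem measurableSet_Ioc] with y hy
      have hy0 : (0:ℝ) < y := hy.1
      have key : arctan y / y - ∑ k ∈ Finset.range n, (-1:ℝ)^k * y^(2*k)/(2*(k:ℝ)+1)
          = (arctan y - ∑ k ∈ Finset.range n, (-1:ℝ)^k * y^(2*k+1)/(2*(k:ℝ)+1)) / y := by
        rw [sub_div, Finset.sum_div]
        congr 1
        refine Finset.sum_congr rfl fun k _ => ?_
        rw [pow_succ]
        field_simp
      rw [Real.norm_eq_abs, key, abs_div, abs_of_pos hy0, div_le_iff₀ hy0]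
      calc |arctan y - ∑ k ∈ Finset.range n, (-1:ℝ)^k * y^(2*k+1)/(2*(k:ℝ)+1)|
          ≤ y^(2*n+1)/(2*(n:ℝ)+1) := arctan_rem n hy0.le
        _ = y^(2*n)/(2*(n:ℝ)+1) * y := by rw [pow_succ]; ring
    have hgint : Integrable (fun y : ℝ => y^(2*n)/(2*(n:ℝ)+1))
        (volume.restrict (Set.Ioc (0:ℝ) 1)) := by
      apply Continuous.integrableOn_Ioc
      exact (continuous_pow _).div_const _
    calc ‖∫ y in Set.Ioc (0:ℝ) 1,
          (arctan y / y - ∑ k ∈ Finset.range n, (-1:ℝ)^k * y^(2*k)/(2*(k:ℝ)+1))‖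
        ≤ ∫ y in Set.Ioc (0:ℝ) 1, y^(2*n)/(2*(n:ℝ)+1) :=
          MeasureTheory.norm_integral_le_of_norm_le hgint hgle
      _ = 1/(2*(n:ℝ)+1)^2 := by
          rw [← intervalIntegral.integral_of_le zero_le_one,
            intervalIntegral.integral_div, integral_pow]
          push_cast
          rw [one_pow, zero_pow (by omega)]
          field_simp
          ring
  have h0 : Filter.Tendsto (fun n : ℕ => 1/(2*(n:ℝ)+1)^2) Filter.atTop (nhds 0) := by
    refine squeeze_zero (fun n => by positivity) (fun n => ?_)
      tendsto_one_div_add_atTop_nhds_zero_nat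
    apply one_div_le_one_div_of_le (by positivity)
    have hk : (0:ℝ) ≤ (n:ℝ) := Nat.cast_nonneg n
    nlinarith
  have htend : Filter.Tendsto (fun n => ∑ k ∈ Finset.range n, (-1:ℝ)^k/(2*(k:ℝ)+1)^2)
      Filter.atTop (nhds I) := by
    rw [tendsto_iff_dist_tendsto_zero]
    refine squeeze_zero (fun n => dist_nonneg) (fun n => ?_) h0
    rw [Real.dist_eq, abs_sub_comm]
    exact hbound n
  exact (tendsto_nhds_unique htend hsum.hasSum.tendsto_sum_nat).symm ▸ rfl

noncomputable def Fk (x y : ℝ) : ℝ := x / (Real.sqrt (1 - x^2) * Real.sqrt (1 + x^2*y^2))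

lemma Fk_nonneg {x : ℝ} (y : ℝ) (hx : 0 ≤ x) : 0 ≤ Fk x y :=
  div_nonneg hx (mul_nonneg (Real.sqrt_nonneg _) (Real.sqrt_nonneg _))

lemma Fk_meas : Measurable (Function.uncurry Fk) := by
  unfold Function.uncurry Fk
  fun_prop

lemma rpow_half_eq {x : ℝ} (hx : x ≤ 1) : ((1:ℝ)-x)^(-(1/2):ℝ) = (Real.sqrt (1-x))⁻¹ := by
  rw [Real.rpow_neg (by linarith), Real.sqrt_eq_rpow]

lemma Fk_le {x : ℝ} (y : ℝ) (hx : x ∈ Set.Ioc (0:ℝ) 1) :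
    Fk x y ≤ ((1:ℝ)-x)^(-(1/2):ℝ) := by
  rw [rpow_half_eq hx.2]
  rcases eq_or_lt_of_le hx.2 with h1 | h1
  · simp [Fk, h1, Real.sqrt_eq_zero']
  · have hx2 : (0:ℝ) < 1 - x^2 := by nlinarith [hx.1]
    have hs0 : 0 < Real.sqrt (1-x^2) := Real.sqrt_pos.mpr hx2
    have ht1 : 1 ≤ Real.sqrt (1 + x^2*y^2) := by
      nlinarith [Real.sq_sqrt (show (0:ℝ) ≤ 1+x^2*y^2 by positivity),
        Real.sqrt_nonneg (1+x^2*y^2), sq_nonneg (x*y)]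
    have hsx : Real.sqrt (1-x) ≤ Real.sqrt (1-x^2) := Real.sqrt_le_sqrt (by nlinarith [hx.1])
    have hsx0 : 0 < Real.sqrt (1-x) := Real.sqrt_pos.mpr (by linarith)
    have hst : Real.sqrt (1-x) ≤ Real.sqrt (1-x^2) * Real.sqrt (1 + x^2*y^2) := by
      calc Real.sqrt (1-x) ≤ Real.sqrt (1-x^2) := hsx
        _ = Real.sqrt (1-x^2) * 1 := (mul_one _).symm
        _ ≤ _ := by apply mul_le_mul_of_nonneg_left ht1 hs0.le
    rw [inv_eq_one_div]
    exact div_le_div₀ zero_le_one hx.2 hsx0 hst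

lemma hgint : IntegrableOn (fun x : ℝ => ((1:ℝ)-x)^(-(1/2):ℝ)) (Set.Ioc (0:ℝ) 1) volume := by
  rw [← intervalIntegrable_iff_integrableOn_Ioc_of_le zero_le_one]
  have h := (intervalIntegral.intervalIntegrable_rpow' (r := -(1/2))
    (by norm_num) (a := 0) (b := 1)).comp_sub_left 1
  norm_num at h
  exact h.symm

lemma innerY {x : ℝ} (hx : x ∈ Set.Ioo (0:ℝ) 1) :
    ∫ y in Set.Ioc (0:ℝ) 1, Fk x y = arsinh x / Real.sqrt (1 - x^2) := by
  have hx2 : (0:ℝ) < 1 - x^2 := by nlinarith [hx.1, hx.2]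
  have hs : 0 < Real.sqrt (1 - x^2) := Real.sqrt_pos.mpr hx2
  have ht : ∀ y : ℝ, (0:ℝ) < Real.sqrt (1+(x*y)^2) := fun y => Real.sqrt_pos.mpr (by positivity)
  rw [← intervalIntegral.integral_of_le zero_le_one]
  rw [intervalIntegral.integral_congr
    (g := fun y => (Real.sqrt (1-x^2))⁻¹ * ((Real.sqrt (1+(x*y)^2))⁻¹ * x))
    (fun y _ => by
      show Fk x y = _
      unfold Fk
      rw [show x^2*y^2 = (x*y)^2 by ring]
      field_simp)]
  rw [intervalIntegral.integral_eq_sub_of_hasDerivAt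
    (f := fun y => (Real.sqrt (1-x^2))⁻¹ * arsinh (x*y))
    (fun y _ => by
      have d1 : HasDerivAt (fun y : ℝ => x * y) x y := by
        simpa using (hasDerivAt_id y).const_mul x
      exact ((Real.hasDerivAt_arsinh (x*y)).comp y d1).const_mul _)
    (by
      apply Continuous.intervalIntegrable
      apply continuous_const.mul
      apply Continuous.mul _ continuous_const
      apply Continuous.inv₀
      · exact (continuous_const.add ((continuous_const.mul continuous_id).pow 2)).sqrt
      · exact fun y => (ht y).ne')]
  simp [Real.arsinh_zero, inv_mul_eq_div]

lemma innerX {y : ℝ} (hy : y ∈ Set.Ioc (0:ℝ) 1) :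
    ∫ x in Set.Ioc (0:ℝ) 1, Fk x y = arctan y / y := by
  have hy0 : 0 < y := hy.1
  set u := Real.sqrt (1 + y^2) with hu
  have hu0 : 0 < u := Real.sqrt_pos.mpr (by positivity)
  have hu2 : u^2 = 1 + y^2 := Real.sq_sqrt (by positivity)
  have hyu : y < u := by nlinarith
  set c := y / u with hc
  have hc0 : 0 < c := div_pos hy0 hu0
  have hc1 : c < 1 := (div_lt_one hu0).mpr hyu
  set H : ℝ → ℝ := fun x => -(y⁻¹ * Real.arcsin (c * Real.sqrt (1 - x^2))) with hH
  have hcont : ContinuousOn H (Set.Icc 0 1) := by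
    apply Continuous.continuousOn
    exact (continuous_const.mul (Real.continuous_arcsin.comp
      (continuous_const.mul ((continuous_const.sub (continuous_pow 2)).sqrt)))).neg
  have hderiv : ∀ x ∈ Set.Ioo (0:ℝ) 1, HasDerivAt H (Fk x y) x := by
    intro x hx
    have hx2 : (0:ℝ) < 1 - x^2 := by nlinarith [hx.1, hx.2]
    set s := Real.sqrt (1-x^2) with hsdef
    have hs0 : 0 < s := Real.sqrt_pos.mpr hx2
    have hs2 : s^2 = 1-x^2 := Real.sq_sqrt hx2.le
    have hs1 : s < 1 := by nlinarith [mul_self_nonneg (s-1), mul_pos hx.1 hx.1]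
    have hz1 : c * s < 1 := by nlinarith [mul_lt_mul_of_pos_left hs1 hc0]
    have hz0 : 0 < c * s := mul_pos hc0 hs0
    have d1 : HasDerivAt (fun x : ℝ => 1 - x^2) (-(2*x)) x := by
      simpa using ((hasDerivAt_pow 2 x).const_sub 1)
    have d2 : HasDerivAt (fun x : ℝ => Real.sqrt (1 - x^2)) (1/(2*s) * (-(2*x))) x :=
      (Real.hasDerivAt_sqrt hx2.ne').comp x d1
    have d3 : HasDerivAt (fun x : ℝ => c * Real.sqrt (1-x^2)) (c * (1/(2*s) * (-(2*x)))) x :=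
      d2.const_mul c
    have d4 : HasDerivAt Real.arcsin (1/Real.sqrt (1 - (c*s)^2)) (c*s) :=
      Real.hasDerivAt_arcsin (by nlinarith) (ne_of_lt hz1)
    have d5 : HasDerivAt (fun x : ℝ => Real.arcsin (c * Real.sqrt (1-x^2)))
        (1/Real.sqrt (1-(c*s)^2) * (c * (1/(2*s) * (-(2*x))))) x := HasDerivAt.comp x (h := fun x => c * Real.sqrt (1-x^2)) d4 d3
    have d6 : HasDerivAt H _ x := (d5.const_mul y⁻¹).fun_neg
    convert d6 using 1
    set t := Real.sqrt (1 + x^2*y^2) with htdef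
    have ht0 : 0 < t := Real.sqrt_pos.mpr (by positivity)
    have ht2 : t^2 = 1 + x^2*y^2 := Real.sq_sqrt (by positivity)
    have hw : Real.sqrt (1 - (c*s)^2) = t / u := by
      rw [show (1:ℝ) - (c*s)^2 = (t/u)^2 by
        rw [div_pow, ht2, hu2, mul_pow, hc, div_pow, hu2, hs2]
        field_simp
        ring]
      exact Real.sqrt_sq (by positivity)
    rw [hw, hc]
    unfold Fk
    rw [← hsdef, ← htdef]
    field_simp
  have hint : IntervalIntegrable (fun x => Fk x y) volume 0 1 := by
    rw [intervalIntegrable_iff_integrableOn_Ioc_of_le zero_le_one]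
    apply Integrable.mono' hgint
    · exact ((Fk_meas.comp (measurable_id.prodMk measurable_const)).aestronglyMeasurable).restrict
    · filter_upwards [ae_restrict_mem measurableSet_Ioc] with x hx
      rw [Real.norm_eq_abs, abs_of_nonneg (Fk_nonneg y hx.1.le)]
      exact Fk_le y hx
  rw [← intervalIntegral.integral_of_le zero_le_one,
    intervalIntegral.integral_eq_sub_of_hasDerivAt_of_le zero_le_one hcont hderiv hint]
  have h1 : H 1 = 0 := by simp [hH]
  have h0 : H 0 = -(y⁻¹ * arctan y) := by
    simp only [hH]
    norm_num
    rw [hc, hu, ← Real.arctan_eq_arcsin]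
    exact Or.inl rfl
  rw [h1, h0]
  field_simp
  ring

theorem stmt_4 :
    ∫ x in (0:ℝ)..1, Real.arsinh x / Real.sqrt (1 - x ^ 2)
      = ∑' k : ℕ, (-1 : ℝ) ^ k / (2 * k + 1) ^ 2 := by
  set μ := volume.restrict (Set.Ioc (0:ℝ) 1) with hμ
  have hmeas : AEStronglyMeasurable (Function.uncurry Fk) (μ.prod μ) :=
    Fk_meas.aestronglyMeasurable
  have hμuniv : μ Set.univ = 1 := by
    rw [hμ, Measure.restrict_apply_univ, Real.volume_Ioc]
    norm_num
  have hFint : Integrable (Function.uncurry Fk) (μ.prod μ) := by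
    rw [MeasureTheory.integrable_prod_iff hmeas]
    constructor
    · filter_upwards [ae_restrict_mem measurableSet_Ioc] with x hx
      apply Integrable.mono' (integrable_const (((1:ℝ)-x)^(-(1/2):ℝ)))
      · exact ((Fk_meas.comp (measurable_const.prodMk measurable_id)).aestronglyMeasurable).restrict
      · filter_upwards with y
        show ‖Fk x y‖ ≤ _
        rw [Real.norm_eq_abs, abs_of_nonneg (Fk_nonneg y hx.1.le)]
        exact Fk_le y hx
    · apply Integrable.mono' hgint
      · exact (hmeas.norm).integral_prod_right'
      · filter_upwards [ae_restrict_mem measurableSet_Ioc] with x hx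
        rw [Real.norm_eq_abs,
          abs_of_nonneg (integral_nonneg (fun y => norm_nonneg _))]
        calc (∫ y, ‖Fk x y‖ ∂μ) ≤ ∫ _, ((1:ℝ)-x)^(-(1/2):ℝ) ∂μ := by
              apply integral_mono_of_nonneg
                (Filter.Eventually.of_forall fun y => norm_nonneg _) (integrable_const _)
              filter_upwards with y
              rw [Real.norm_eq_abs, abs_of_nonneg (Fk_nonneg y hx.1.le)]
              exact Fk_le y hx
          _ = ((1:ℝ)-x)^(-(1/2):ℝ) := by rw [MeasureTheory.integral_const, measureReal_def, hμuniv]; simp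
  have swap := MeasureTheory.integral_integral_swap (f := Fk) hFint
  have hne : ∀ᵐ x : ℝ ∂μ, x ≠ 1 := by
    have h1 : ∀ᵐ x : ℝ, x ≠ (1:ℝ) := by
      rw [ae_iff]
      have : {x : ℝ | ¬ x ≠ 1} = {1} := by ext z; simp
      rw [this]
      exact Real.volume_singleton
    exact h1.filter_mono (ae_mono Measure.restrict_le_self)
  have hL : ∫ x in (0:ℝ)..1, Real.arsinh x / Real.sqrt (1 - x ^ 2)
      = ∫ x, (∫ y, Fk x y ∂μ) ∂μ := by
    rw [intervalIntegral.integral_of_le zero_le_one]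
    apply MeasureTheory.integral_congr_ae
    filter_upwards [ae_restrict_mem measurableSet_Ioc, hne] with x hx hx1
    exact (innerY ⟨hx.1, lt_of_le_of_ne hx.2 hx1⟩).symm
  have hR : ∫ y, (∫ x, Fk x y ∂μ) ∂μ = ∫ y in (0:ℝ)..1, arctan y / y := by
    rw [intervalIntegral.integral_of_le zero_le_one]
    apply MeasureTheory.integral_congr_ae
    filter_upwards [ae_restrict_mem measurableSet_Ioc] with y hy
    exact innerX hy
  rw [hL, swap, hR, catalan_step]
end

section
/- The integral from 0 to 1 of arctan(x)·arccot(x)/x dx equals (7/8)·ζ(3), where arccot(x) = π/2 − arctan(x). -/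
set_option maxHeartbeats 1000000

open Real MeasureTheory

lemma bern3 (x : ℝ) : Polynomial.eval x (Polynomial.map (algebraMap ℚ ℝ) (Polynomial.bernoulli 3))
    = x^3 - 3/2*x^2 + 1/2*x := by
  have h2 : bernoulli 2 = 1/6 := by rw [bernoulli]; norm_num [bernoulli'_two]
  have h3 : bernoulli 3 = 0 := by rw [bernoulli]; norm_num [bernoulli'_three]
  simp [Polynomial.bernoulli, Finset.sum_range_succ, bernoulli_one, h2, h3]
  ring

lemma hasSum_S {t : ℝ} (h0 : 0 ≤ t) (h2 : t ≤ 2*π) :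
    HasSum (fun n : ℕ => Real.sin (n*t)/(n:ℝ)^3) (t^3/12 - π*t^2/4 + π^2*t/6) := by
  have hπ := Real.pi_pos
  have hx : t/(2*π) ∈ Set.Icc (0:ℝ) 1 := by
    constructor
    · positivity
    · rw [div_le_one (by positivity)]; exact h2
  have H := hasSum_one_div_nat_pow_mul_sin (k := 1) one_ne_zero hx
  rw [bern3] at H
  convert H using 1
  · funext n
    rw [show 2*π*(n:ℝ)*(t/(2*π)) = n*t by field_simp]
    ring
  · norm_num [Nat.factorial]
    field_simp
    ring

lemma hasSum_odd {t : ℝ} (h0 : 0 ≤ t) (h1 : t ≤ π) :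
    HasSum (fun k : ℕ => Real.sin ((2*k+1)*t)/((2*k+1):ℝ)^3) (π*t*(π-t)/8) := by
  have hπ := Real.pi_pos
  have hS := hasSum_S h0 (by linarith)
  have hS2 := hasSum_S (t := 2*t) (by linarith) (by linarith)
  set f : ℕ → ℝ := fun n : ℕ => Real.sin (n*t)/(n:ℝ)^3 with hf
  have hE : HasSum (fun k : ℕ => f (2*k))
      (((2*t)^3/12 - π*(2*t)^2/4 + π^2*(2*t)/6)/8) := by
    have := hS2.div_const 8
    convert this using 1
    rfl
    funext k
    simp only [hf]
    push_cast
    rw [show ((2:ℝ)*(k:ℝ))*t = (k:ℝ)*(2*t) by ring]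
    ring
  have hOs : Summable (fun k : ℕ => f (2*k+1)) :=
    hS.summable.comp_injective (i := fun k : ℕ => 2*k+1) (fun a b h => by simp only [] at h; omega)
  have hO := hOs.hasSum
  have htot := HasSum.even_add_odd hE hO
  have heq := hS.unique htot
  have hval : (∑' k : ℕ, f (2*k+1)) = π*t*(π-t)/8 := by
    have expand : t^3/12 - π*t^2/4 + π^2*t/6 =
        ((2*t)^3/12 - π*(2*t)^2/4 + π^2*(2*t)/6)/8 + π*t*(π-t)/8 := by ring
    rw [expand] at heq
    linarith [heq]
  rw [hval] at hO
  convert hO using 1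
  funext k
  simp only [hf]
  push_cast
  ring_nf

noncomputable def D (k : ℕ) (u : ℝ) : ℝ := 1 + 2 * ∑ j ∈ Finset.range k, Real.cos (2*(j+1)*u)

lemma D_continuous (k : ℕ) : Continuous (D k) := by
  unfold D; continuity

lemma sin_mul_D (k : ℕ) (u : ℝ) : Real.sin u * D k u = Real.sin ((2*k+1)*u) := by
  induction k with
  | zero => simp [D]
  | succ n ih =>
    have expand : D (n+1) u = D n u + 2 * Real.cos (2*(n+1)*u) := by
      simp [D, Finset.sum_range_succ]; ring
    rw [expand, mul_add, ih]
    push_cast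
    rw [show (2*(n:ℝ)+1)*u = 2*((n:ℝ)+1)*u - u by ring,
       show (2*((n:ℝ)+1)+1)*u = 2*((n:ℝ)+1)*u + u by ring,
       Real.sin_add, Real.sin_sub]
    ring

lemma D_abs_le (k : ℕ) (u : ℝ) : |D k u| ≤ 2*k+1 := by
  unfold D
  calc |1 + 2 * ∑ j ∈ Finset.range k, Real.cos (2*(j+1)*u)|
      ≤ |(1:ℝ)| + |2 * ∑ j ∈ Finset.range k, Real.cos (2*(j+1)*u)| := abs_add_le _ _
    _ ≤ 1 + 2 * k := by
        rw [abs_one, abs_mul, abs_two]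
        have : |∑ j ∈ Finset.range k, Real.cos (2*(j+1)*u)| ≤ k := by
          calc |∑ j ∈ Finset.range k, Real.cos (2*(j+1)*u)|
              ≤ ∑ j ∈ Finset.range k, |Real.cos (2*(j+1)*u)| := Finset.abs_sum_le_sum_abs _ _
            _ ≤ ∑ j ∈ Finset.range k, 1 := Finset.sum_le_sum (fun j _ => Real.abs_cos_le_one _)
            _ = k := by simp
        linarith
    _ = 2*k+1 := by ring

lemma D_integral (k : ℕ) : ∫ u in Set.Ioo 0 (π/2), D k u = π/2 := by
  have hπ := Real.pi_pos
  rw [← integral_Ioc_eq_integral_Ioo, ← intervalIntegral.integral_of_le (by positivity)]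
  unfold D
  rw [intervalIntegral.integral_add ((continuous_const).intervalIntegrable _ _)
    ((by continuity : Continuous fun u : ℝ => 2 * ∑ j ∈ Finset.range k,
      Real.cos (2*(j+1)*u)).intervalIntegrable _ _)]
  have h1 : ∫ u in (0:ℝ)..(π/2), (1:ℝ) = π/2 := by simp
  have h2 : ∫ u in (0:ℝ)..(π/2), 2 * ∑ j ∈ Finset.range k, Real.cos (2*(j+1)*u) = 0 := by
    rw [intervalIntegral.integral_const_mul]
    have hsum := intervalIntegral.integral_finset_sum (μ := volume) (a := (0:ℝ)) (b := π/2)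
      (s := Finset.range k) (f := fun j u => Real.cos (2*(j+1)*u))
      (fun j _ => (Real.continuous_cos.comp (by continuity)).intervalIntegrable _ _)
    rw [hsum]
    have : ∀ j ∈ Finset.range k, ∫ u in (0:ℝ)..(π/2), Real.cos (2*(j+1)*u) = 0 := by
      intro j _
      have hc : (2*((j:ℝ)+1)) ≠ 0 := by positivity
      rw [intervalIntegral.integral_comp_mul_left (fun x => Real.cos x) hc]
      have hz : Real.sin (((j:ℝ)+1)*π) = 0 := by
        have := Real.sin_nat_mul_pi (j+1)
        push_cast at this
        exact this
      simp only [mul_zero, integral_cos, Real.sin_zero, sub_zero, smul_eq_mul,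
        show 2*((j:ℝ)+1)*(π/2) = ((j:ℝ)+1)*π by ring, hz]
    rw [Finset.sum_congr rfl this]
    simp
  rw [h1, h2]; ring

lemma key_integral :
    ∫ u in Set.Ioo 0 (π/2), u*(π-u)/(4*Real.sin u) = ∑' k : ℕ, (1:ℝ)/(2*k+1)^3 := by
  have hπ := Real.pi_pos
  set f : ℕ → ℝ → ℝ := fun k u => (2/π) * ((1:ℝ)/(2*k+1)^3) * D k u with hf
  have hcont : ∀ k, Continuous (f k) := fun k => (continuous_const.mul (D_continuous k))
  have hms : MeasurableSet (Set.Ioo (0:ℝ) (π/2)) := measurableSet_Ioo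
  have hInt : ∀ k, IntegrableOn (f k) (Set.Ioo 0 (π/2)) := fun k =>
    ((hcont k).continuousOn.integrableOn_Icc).mono_set Set.Ioo_subset_Icc_self
  have hbound : ∀ k : ℕ, ∀ u : ℝ, ‖f k u‖ ≤ (2/π) * ((1:ℝ)/(2*k+1)^3) * (2*k+1) := by
    intro k u
    rw [hf]
    simp only [norm_mul, Real.norm_eq_abs]
    rw [abs_of_nonneg (by positivity : (0:ℝ) ≤ 2/π),
      abs_of_nonneg (by positivity : (0:ℝ) ≤ (1:ℝ)/(2*(k:ℝ)+1)^3)]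
    have h1 : (0:ℝ) ≤ (2/π) * ((1:ℝ)/(2*(k:ℝ)+1)^3) := by positivity
    calc (2/π) * ((1:ℝ)/(2*(k:ℝ)+1)^3) * |D k u|
        ≤ (2/π) * ((1:ℝ)/(2*(k:ℝ)+1)^3) * (2*k+1) := by
          apply mul_le_mul_of_nonneg_left (D_abs_le k u) h1
      _ = (2/π) * ((1:ℝ)/(2*(k:ℝ)+1)^3) * (2*k+1) := rfl
  have hintnorm : ∀ k : ℕ, (∫ u in Set.Ioo 0 (π/2), ‖f k u‖)
      ≤ ((2/π) * ((1:ℝ)/(2*k+1)^3) * (2*k+1)) * (π/2) := by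
    intro k
    calc ∫ u in Set.Ioo 0 (π/2), ‖f k u‖
        ≤ ∫ _u in Set.Ioo 0 (π/2), ((2/π) * ((1:ℝ)/(2*k+1)^3) * (2*k+1)) := by
          apply setIntegral_mono_on (hInt k).norm (integrableOn_const (by
            rw [Real.volume_Ioo]; exact ENNReal.ofReal_ne_top)) hms
          intro u _
          exact hbound k u
      _ = ((2/π) * ((1:ℝ)/(2*k+1)^3) * (2*k+1)) * (π/2) := by
          rw [setIntegral_const, Measure.real, Real.volume_Ioo, smul_eq_mul,
            ENNReal.toReal_ofReal (by linarith : (0:ℝ) ≤ π/2 - 0)]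
          ring
  have hcompS : Summable (fun k : ℕ => (1:ℝ)/((k:ℝ)+1)^2) := by
    have := (summable_nat_add_iff (f := fun n : ℕ => (1:ℝ)/(n:ℝ)^2) 1).2
      (Real.summable_one_div_nat_pow.2 one_lt_two)
    convert this using 2 with k
    rfl
    push_cast
    rfl
  have hle : ∀ k : ℕ, (2/π) * ((1:ℝ)/(2*(k:ℝ)+1)^3) * (2*(k:ℝ)+1) ≤ (1:ℝ)/((k:ℝ)+1)^2 := by
    intro k
    have hk1 : (0:ℝ) < ((k:ℝ)+1)^2 := by positivity
    have hk2 : (0:ℝ) < (2*(k:ℝ)+1)^3 := by positivity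
    have heq : 2/π * ((1:ℝ)/(2*(k:ℝ)+1)^3) * (2*(k:ℝ)+1) = (2/π) / (2*(k:ℝ)+1)^2 := by
      field_simp
    rw [heq, div_le_div_iff₀ (by positivity) hk1]
    have h2π : 2/π ≤ 1 := by
      rw [div_le_one hπ]; linarith [Real.two_le_pi]
    have hkc := Nat.cast_nonneg (α := ℝ) k
    nlinarith [mul_le_mul_of_nonneg_right h2π (le_of_lt hk1)]
  have hgsum : Summable (fun k : ℕ => ((2/π) * ((1:ℝ)/(2*k+1)^3) * (2*k+1)) * (π/2)) :=
    (Summable.of_nonneg_of_le (fun k => by positivity) hle hcompS).mul_right _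
  have hnorm_sum : Summable (fun k : ℕ => ∫ u in Set.Ioo 0 (π/2), ‖f k u‖) :=
    Summable.of_nonneg_of_le (fun k => integral_nonneg (fun u => norm_nonneg _))
      hintnorm hgsum
  have hptwise : ∀ u ∈ Set.Ioo (0:ℝ) (π/2), (∑' k, f k u) = u*(π-u)/(4*Real.sin u) := by
    intro u hu
    obtain ⟨hu0, hu2⟩ := hu
    have hsinu : 0 < Real.sin u := Real.sin_pos_of_pos_of_lt_pi hu0 (by linarith)
    have hOdd := hasSum_odd (le_of_lt hu0) (by linarith)
    have hHS : HasSum (fun k => f k u) ((2/(π*Real.sin u)) * (π*u*(π-u)/8)) := by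
      have := hOdd.mul_left (2/(π*Real.sin u))
      convert this using 2 with k
      show 2/π * ((1:ℝ)/(2*(k:ℝ)+1)^3) * D k u = _
      have hDk : D k u = Real.sin ((2*k+1)*u) / Real.sin u := by
        rw [eq_div_iff (ne_of_gt hsinu), mul_comm, sin_mul_D]
      rw [hDk, div_mul_div_comm, div_mul_div_comm, div_mul_div_comm]
      rw [mul_one, show π * Real.sin u * (2*(k:ℝ)+1)^3 = π * (2*(k:ℝ)+1)^3 * Real.sin u by ring]
      rfl
    have hval : (2/(π*Real.sin u)) * (π*u*(π-u)/8) = u*(π-u)/(4*Real.sin u) := by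
      field_simp
      ring
    rw [hval] at hHS
    exact hHS.tsum_eq
  calc ∫ u in Set.Ioo 0 (π/2), u*(π-u)/(4*Real.sin u)
      = ∫ u in Set.Ioo 0 (π/2), (∑' k, f k u) := by
        apply setIntegral_congr_fun hms
        intro u hu
        exact (hptwise u hu).symm
    _ = ∑' k, ∫ u in Set.Ioo 0 (π/2), f k u :=
        (integral_tsum_of_summable_integral_norm hInt hnorm_sum).symm
    _ = ∑' k : ℕ, (1:ℝ)/(2*k+1)^3 := by
        congr 1
        funext k
        rw [hf]
        simp only []
        rw [MeasureTheory.integral_const_mul, D_integral]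
        field_simp

lemma image_two_arctan : (fun x : ℝ => 2 * Real.arctan x) '' Set.Ioo 0 1 = Set.Ioo 0 (π/2) := by
  have hπ := Real.pi_pos
  ext u
  constructor
  · rintro ⟨x, ⟨hx0, hx1⟩, rfl⟩
    have h1 : 0 < Real.arctan x := by
      rw [show (0:ℝ) = Real.arctan 0 by simp]
      exact Real.arctan_strictMono hx0
    have h2 : Real.arctan x < π/4 := by
      have := Real.arctan_strictMono hx1
      rwa [Real.arctan_one] at this
    constructor
    · show 0 < 2 * Real.arctan x; linarith
    · show 2 * Real.arctan x < π/2; linarith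
  · rintro ⟨hu0, hu2⟩
    refine ⟨Real.tan (u/2), ⟨?_, ?_⟩, ?_⟩
    · exact Real.tan_pos_of_pos_of_lt_pi_div_two (by linarith) (by linarith)
    · have := Real.tan_lt_tan_of_nonneg_of_lt_pi_div_two (x := u/2) (y := π/4)
        (by linarith) (by linarith) (by linarith)
      rwa [Real.tan_pi_div_four] at this
    · show 2 * Real.arctan (Real.tan (u/2)) = u
      rw [Real.arctan_tan (by linarith) (by linarith)]
      ring

lemma subst_eq : (∫ x in (0:ℝ)..1, Real.arctan x * (π/2 - Real.arctan x) / x)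
    = ∫ u in Set.Ioo 0 (π/2), u*(π-u)/(4*Real.sin u) := by
  have hπ := Real.pi_pos
  rw [intervalIntegral.integral_of_le zero_le_one, integral_Ioc_eq_integral_Ioo]
  rw [← image_two_arctan]
  rw [MeasureTheory.integral_image_eq_integral_abs_deriv_smul measurableSet_Ioo
    (f' := fun x : ℝ => 2/(1+x^2))
    (fun x _ => ((Real.hasDerivAt_arctan x).const_mul 2).hasDerivWithinAt.congr_deriv (by
      field_simp))
    (fun a _ b _ h => Real.arctan_injective (by linarith [h] ; ))
    (fun u => u*(π-u)/(4*Real.sin u))]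
  apply setIntegral_congr_fun measurableSet_Ioo
  intro x hx
  obtain ⟨hx0, hx1⟩ := hx
  have h1x : (0:ℝ) < 1 + x^2 := by positivity
  have hsin : Real.sin (2 * Real.arctan x) = 2*x/(1+x^2) := by
    rw [Real.sin_two_mul, Real.sin_arctan, Real.cos_arctan,
      show 2*(x/Real.sqrt (1+x^2))*(1/Real.sqrt (1+x^2))
        = 2*x/(Real.sqrt (1+x^2)*Real.sqrt (1+x^2)) by ring,
      Real.mul_self_sqrt (le_of_lt h1x)]
  symm
  show |2/(1+x^2)| • ((2*Real.arctan x)*(π-(2*Real.arctan x))/(4*Real.sin (2*Real.arctan x)))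
    = Real.arctan x * (π/2 - Real.arctan x) / x
  rw [hsin, smul_eq_mul, abs_of_pos (by positivity)]
  have hxne : x ≠ 0 := ne_of_gt hx0
  field_simp
  ring

theorem stmt_6 :
    ((∫ x in (0:ℝ)..1, Real.arctan x * (π / 2 - Real.arctan x) / x : ℝ) : ℂ)
      = 7 / 8 * riemannZeta 3 := by
  have h3 : Summable (fun n : ℕ => (1:ℝ)/(n:ℝ)^3) :=
    Real.summable_one_div_nat_pow.2 (by norm_num)
  set z : ℝ := ∑' n : ℕ, (1:ℝ)/(n:ℝ)^3 with hz
  have hfull : HasSum (fun n : ℕ => (1:ℝ)/(n:ℝ)^3) z := h3.hasSum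
  have hEven : HasSum (fun k : ℕ => (1:ℝ)/((2*k:ℕ):ℝ)^3) (z/8) := by
    have := hfull.div_const 8
    convert this using 1
    rfl
    funext k
    push_cast
    rcases Nat.eq_zero_or_pos k with rfl | hk
    · norm_num
    · have : ((k:ℝ))^3 ≠ 0 := by positivity
      field_simp
      ring
  have hOs : Summable (fun k : ℕ => (1:ℝ)/((2*k+1:ℕ):ℝ)^3) :=
    h3.comp_injective (i := fun k : ℕ => 2*k+1) (fun a b h => by simp only [] at h; omega)
  have htot := HasSum.even_add_odd (f := fun n : ℕ => (1:ℝ)/(n:ℝ)^3) hEven hOs.hasSum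
  have heq := hfull.unique htot
  have hOddVal : (∑' k : ℕ, (1:ℝ)/((2*k+1:ℕ):ℝ)^3) = 7/8*z := by linarith
  have hIntVal : (∫ x in (0:ℝ)..1, Real.arctan x * (π/2 - Real.arctan x) / x) = 7/8*z := by
    rw [subst_eq, key_integral, ← hOddVal]
    congr 1
    funext k
    push_cast
    ring_nf
  rw [hIntVal]
  have hzeta : riemannZeta 3 = ((z:ℝ):ℂ) := by
    rw [show (3:ℂ) = ((3:ℕ):ℂ) by norm_num, zeta_nat_eq_tsum_of_gt_one (by norm_num), hz,
      Complex.ofReal_tsum]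
    congr 1
    funext n
    push_cast
    ring
  rw [hzeta]
  push_cast
  ring
end

section
/- The integral from 0 to 1 of (arctan(x))²/x dx equals πG/2 − (7/8)ζ(3), where G is the Catalan constant. -/
open Real MeasureTheory Filter intervalIntegral

noncomputable def hfun (u : ℝ) : ℝ := u^2 / Real.sin u

lemma trig_vals (k : ℕ) : Real.cos ((2*k+1)*(π/2)) = 0 ∧ Real.sin ((2*k+1)*(π/2)) = (-1)^k := by
  have h : (2*(k:ℝ)+1)*(π/2) = π/2 + k*π := by ring
  rw [h, Real.cos_add_nat_mul_pi, Real.sin_add_nat_mul_pi]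
  simp

lemma Ik (k : ℕ) :
    ∫ u in (0:ℝ)..(π/2), u^2 * Real.sin ((2*k+1)*u)
      = π*(-1)^k/(2*k+1)^2 - 2/(2*k+1)^3 := by
  set a : ℝ := 2*k+1 with ha
  have ha0 : a ≠ 0 := by positivity
  have key : ∀ u : ℝ, HasDerivAt (fun u : ℝ =>
      -u^2 * Real.cos (a*u)/a + 2*u*Real.sin (a*u)/a^2 + 2*Real.cos (a*u)/a^3)
      (u^2 * Real.sin (a*u)) u := by
    intro u
    have hc : HasDerivAt (fun u : ℝ => Real.cos (a*u)) (-Real.sin (a*u) * a) u := by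
      simpa [Function.comp_def] using (Real.hasDerivAt_cos (a*u)).comp u ((hasDerivAt_id u).const_mul a)
    have hs : HasDerivAt (fun u : ℝ => Real.sin (a*u)) (Real.cos (a*u) * a) u := by
      simpa [Function.comp_def] using (Real.hasDerivAt_sin (a*u)).comp u ((hasDerivAt_id u).const_mul a)
    have h1 : HasDerivAt (fun u : ℝ => -u^2 * Real.cos (a*u)/a)
        (((-2*u) * Real.cos (a*u) + (-u^2) * (-Real.sin (a*u) * a))/a) u := by
      exact (((hasDerivAt_pow 2 u).neg.mul hc).div_const a).congr_deriv (by simp only [Pi.neg_apply]; ring)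
    have h2 : HasDerivAt (fun u : ℝ => 2*u*Real.sin (a*u)/a^2)
        ((2 * Real.sin (a*u) + 2*u*(Real.cos (a*u) * a))/a^2) u := by
      exact ((((hasDerivAt_id u).const_mul 2).mul hs).div_const (a^2)).congr_deriv (by simp only [id_eq]; ring)
    have h3 : HasDerivAt (fun u : ℝ => 2*Real.cos (a*u)/a^3)
        ((2 * (-Real.sin (a*u) * a))/a^3) u := by
      exact ((hc.const_mul 2).div_const (a^3)).congr_deriv (by ring)
    have := (h1.add h2).add h3
    refine this.congr_deriv ?_
    field_simp
    ring
  rw [integral_eq_sub_of_hasDerivAt (fun u _ => key u)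
      (((continuous_pow 2).mul (Real.continuous_sin.comp (continuous_const.mul continuous_id))).intervalIntegrable _ _)]
  obtain ⟨hc, hs⟩ := trig_vals k
  rw [show a * (π/2) = (2*k+1)*(π/2) by rw [ha]]
  rw [hc, hs]
  norm_num
  field_simp

lemma sum_sin (n : ℕ) (u : ℝ) :
    (∑ k ∈ Finset.range n, Real.sin ((2*k+1)*u)) * Real.sin u = Real.sin (n*u)^2 := by
  induction n with
  | zero => simp
  | succ n ih =>
    rw [Finset.sum_range_succ, add_mul, ih]
    have h3 := Real.cos_sub_cos (2*(n*u)) (2*((n+1:ℕ)*u))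
    have h1 := Real.sin_sq_eq_half_sub ((n+1:ℕ)*u)
    have h2 := Real.sin_sq_eq_half_sub ((n:ℝ)*u)
    have e1 : (2*((n:ℝ)*u) + 2*((n+1:ℕ)*u))/2 = (2*n+1)*u := by push_cast; ring
    have e2 : (2*((n:ℝ)*u) - 2*((n+1:ℕ)*u))/2 = -u := by push_cast; ring
    rw [e1, e2, Real.sin_neg] at h3
    push_cast at h1 h2 h3 ⊢
    nlinarith [h1, h2, h3]

lemma my_arctan_nonneg {x : ℝ} (h : 0 ≤ x) : 0 ≤ Real.arctan x := by
  rcases eq_or_lt_of_le h with rfl | h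
  · simp
  · simpa using (Real.arctan_strictMono h).le

lemma abs_arctan_le (x : ℝ) : |Real.arctan x| ≤ |x| := by
  have key : ∀ y : ℝ, 0 ≤ y → Real.arctan y ≤ y := by
    intro y hy
    have h1 : 0 ≤ Real.arctan y := my_arctan_nonneg hy
    have := Real.le_tan h1 (Real.arctan_lt_pi_div_two y)
    rwa [Real.tan_arctan] at this
  rcases le_total 0 x with h | h
  · rw [abs_of_nonneg (my_arctan_nonneg h), abs_of_nonneg h]; exact key x h
  · rw [abs_of_nonpos (by simpa using my_arctan_nonneg (by linarith : 0 ≤ -x)), abs_of_nonpos h]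
    have := key (-x) (by linarith)
    rw [Real.arctan_neg] at this
    linarith

lemma gcont : Continuous (fun x : ℝ => Real.arctan x ^ 2 / x) := by
  rw [continuous_iff_continuousAt]
  intro x
  rcases eq_or_ne x 0 with rfl | hx
  · have hb : ∀ y : ℝ, ‖Real.arctan y ^ 2 / y‖ ≤ |y| := by
      intro y
      rcases eq_or_ne y 0 with rfl | hy
      · simp
      · rw [Real.norm_eq_abs, abs_div, abs_pow]
        rw [div_le_iff₀ (abs_pos.2 hy)]
        calc |Real.arctan y|^2 ≤ |y|^2 := by
              apply pow_le_pow_left₀ (abs_nonneg _) (abs_arctan_le y)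
          _ = |y| * |y| := by ring
    have : Filter.Tendsto (fun x : ℝ => Real.arctan x ^ 2 / x) (nhds 0) (nhds 0) :=
      squeeze_zero_norm hb (by simpa using continuous_abs.tendsto (0:ℝ))
    simpa [ContinuousAt] using this
  · exact ((Real.continuous_arctan.pow 2).continuousAt).div continuousAt_id hx

lemma hcont : ContinuousOn hfun (Set.Icc 0 (π/2)) := by
  intro u hu
  rcases eq_or_lt_of_le hu.1 with rfl | hpos
  · have h0 : Filter.Tendsto (fun u : ℝ => u^2 / Real.sin u) (nhdsWithin 0 (Set.Icc 0 (π/2))) (nhds 0) := by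
      apply squeeze_zero' (g := fun t : ℝ => π/2 * t)
      · filter_upwards [self_mem_nhdsWithin] with t ht
        exact div_nonneg (sq_nonneg t) (Real.sin_nonneg_of_nonneg_of_le_pi ht.1
          (le_trans ht.2 (by linarith [Real.pi_pos])))
      · filter_upwards [self_mem_nhdsWithin] with t ht
        rcases eq_or_lt_of_le ht.1 with rfl | htp
        · simp
        · have hs : 0 < Real.sin t := Real.sin_pos_of_pos_of_lt_pi htp
            (lt_of_le_of_lt ht.2 (by linarith [Real.pi_pos]))
          rw [div_le_iff₀ hs]
          have hsin : 2/π * t ≤ Real.sin t := Real.mul_le_sin ht.1 ht.2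
          have hπ : (0:ℝ) < π := Real.pi_pos
          calc t^2 = (π/2*t) * (2/π*t) := by field_simp
            _ ≤ (π/2*t) * Real.sin t := by
                apply mul_le_mul_of_nonneg_left hsin (by positivity)
      · have : Filter.Tendsto (fun t : ℝ => π/2 * t) (nhds 0) (nhds 0) := by
          simpa using (continuous_mul_left (π/2)).tendsto (0:ℝ)
        exact this.mono_left nhdsWithin_le_nhds
    unfold hfun; simpa [ContinuousWithinAt] using h0
  · exact ((continuous_pow 2).continuousAt.div Real.continuous_sin.continuousAt
      (ne_of_gt (Real.sin_pos_of_pos_of_lt_pi hpos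
        (lt_of_le_of_lt hu.2 (by linarith [Real.pi_pos]))))).continuousWithinAt

lemma RLreal (w : ℝ) :
    (∫ v : ℝ, Real.fourierChar (-(v*w)) • (Set.Icc (0:ℝ) (π/2)).indicator (fun u => (hfun u : ℂ)) v).re
      = ∫ u in (0:ℝ)..(π/2), hfun u * Real.cos (2*π*w*u) := by
  have hmeas : MeasurableSet (Set.Icc (0:ℝ) (π/2)) := measurableSet_Icc
  have step1 : (∫ v : ℝ, Real.fourierChar (-(v*w)) • (Set.Icc (0:ℝ) (π/2)).indicator (fun u => (hfun u : ℂ)) v)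
      = ∫ v in Set.Icc (0:ℝ) (π/2), Real.fourierChar (-(v*w)) • (hfun v : ℂ) := by
    rw [← MeasureTheory.integral_indicator hmeas]
    congr 1
    ext v
    by_cases hv : v ∈ Set.Icc (0:ℝ) (π/2) <;> simp [hv, Set.indicator_of_mem, Set.indicator_of_notMem]
  rw [step1]
  have hint : IntegrableOn (fun v => Real.fourierChar (-(v*w)) • (hfun v : ℂ)) (Set.Icc (0:ℝ) (π/2)) := by
    apply ContinuousOn.integrableOn_Icc
    apply ContinuousOn.smul _ (Complex.continuous_ofReal.comp_continuousOn hcont)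
    exact (Continuous.continuousOn (by continuity))
  rw [← RCLike.re_to_complex, ← integral_re hint]
  rw [MeasureTheory.integral_Icc_eq_integral_Ioc, ← intervalIntegral.integral_of_le (by positivity : (0:ℝ) ≤ π/2)]
  apply intervalIntegral.integral_congr
  intro v hv
  simp only [Circle.smul_def, Real.fourierChar_apply, smul_eq_mul, RCLike.re_to_complex]
  have : (Complex.exp (↑(2 * π * (-(v*w))) * Complex.I) * (hfun v : ℂ)).re
      = hfun v * Real.cos (2*π*(-(v*w))) := by
    rw [mul_comm, Complex.re_ofReal_mul, Complex.exp_ofReal_mul_I_re]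
  rw [this]
  rw [show 2*π*(-(v*w)) = -(2*π*w*v) by ring, Real.cos_neg]

lemma RL : Filter.Tendsto (fun N : ℕ => ∫ u in (0:ℝ)..(π/2), hfun u * Real.cos (2*((N:ℝ)+1)*u))
    atTop (nhds 0) := by
  have key := Real.tendsto_integral_exp_smul_cocompact
    ((Set.Icc (0:ℝ) (π/2)).indicator (fun u => (hfun u : ℂ)))
  have hw : Filter.Tendsto (fun N : ℕ => ((N:ℝ)+1)/π) atTop (Filter.cocompact ℝ) := by
    have h1 : Filter.Tendsto (fun N : ℕ => ((N:ℝ)+1)/π) atTop atTop := by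
      apply Filter.Tendsto.atTop_div_const Real.pi_pos
      exact tendsto_atTop_add_const_right _ 1 tendsto_natCast_atTop_atTop
    exact h1.mono_right (cocompact_eq_atBot_atTop (α := ℝ) ▸ le_sup_right)
  have comp := key.comp hw
  have hre := (Complex.continuous_re.tendsto 0).comp comp
  simp only [Complex.zero_re] at hre
  apply hre.congr
  intro N
  simp only [Function.comp_apply]
  rw [RLreal]
  apply intervalIntegral.integral_congr
  intro u hu
  have hπ : (π:ℝ) ≠ 0 := Real.pi_ne_zero
  have harg : 2*π*(((N:ℝ)+1)/π)*u = 2*((N:ℝ)+1)*u := by field_simp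
  simp only []
  rw [harg]

lemma step (N : ℕ) :
    ∫ u in (0:ℝ)..(π/2), hfun u
      = (∑ k ∈ Finset.range (N+1), (2*π*((-1)^k/(2*k+1)^2) - 4*(1/(2*k+1)^3)))
        + ∫ u in (0:ℝ)..(π/2), hfun u * Real.cos (2*((N:ℝ)+1)*u) := by
  have huIcc : Set.uIcc (0:ℝ) (π/2) = Set.Icc 0 (π/2) := Set.uIcc_of_le (by positivity)
  have hcont' : ContinuousOn hfun (Set.uIcc (0:ℝ) (π/2)) := huIcc ▸ hcont
  have hint2 : IntervalIntegrable (fun u => hfun u * Real.cos (2*((N:ℝ)+1)*u)) volume 0 (π/2) :=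
    (hcont'.mul ((Real.continuous_cos.comp (continuous_const.mul continuous_id)).continuousOn)).intervalIntegrable
  have hterm : ∀ c : ℝ, Continuous (fun u : ℝ => 2*(u^2*Real.sin (c*u))) := fun c =>
    continuous_const.mul ((continuous_pow 2).mul
      (Real.continuous_sin.comp (continuous_const.mul continuous_id)))
  have hint3 : IntervalIntegrable
      (fun u => ∑ k ∈ Finset.range (N+1), 2*(u^2*Real.sin ((2*(k:ℝ)+1)*u))) volume 0 (π/2) := by
    apply Continuous.intervalIntegrable
    exact continuous_finset_sum _ (fun k _ => hterm _)
  have pointwise : ∀ u ∈ Set.uIcc (0:ℝ) (π/2),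
      hfun u = (∑ k ∈ Finset.range (N+1), 2*(u^2*Real.sin ((2*(k:ℝ)+1)*u)))
        + hfun u * Real.cos (2*((N:ℝ)+1)*u) := by
    intro u hu
    rw [huIcc] at hu
    have hsum := sum_sin (N+1) u
    have hsq := Real.sin_sq_eq_half_sub (((N:ℝ)+1)*u)
    have hmulsum : ∑ k ∈ Finset.range (N+1), 2*(u^2*Real.sin ((2*(k:ℝ)+1)*u))
        = 2*u^2 * ∑ k ∈ Finset.range (N+1), Real.sin ((2*(k:ℝ)+1)*u) := by
      rw [Finset.mul_sum]; apply Finset.sum_congr rfl; intro k _; ring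
    rw [hmulsum]
    rcases eq_or_lt_of_le hu.1 with rfl | hpos
    · simp [hfun]
    · have hs : Real.sin u ≠ 0 := ne_of_gt (Real.sin_pos_of_pos_of_lt_pi hpos
        (lt_of_le_of_lt hu.2 (by linarith [Real.pi_pos])))
      push_cast at hsum
      rw [show (2:ℝ)*((N:ℝ)+1)*u = 2*(((N:ℝ)+1)*u) by ring,
        show Real.cos (2*(((N:ℝ)+1)*u)) = 1 - 2*Real.sin (((N:ℝ)+1)*u)^2 by linarith [hsq],
        ← hsum]
      simp only [hfun]
      field_simp
      ring
  rw [intervalIntegral.integral_congr pointwise, intervalIntegral.integral_add hint3 hint2]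
  congr 1
  rw [intervalIntegral.integral_finset_sum]
  · apply Finset.sum_congr rfl
    intro k _
    rw [intervalIntegral.integral_const_mul, Ik k]
    field_simp
    ring
  · intro k _
    exact (hterm _).intervalIntegrable _ _

lemma summable_inv_sq : Summable (fun k : ℕ => ((-1:ℝ))^k/(2*k+1)^2) := by
  apply Summable.of_abs
  have base : Summable (fun n : ℕ => 1/((n:ℝ)+1)^2) := by
    have := (summable_nat_add_iff 1).mpr (Real.summable_one_div_nat_pow.mpr one_lt_two)
    apply this.congr
    intro n
    push_cast
    ring
  apply Summable.of_nonneg_of_le (fun k => abs_nonneg _) _ base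
  intro k
  rw [abs_div, abs_pow, abs_neg, abs_one, one_pow, abs_pow]
  have h1 : ((k:ℝ)+1)^2 ≤ |2*(k:ℝ)+1|^2 := by
    rw [abs_of_nonneg (by positivity)]
    apply pow_le_pow_left₀ (by positivity)
    linarith
  apply div_le_div_of_nonneg_left one_pos.le (by positivity) h1

lemma summable_inv_cube : Summable (fun k : ℕ => (1:ℝ)/(2*k+1)^3) := by
  have base : Summable (fun n : ℕ => 1/((n:ℝ)+1)^3) := by
    have := (summable_nat_add_iff 1).mpr (Real.summable_one_div_nat_pow.mpr (by norm_num : (1:ℕ) < 3))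
    apply this.congr
    intro n
    push_cast
    ring
  apply Summable.of_nonneg_of_le (fun k => by positivity) _ base
  intro k
  apply div_le_div_of_nonneg_left one_pos.le (by positivity)
  apply pow_le_pow_left₀ (by positivity)
  linarith

lemma A_val : ∫ u in (0:ℝ)..(π/2), hfun u
    = 2*π*(∑' k : ℕ, ((-1:ℝ))^k/(2*k+1)^2) - 4*(∑' k : ℕ, (1:ℝ)/(2*k+1)^3) := by
  set t : ℕ → ℝ := fun k => 2*π*((-1:ℝ)^k/(2*k+1)^2) - 4*((1:ℝ)/(2*k+1)^3) with ht
  have hsum : Summable t := (summable_inv_sq.mul_left (2*π)).sub (summable_inv_cube.mul_left 4)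
  have htend : Filter.Tendsto (fun N : ℕ => ∑ k ∈ Finset.range (N+1), t k) atTop
      (nhds (∫ u in (0:ℝ)..(π/2), hfun u)) := by
    have : ∀ N : ℕ, ∑ k ∈ Finset.range (N+1), t k
        = (∫ u in (0:ℝ)..(π/2), hfun u) - ∫ u in (0:ℝ)..(π/2), hfun u * Real.cos (2*((N:ℝ)+1)*u) := by
      intro N
      have := step N
      linarith [this]
    rw [funext this]
    simpa using (tendsto_const_nhds (x := ∫ u in (0:ℝ)..(π/2), hfun u)).sub RL
  have htend' : Filter.Tendsto (fun N : ℕ => ∑ k ∈ Finset.range N, t k) atTop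
      (nhds (∫ u in (0:ℝ)..(π/2), hfun u)) := by
    rw [← tendsto_add_atTop_iff_nat 1]
    exact htend
  have := hsum.hasSum.tendsto_sum_nat
  have heq : (∫ u in (0:ℝ)..(π/2), hfun u) = ∑' k, t k := tendsto_nhds_unique htend' this
  rw [heq, ht]
  rw [Summable.tsum_sub (summable_inv_sq.mul_left (2*π)) (summable_inv_cube.mul_left 4),
    tsum_mul_left, tsum_mul_left]

lemma subst : (∫ x in (0:ℝ)..1, Real.arctan x ^ 2 / x)
    = (∫ u in (0:ℝ)..(π/2), hfun u) / 4 := by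
  have hπ := Real.pi_pos
  have hderiv : ∀ u ∈ Set.uIcc (0:ℝ) (π/2),
      HasDerivAt (fun u : ℝ => Real.tan (u/2)) (1/Real.cos (u/2)^2 * (1/2)) u := by
    intro u hu
    rw [Set.uIcc_of_le (by positivity)] at hu
    have hcos : Real.cos (u/2) ≠ 0 := by
      apply ne_of_gt
      apply Real.cos_pos_of_mem_Ioo
      exact Set.mem_Ioo.mpr ⟨by linarith [hu.1, hπ], by linarith [hu.2, hπ]⟩
    exact (Real.hasDerivAt_tan hcos).comp u ((hasDerivAt_id u).div_const 2)
  have hcd : ContinuousOn (fun u : ℝ => 1/Real.cos (u/2)^2 * (1/2)) (Set.uIcc 0 (π/2)) := by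
    rw [Set.uIcc_of_le (by positivity)]
    apply ContinuousOn.mul _ continuousOn_const
    apply ContinuousOn.div continuousOn_const
    · exact ((Real.continuous_cos.comp (continuous_id.div_const 2)).pow 2).continuousOn
    · intro u hu
      apply pow_ne_zero
      apply ne_of_gt
      apply Real.cos_pos_of_mem_Ioo
      exact Set.mem_Ioo.mpr ⟨by linarith [hu.1, hπ], by linarith [hu.2, hπ]⟩
  have key := intervalIntegral.integral_comp_smul_deriv hderiv hcd gcont
  rw [show Real.tan ((0:ℝ)/2) = 0 by norm_num, show Real.tan ((π/2)/2) = 1 by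
    rw [show (π/2)/2 = π/4 by ring, Real.tan_pi_div_four]] at key
  have heq : Set.EqOn
      (fun u => (1/Real.cos (u/2)^2 * (1/2)) • ((fun x => Real.arctan x ^ 2 / x) ∘ fun u => Real.tan (u/2)) u)
      (fun u => hfun u / 4) (Set.uIcc 0 (π/2)) := by
    intro u hu
    rw [Set.uIcc_of_le (by positivity)] at hu
    simp only [Function.comp_apply, smul_eq_mul]
    have harctan : Real.arctan (Real.tan (u/2)) = u/2 :=
      Real.arctan_tan (by linarith [hu.1, hπ]) (by linarith [hu.2, hπ])
    rw [harctan]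
    rcases eq_or_lt_of_le hu.1 with rfl | hpos
    · simp [hfun]
    · have hcos : 0 < Real.cos (u/2) := by
        apply Real.cos_pos_of_mem_Ioo
        exact Set.mem_Ioo.mpr ⟨by linarith [hu.1, hπ], by linarith [hu.2, hπ]⟩
      have hsin : 0 < Real.sin (u/2) := by
        apply Real.sin_pos_of_pos_of_lt_pi (by linarith)
        linarith [hu.2, hπ]
      have hsinu : Real.sin u = 2 * Real.sin (u/2) * Real.cos (u/2) := by
        have := Real.sin_two_mul (u/2)
        rw [show 2*(u/2) = u by ring] at this
        exact this
      simp only [hfun]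
      rw [Real.tan_eq_sin_div_cos, hsinu]
      field_simp
      ring
  rw [← key, intervalIntegral.integral_congr heq, intervalIntegral.integral_div]

lemma odd_cube_sum : (∑' k : ℕ, (1:ℝ)/(2*k+1)^3) = 7/8 * (∑' n : ℕ, 1/((n:ℝ)+1)^3) := by
  set f : ℕ → ℝ := fun m => 1/(m:ℝ)^3 with hf
  have hsumf : Summable f := Real.summable_one_div_nat_pow.mpr (by norm_num)
  have heven : Summable (fun k => f (2*k)) := hsumf.comp_injective (mul_right_injective₀ two_ne_zero)
  have hodd : Summable (fun k => f (2*k+1)) := by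
    apply hsumf.comp_injective
    intro a b hab
    have : 2*a+1 = 2*b+1 := hab
    omega
  have hkey := tsum_even_add_odd heven hodd
  have h1 : (∑' k : ℕ, f (2*k)) = 1/8 * ∑' m, f m := by
    rw [← tsum_mul_left]
    apply tsum_congr
    intro k
    simp only [hf]
    rcases eq_or_ne k 0 with rfl | hk
    · simp
    · have hk' : ((k:ℝ)) ≠ 0 := Nat.cast_ne_zero.mpr hk
      push_cast
      field_simp
      ring
  have h2 : (∑' k : ℕ, f (2*k+1)) = ∑' k : ℕ, (1:ℝ)/(2*k+1)^3 := by
    apply tsum_congr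
    intro k
    simp only [hf]
    push_cast
    ring_nf
  have h3 : (∑' m, f m) = ∑' n : ℕ, 1/((n:ℝ)+1)^3 := by
    rw [Summable.tsum_eq_zero_add hsumf]
    simp only [hf]
    norm_num
  rw [h1, h2, h3] at hkey
  linarith [hkey]

theorem stmt_8 :
    ((∫ x in (0:ℝ)..1, (Real.arctan x) ^ 2 / x : ℝ) : ℂ)
      = (π : ℂ) * (∑' k : ℕ, (-1 : ℂ) ^ k / (2 * k + 1) ^ 2) / 2
        - 7 / 8 * riemannZeta 3 := by
  have hreal : (∫ x in (0:ℝ)..1, Real.arctan x ^ 2 / x)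
      = π * (∑' k : ℕ, ((-1:ℝ))^k/(2*k+1)^2) / 2 - (7/8) * (∑' n : ℕ, 1/((n:ℝ)+1)^3) := by
    rw [subst, A_val, odd_cube_sum]
    ring
  rw [hreal]
  have hG : ((∑' k : ℕ, ((-1:ℝ))^k/(2*k+1)^2 : ℝ) : ℂ) = ∑' k : ℕ, (-1:ℂ)^k/(2*(k:ℂ)+1)^2 := by
    rw [Complex.ofReal_tsum]
    apply tsum_congr
    intro k
    push_cast
    ring
  have hzeta : riemannZeta 3 = ((∑' n : ℕ, 1/((n:ℝ)+1)^3 : ℝ) : ℂ) := by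
    rw [zeta_eq_tsum_one_div_nat_add_one_cpow (by norm_num : 1 < (3:ℂ).re)]
    rw [Complex.ofReal_tsum]
    apply tsum_congr
    intro n
    rw [show ((3:ℂ)) = ((3:ℕ):ℂ) by norm_num, Complex.cpow_natCast]
    push_cast
    ring
  rw [hzeta]
  push_cast [hG]
  ring
end

section
/- For |x| ≤ 1, arcsin(x) = ∑_{k≥0} (binom(2k,k)/2^(2k))·x^(2k+1)/(2k+1). -/
open Real
open Topology Filter

noncomputable def cc (k : ℕ) : ℝ := (Nat.choose (2*k) k : ℝ) / 2 ^ (2*k)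

lemma cc_nonneg (k : ℕ) : 0 ≤ cc k := by unfold cc; positivity

lemma cc_zero : cc 0 = 1 := by simp [cc]

lemma cc_rec (k : ℕ) : (2*(k:ℝ)+2) * cc (k+1) = (2*k+1) * cc k := by
  have h := Nat.succ_mul_centralBinom_succ k
  unfold Nat.centralBinom at h
  have h' : ((k:ℝ)+1) * (Nat.choose (2*(k+1)) (k+1) : ℝ) = 2*(2*k+1) * (Nat.choose (2*k) k : ℝ) := by
    exact_mod_cast congrArg (Nat.cast : ℕ → ℝ) h
  have h2 : (2:ℝ) ^ (2*(k+1)) = 4 * 2 ^ (2*k) := by ring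
  unfold cc
  rw [h2]
  have hp : (2:ℝ) ^ (2*k) ≠ 0 := by positivity
  rw [mul_div_assoc', mul_div_assoc', div_eq_div_iff (by positivity) hp]
  linear_combination (2:ℝ)^(2*k) * 2 * h'

lemma cc_sq (k : ℕ) : (2*(k:ℝ)+1) * cc k ^ 2 ≤ 1 := by
  induction k with
  | zero => simp [cc_zero]
  | succ n ih =>
    have hrec := cc_rec n
    have hn : (0:ℝ) < 2*(n:ℝ)+2 := by positivity
    have hc1 : cc (n+1) = (2*n+1)/(2*n+2) * cc n := by
      field_simp
      linarith [hrec]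
    rw [hc1]
    have h0 := cc_nonneg n
    push_cast
    rw [mul_pow, div_pow, div_mul_eq_mul_div, mul_div_assoc', div_le_one (by positivity)]
    nlinarith [mul_le_mul_of_nonneg_left ih (show (0:ℝ) ≤ (2*n+3)*(2*n+1) by positivity), sq_nonneg (cc n)]

lemma cc_le (k : ℕ) : cc k ≤ 1 / Real.sqrt (2*(k:ℝ)+1) := by
  have h1 : (0:ℝ) < 2*(k:ℝ)+1 := by positivity
  have h2 : cc k ^ 2 ≤ 1 / (2*(k:ℝ)+1) := by
    rw [le_div_iff₀ h1]; linarith [cc_sq k]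
  calc cc k = Real.sqrt (cc k ^ 2) := (Real.sqrt_sq (cc_nonneg k)).symm
    _ ≤ Real.sqrt (1 / (2*(k:ℝ)+1)) := Real.sqrt_le_sqrt h2
    _ = 1 / Real.sqrt (2*(k:ℝ)+1) := by rw [one_div, one_div, Real.sqrt_inv]

lemma cc_le_one (k : ℕ) : cc k ≤ 1 := by
  refine (cc_le k).trans ?_
  rw [div_le_one (Real.sqrt_pos.2 (by positivity))]
  have hk : (1:ℝ) ≤ 2*(k:ℝ)+1 := by
    have := Nat.cast_nonneg (α := ℝ) k; linarith
  nlinarith [Real.sq_sqrt (show (0:ℝ) ≤ 2*(k:ℝ)+1 by positivity), Real.sqrt_nonneg (2*(k:ℝ)+1)]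

noncomputable def uu (k : ℕ) : ℝ := 1 / (((k:ℝ)+1) * Real.sqrt ((k:ℝ)+1))

lemma rpow32 {a : ℝ} (ha : 0 ≤ a) : a ^ ((3:ℝ)/2) = a * Real.sqrt a := by
  rcases eq_or_lt_of_le ha with h | h
  · rw [← h, Real.sqrt_zero, mul_zero, Real.zero_rpow (by norm_num)]
  · have h32 : (3:ℝ)/2 = 1 + 1/2 := by norm_num
    rw [h32, Real.rpow_add h, Real.rpow_one, Real.sqrt_eq_rpow]

lemma uu_summable : Summable uu := by
  have h : Summable (fun n : ℕ => 1 / (n:ℝ) ^ ((3:ℝ)/2)) :=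
    Real.summable_one_div_nat_rpow.2 (by norm_num)
  have h2 := (summable_nat_add_iff 1).2 h
  refine h2.congr fun n => ?_
  unfold uu
  rw [rpow32 (by positivity)]
  push_cast
  ring_nf

lemma term_bound {x : ℝ} (hx : |x| ≤ 1) (k : ℕ) :
    ‖cc k * x ^ (2*k+1) / (2*(k:ℝ)+1)‖ ≤ uu k := by
  have hk0 : (0:ℝ) < 2*(k:ℝ)+1 := by positivity
  have hk1 : (0:ℝ) < (k:ℝ)+1 := by positivity
  have h1 : |x ^ (2*k+1)| ≤ 1 := by
    rw [abs_pow]; exact pow_le_one₀ (abs_nonneg x) hx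
  have e2 : uu k = 1 / (((k:ℝ)+1) * Real.sqrt ((k:ℝ)+1)) := rfl
  have hs : (0:ℝ) < Real.sqrt (2*(k:ℝ)+1) := Real.sqrt_pos.2 hk0
  calc ‖cc k * x ^ (2*k+1) / (2*(k:ℝ)+1)‖
      = cc k * |x ^ (2*k+1)| / (2*(k:ℝ)+1) := by
        rw [Real.norm_eq_abs, abs_div, abs_mul, abs_of_nonneg (cc_nonneg k), abs_of_pos hk0]
    _ ≤ (1 / Real.sqrt (2*(k:ℝ)+1)) * 1 / (2*(k:ℝ)+1) := by
        gcongr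
        · exact cc_le k
    _ = 1 / (Real.sqrt (2*(k:ℝ)+1) * (2*(k:ℝ)+1)) := by
        rw [mul_one, div_div]
    _ ≤ 1 / (Real.sqrt ((k:ℝ)+1) * ((k:ℝ)+1)) :=
        one_div_le_one_div_of_le (by positivity)
          (mul_le_mul (Real.sqrt_le_sqrt (by linarith)) (by linarith) (by linarith)
            (Real.sqrt_nonneg _))
    _ = uu k := by rw [e2, mul_comm]

noncomputable def gg (x : ℝ) : ℝ := ∑' k, cc k * x ^ (2*k+1) / (2*(k:ℝ)+1)
noncomputable def SS (x : ℝ) : ℝ := ∑' k, cc k * x ^ (2*k)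
noncomputable def DD (x : ℝ) : ℝ := ∑' k, cc k * ((2*k : ℕ) * x ^ (2*k-1))

lemma master {s : ℝ} (h0 : 0 ≤ s) (h1 : s < 1) :
    Summable (fun k : ℕ => (2*(k:ℝ)+2) * s ^ k) := by
  have hg : Summable (fun k : ℕ => s ^ k) := summable_geometric_of_lt_one h0 h1
  have hk : Summable (fun k : ℕ => (k:ℝ) * s ^ k) := by
    have := summable_pow_mul_geometric_of_norm_lt_one (R := ℝ) (r := s) 1
      (by rwa [Real.norm_eq_abs, abs_of_nonneg h0])
    simpa using this
  refine ((hk.mul_left 2).add (hg.mul_left 2)).congr fun k => ?_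
  ring

lemma pow_abs_le {x : ℝ} (hx : |x| < 1) {m k : ℕ} (hm : k ≤ m) : |x| ^ m ≤ |x| ^ k :=
  pow_le_pow_of_le_one (abs_nonneg x) hx.le hm

lemma sumA {x : ℝ} (hx : |x| < 1) :
    Summable (fun k : ℕ => (2*(k:ℝ)+1) * cc k * x ^ (2*k+1)) := by
  refine Summable.of_norm_bounded (master (abs_nonneg x) hx) fun k => ?_
  rw [Real.norm_eq_abs, abs_mul, abs_mul, abs_pow]
  have h1 : |(2*(k:ℝ)+1)| = 2*(k:ℝ)+1 := abs_of_pos (by positivity)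
  rw [h1, abs_of_nonneg (cc_nonneg k)]
  have e : (2*(k:ℝ)+1) * cc k ≤ 2*(k:ℝ)+2 := by
    have := cc_le_one k; have := cc_nonneg k; nlinarith [Nat.cast_nonneg (α := ℝ) k]
  exact mul_le_mul e (pow_abs_le hx (by omega)) (by positivity) (by positivity)

lemma sumB {x : ℝ} (hx : |x| < 1) :
    Summable (fun k : ℕ => (2*(k:ℝ)) * cc k * x ^ (2*k+1)) := by
  refine Summable.of_norm_bounded (master (abs_nonneg x) hx) fun k => ?_
  rw [Real.norm_eq_abs, abs_mul, abs_mul, abs_pow]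
  have h1 : |(2*(k:ℝ))| = 2*(k:ℝ) := abs_of_nonneg (by positivity)
  rw [h1, abs_of_nonneg (cc_nonneg k)]
  have e : (2*(k:ℝ)) * cc k ≤ 2*(k:ℝ)+2 := by
    have := cc_le_one k; have := cc_nonneg k; nlinarith [Nat.cast_nonneg (α := ℝ) k]
  exact mul_le_mul e (pow_abs_le hx (by omega)) (by positivity) (by positivity)

lemma sumC {x : ℝ} (hx : |x| < 1) :
    Summable (fun k : ℕ => cc k * x ^ (2*k+1)) := by
  refine Summable.of_norm_bounded (master (abs_nonneg x) hx) fun k => ?_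
  rw [Real.norm_eq_abs, abs_mul, abs_pow, abs_of_nonneg (cc_nonneg k)]
  calc cc k * |x| ^ (2*k+1)
      ≤ ((2*(k:ℝ)+2)) * |x| ^ k := by
        refine mul_le_mul ?_ (pow_abs_le hx (by omega)) (by positivity) (by positivity)
        linarith [cc_le_one k]

lemma hasDerivAt_gg {x : ℝ} (hx : |x| < 1) : HasDerivAt gg (SS x) x := by
  set r := (|x| + 1)/2 with hr
  have hr0 : 0 ≤ r := by positivity
  have hr1 : r < 1 := by rw [hr]; linarith
  have hxr : |x| < r := by rw [hr]; linarith [abs_nonneg x]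
  have hmem : x ∈ Set.Ioo (-r) r := abs_lt.1 hxr
  have hrpos : 0 < r := by rw [hr]; linarith [abs_nonneg x]
  have h0mem : (0:ℝ) ∈ Set.Ioo (-r) r := ⟨by linarith, hrpos⟩
  have := hasDerivAt_tsum_of_isPreconnected
    (u := fun k : ℕ => (2*(k:ℝ)+2) * r ^ k) (master hr0 hr1)
    (isOpen_Ioo (a := -r) (b := r)) ((convex_Ioo _ _).isPreconnected)
    (g := fun k y => cc k * y ^ (2*k+1) / (2*(k:ℝ)+1))
    (g' := fun k y => cc k * y ^ (2*k))
    (fun k y _ => by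
      have hne : (2*(k:ℝ)+1) ≠ 0 := by positivity
      have h := ((hasDerivAt_pow (2*k+1) y).const_mul (cc k)).div_const (2*(k:ℝ)+1)
      have h2 : cc k * (↑(2*k+1) * y ^ (2*k+1-1)) / (2*(k:ℝ)+1) = cc k * y ^ (2*k) := by
        have h3 : 2*k+1-1 = 2*k := by omega
        rw [h3]; push_cast; field_simp
      rw [h2] at h
      exact h)
    (fun k y hy => by
      have hyr : |y| ≤ r := le_of_lt (abs_lt.2 ⟨hy.1, hy.2⟩)
      rw [Real.norm_eq_abs, abs_mul, abs_pow, abs_of_nonneg (cc_nonneg k)]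
      have h1 : |y| ^ (2*k) ≤ r ^ k := by
        calc |y| ^ (2*k) ≤ r ^ (2*k) := pow_le_pow_left₀ (abs_nonneg y) hyr _
          _ ≤ r ^ k := pow_le_pow_of_le_one hr0 hr1.le (by omega)
      calc cc k * |y| ^ (2*k) ≤ 1 * (r ^ k) :=
            mul_le_mul (cc_le_one k) h1 (by positivity) (by norm_num)
        _ ≤ (2*(k:ℝ)+2) * r ^ k := by
            have h4 := pow_nonneg hr0 k
            have h5 := Nat.cast_nonneg (α := ℝ) k
            nlinarith)
    h0mem
    (by
      refine (summable_zero).congr fun k => ?_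
      simp [zero_pow])
    hmem
  exact this

lemma hasDerivAt_SS {x : ℝ} (hx : |x| < 1) : HasDerivAt SS (DD x) x := by
  set r := (|x| + 1)/2 with hr
  have hr0 : 0 ≤ r := by positivity
  have hr1 : r < 1 := by rw [hr]; linarith
  have hxr : |x| < r := by rw [hr]; linarith [abs_nonneg x]
  have hmem : x ∈ Set.Ioo (-r) r := abs_lt.1 hxr
  have hrpos : 0 < r := by rw [hr]; linarith [abs_nonneg x]
  have h0mem : (0:ℝ) ∈ Set.Ioo (-r) r := ⟨by linarith, hrpos⟩
  have := hasDerivAt_tsum_of_isPreconnected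
    (u := fun k : ℕ => (2*(k:ℝ)+2) * r ^ k) (master hr0 hr1)
    (isOpen_Ioo (a := -r) (b := r)) ((convex_Ioo _ _).isPreconnected)
    (g := fun k y => cc k * y ^ (2*k))
    (g' := fun k y => cc k * ((2*k : ℕ) * y ^ (2*k-1)))
    (fun k y _ => (hasDerivAt_pow (2*k) y).const_mul (cc k))
    (fun k y hy => by
      have hyr : |y| ≤ r := le_of_lt (abs_lt.2 ⟨hy.1, hy.2⟩)
      rw [Real.norm_eq_abs, abs_mul, abs_mul, abs_pow, abs_of_nonneg (cc_nonneg k)]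
      have hcast : |((2*k : ℕ) : ℝ)| = 2*(k:ℝ) := by
        rw [abs_of_nonneg (by positivity)]; push_cast; ring
      rw [hcast]
      rcases Nat.eq_zero_or_pos k with rfl | hk
      · norm_num
      · have h1 : |y| ^ (2*k-1) ≤ r ^ k := by
          calc |y| ^ (2*k-1) ≤ r ^ (2*k-1) := pow_le_pow_left₀ (abs_nonneg y) hyr _
            _ ≤ r ^ k := pow_le_pow_of_le_one hr0 hr1.le (by omega)
        calc cc k * (2*(k:ℝ) * |y| ^ (2*k-1)) = 2*(k:ℝ) * (cc k * |y| ^ (2*k-1)) := by ring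
          _ ≤ 2*(k:ℝ) * (1 * r ^ k) := by
              refine mul_le_mul_of_nonneg_left ?_ (by positivity)
              exact mul_le_mul (cc_le_one k) h1 (by positivity) (by norm_num)
          _ ≤ (2*(k:ℝ)+2) * r ^ k := by
              have h4 := pow_nonneg hr0 k
              nlinarith)
    h0mem
    (by
      refine summable_of_ne_finset_zero (s := {0}) fun k hk => ?_
      have hk0 : k ≠ 0 := by simpa using hk
      show cc k * (0:ℝ) ^ (2*k) = 0
      rw [zero_pow (by omega), mul_zero])
    hmem
  exact this

lemma sumD' {x : ℝ} (hx : |x| < 1) :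
    Summable (fun n : ℕ => cc (n+1) * ((2*(n+1) : ℕ) * x ^ (2*(n+1)-1))) := by
  refine (sumA hx).congr fun n => ?_
  have h3 : 2*(n+1)-1 = 2*n+1 := by omega
  rw [h3]
  push_cast
  linear_combination (-(x ^ (2*n+1))) * cc_rec n

lemma identity {x : ℝ} (hx : |x| < 1) : (1 - x^2) * DD x = x * SS x := by
  have hshift : DD x = ∑' (k : ℕ), (2*(k:ℝ)+1) * cc k * x ^ (2*k+1) := by
    unfold DD
    rw [tsum_eq_zero_add' (f := fun n : ℕ => cc n * ((2*n : ℕ) * x ^ (2*n-1))) (sumD' hx)]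
    have h0 : cc 0 * ((2*0 : ℕ) * x ^ (2*0-1)) = 0 := by norm_num
    rw [h0, zero_add]
    refine tsum_congr fun n => ?_
    have h3 : 2*(n+1)-1 = 2*n+1 := by omega
    rw [h3]
    push_cast
    linear_combination x ^ (2*n+1) * cc_rec n
  have hx2 : x^2 * DD x = ∑' (k : ℕ), (2*(k:ℝ)) * cc k * x ^ (2*k+1) := by
    unfold DD
    rw [← tsum_mul_left]
    refine tsum_congr fun k => ?_
    rcases Nat.eq_zero_or_pos k with rfl | hk
    · norm_num
    · have h3 : 2*k-1+2 = 2*k+1 := by omega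
      push_cast
      rw [show x^2 * (cc k * ((2*(k:ℝ)) * x ^ (2*k-1))) = (2*(k:ℝ)) * cc k * (x ^ (2*k-1) * x^2) by ring,
        ← pow_add, h3]
  have hxS : x * SS x = ∑' (k : ℕ), cc k * x ^ (2*k+1) := by
    unfold SS
    rw [← tsum_mul_left]
    refine tsum_congr fun k => ?_
    rw [show x * (cc k * x ^ (2*k)) = cc k * (x ^ (2*k) * x) by ring, ← pow_succ]
  have hsub : (1 - x^2) * DD x = DD x - x^2 * DD x := by ring
  rw [hsub, hx2, hshift, hxS, ← Summable.tsum_sub (sumA hx) (sumB hx)]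
  refine tsum_congr fun k => ?_
  ring

lemma const_on (f : ℝ → ℝ) (hf : ∀ y ∈ Set.Ioo (-1:ℝ) 1, HasDerivAt f 0 y)
    {x : ℝ} (hx : |x| < 1) : f x = f 0 := by
  rw [abs_lt] at hx
  rcases le_or_gt 0 x with h | h
  · have sub : Set.Icc (0:ℝ) x ⊆ Set.Ioo (-1) 1 := fun y hy =>
      ⟨by linarith [hy.1], lt_of_le_of_lt hy.2 hx.2⟩
    exact constant_of_has_deriv_right_zero
      (fun y hy => (hf y (sub hy)).continuousAt.continuousWithinAt)
      (fun y hy => (hf y (sub (Set.Ico_subset_Icc_self hy))).hasDerivWithinAt)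
      x (Set.right_mem_Icc.2 h)
  · have sub : Set.Icc x 0 ⊆ Set.Ioo (-1) 1 := fun y hy =>
      ⟨lt_of_lt_of_le hx.1 hy.1, by linarith [hy.2]⟩
    exact (constant_of_has_deriv_right_zero
      (fun y hy => (hf y (sub hy)).continuousAt.continuousWithinAt)
      (fun y hy => (hf y (sub (Set.Ico_subset_Icc_self hy))).hasDerivWithinAt)
      0 (Set.right_mem_Icc.2 h.le)).symm

lemma SS_zero : SS 0 = 1 := by
  unfold SS
  rw [tsum_eq_single 0 (fun k hk => by
    show cc k * (0:ℝ) ^ (2*k) = 0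
    rw [zero_pow (by omega), mul_zero])]
  norm_num [cc_zero]

lemma SS_nonneg (x : ℝ) : 0 ≤ SS x := by
  unfold SS
  refine tsum_nonneg fun k => ?_
  have : x ^ (2*k) = (x^k)^2 := by rw [← pow_mul, mul_comm]
  rw [this]
  exact mul_nonneg (cc_nonneg k) (sq_nonneg _)

lemma SS_eq {x : ℝ} (hx : |x| < 1) : SS x = 1 / Real.sqrt (1 - x^2) := by
  have hx2 : x^2 < 1 := by
    have h := abs_lt.1 hx
    nlinarith [h.1, h.2]
  have hpos : (0:ℝ) < 1 - x^2 := by linarith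
  have hF : ∀ y ∈ Set.Ioo (-1:ℝ) 1, HasDerivAt (fun z => (1 - z^2) * SS z ^ 2) 0 y := by
    intro y hy
    have hy' : |y| < 1 := abs_lt.2 ⟨hy.1, hy.2⟩
    have h1 : HasDerivAt (fun z : ℝ => 1 - z^2) (-(2*y^1)) y := by
      have := (hasDerivAt_pow 2 y).const_sub 1
      simpa using this
    have h2 : HasDerivAt (fun z => SS z ^ 2) ((2:ℕ) * SS y ^ 1 * DD y) y :=
      (hasDerivAt_SS hy').pow 2
    have h3 := h1.mul h2
    have hid := identity hy'
    refine h3.congr_deriv ?_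
    push_cast
    linear_combination (2 * SS y) * hid
  have hc := const_on _ hF hx
  have hF0 : (1 - (0:ℝ)^2) * SS 0 ^ 2 = 1 := by rw [SS_zero]; norm_num
  rw [hF0] at hc
  have hSx : SS x ^ 2 = 1 / (1 - x^2) := by
    field_simp at hc ⊢
    linarith [hc]
  have : SS x = Real.sqrt (1 / (1 - x^2)) := by
    rw [← hSx, Real.sqrt_sq (SS_nonneg x)]
  rw [this, one_div, one_div, Real.sqrt_inv]

lemma gg_zero : gg 0 = 0 := by
  unfold gg
  convert tsum_zero with k
  rw [zero_pow (by omega)]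
  ring

lemma gg_eq {x : ℝ} (hx : |x| < 1) : gg x = Real.arcsin x := by
  have hG : ∀ y ∈ Set.Ioo (-1:ℝ) 1, HasDerivAt (fun z => gg z - Real.arcsin z) 0 y := by
    intro y hy
    have hy' : |y| < 1 := abs_lt.2 ⟨hy.1, hy.2⟩
    have h1 : HasDerivAt gg (1 / Real.sqrt (1 - y^2)) y := by
      rw [← SS_eq hy']; exact hasDerivAt_gg hy'
    have h2 : HasDerivAt Real.arcsin (1 / Real.sqrt (1 - y^2)) y :=
      Real.hasDerivAt_arcsin (by intro h; rw [h] at hy'; norm_num at hy')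
        (by intro h; rw [h] at hy'; norm_num at hy')
    exact (h1.sub h2).congr_deriv (sub_self _)
  have hc := const_on _ hG hx
  rw [gg_zero, Real.arcsin_zero] at hc
  linarith [hc]

lemma gg_cont : ContinuousOn gg (Set.Icc (-1:ℝ) 1) := by
  unfold gg
  refine continuousOn_tsum (fun k => ?_) uu_summable
    (fun k y hy => term_bound (abs_le.2 ⟨hy.1, hy.2⟩) k)
  exact ((continuous_const.mul (continuous_pow _)).div_const _).continuousOn

lemma gg_eq_icc {x : ℝ} (hx : |x| ≤ 1) : gg x = Real.arcsin x := by
  rcases lt_or_eq_of_le hx with h | h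
  · exact gg_eq h
  · have hmem : x ∈ Set.Icc (-1:ℝ) 1 := abs_le.1 hx
    have hcl : x ∈ closure (Set.Ioo (-1:ℝ) 1) := by
      rw [closure_Ioo (show (-1:ℝ) ≠ 1 by norm_num)]; exact hmem
    have hne : (𝓝[Set.Ioo (-1:ℝ) 1] x).NeBot := mem_closure_iff_nhdsWithin_neBot.1 hcl
    have t1 : Filter.Tendsto gg (𝓝[Set.Ioo (-1:ℝ) 1] x) (𝓝 (gg x)) :=
      (gg_cont x hmem).mono Set.Ioo_subset_Icc_self
    have t2 : Filter.Tendsto Real.arcsin (𝓝[Set.Ioo (-1:ℝ) 1] x) (𝓝 (Real.arcsin x)) :=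
      (Real.continuous_arcsin.tendsto x).mono_left nhdsWithin_le_nhds
    have heq : ∀ᶠ y in 𝓝[Set.Ioo (-1:ℝ) 1] x, gg y = Real.arcsin y :=
      eventually_mem_nhdsWithin.mono fun y hy => gg_eq (abs_lt.2 ⟨hy.1, hy.2⟩)
    exact tendsto_nhds_unique (Filter.Tendsto.congr' (Filter.EventuallyEq.symm heq).symm t1) t2

theorem stmt_11 (x : ℝ) (hx : |x| ≤ 1) :
    HasSum (fun k : ℕ =>
      (Nat.choose (2 * k) k : ℝ) / 2 ^ (2 * k) * x ^ (2 * k + 1) / (2 * k + 1))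
      (Real.arcsin x) := by
  have hsum : Summable (fun k : ℕ => cc k * x ^ (2*k+1) / (2*(k:ℝ)+1)) :=
    Summable.of_norm_bounded uu_summable (term_bound hx)
  have h2 : HasSum (fun k : ℕ => cc k * x ^ (2*k+1) / (2*(k:ℝ)+1)) (Real.arcsin x) :=
    (Summable.hasSum_iff hsum).2 (gg_eq_icc hx)
  exact h2
end

section
/- For |x| ≤ 1, (arcsin(x))²/2 = ∑_{k≥1} (2^(2k)/binom(2k,k))·x^(2k)/(2k)² ... i.e. (arcsin x)² = ∑_{k≥1} (2^(2k-1)/(k²·binom(2k,k)))·x^(2k). -/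
open Real

noncomputable section

namespace AuxArcsinSq

noncomputable def A (k : ℕ) : ℝ := 2 ^ (2 * k + 1) / (((k + 1 : ℕ) : ℝ) ^ 2 * (Nat.centralBinom (k + 1) : ℝ))

lemma centralBinom_pos' (n : ℕ) : (0 : ℝ) < (Nat.centralBinom n : ℝ) := by
  exact_mod_cast Nat.centralBinom_pos n

lemma A_pos (k : ℕ) : 0 < A k := by
  have := centralBinom_pos' (k + 1)
  apply div_pos (by positivity)
  push_cast
  positivity

lemma A_rec (k : ℕ) : A (k + 1) * ((k + 2) * (2 * k + 3)) = A k * (2 * (k + 1) ^ 2) := by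
  have h : ((k + 2) * Nat.centralBinom (k + 2) : ℕ) = (2 * (2 * (k + 1) + 1)) * Nat.centralBinom (k + 1) :=
    Nat.succ_mul_centralBinom_succ (k + 1)
  have h' : ((k : ℝ) + 2) * (Nat.centralBinom (k + 2) : ℝ)
      = (4 * (k : ℝ) + 6) * (Nat.centralBinom (k + 1) : ℝ) := by
    have := congrArg (fun n : ℕ => (n : ℝ)) h
    push_cast at this
    linarith
  have h1 := (centralBinom_pos' (k + 1)).ne'
  have h2 := (centralBinom_pos' (k + 2)).ne'
  unfold A
  push_cast [show k + 1 + 1 = k + 2 from rfl]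
  field_simp
  linear_combination (-2 : ℝ) * (2:ℝ)^(2*k+1) * h'

noncomputable def d (k : ℕ) : ℝ := A k * (2 * k + 2)

lemma d_pos (k : ℕ) : 0 < d k := by
  have := A_pos k
  unfold d
  positivity

lemma d_rec (k : ℕ) : d (k + 1) * (2 * k + 3) = d k * (2 * k + 2) := by
  unfold d
  push_cast
  linear_combination 2 * A_rec k

lemma A_le (k : ℕ) : A k ≤ 2 / (((k : ℝ) + 1) * Real.sqrt ((k : ℝ) + 1)) := by
  induction k with
  | zero => simp [A, Nat.centralBinom, Nat.choose]
  | succ k ih =>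
      set s := Real.sqrt ((k : ℝ) + 1) with hs
      set t := Real.sqrt ((k : ℝ) + 2) with ht
      have hs0 : 0 < s := Real.sqrt_pos.2 (by positivity)
      have ht0 : 0 < t := Real.sqrt_pos.2 (by positivity)
      have hss : s * s = (k : ℝ) + 1 := Real.mul_self_sqrt (by positivity)
      have htt : t * t = (k : ℝ) + 2 := Real.mul_self_sqrt (by positivity)
      have hst : 2 * (s * t) ≤ 2 * (k : ℝ) + 3 := by
        nlinarith [sq_nonneg (s - t), sq_nonneg (s*t - ((k:ℝ)+1))]
      have hA1 : A (k + 1) = A k * (2 * ((k:ℝ) + 1) ^ 2) / (((k:ℝ) + 2) * (2 * (k:ℝ) + 3)) := by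
        have h := A_rec k
        field_simp
        push_cast at h ⊢
        linarith [h]
      have step2 : (2 / (((k:ℝ)+1) * s)) * (2 * ((k:ℝ) + 1) ^ 2) / (((k:ℝ) + 2) * (2 * (k:ℝ) + 3))
          = 4 * s / (((k:ℝ) + 2) * (2 * (k:ℝ) + 3)) := by
        rw [show (k:ℝ) + 1 = s * s from hss.symm]
        field_simp
        ring
      calc A (k + 1) = A k * (2 * ((k:ℝ) + 1) ^ 2) / (((k:ℝ) + 2) * (2 * (k:ℝ) + 3)) := hA1
        _ ≤ (2 / (((k:ℝ)+1) * s)) * (2 * ((k:ℝ) + 1) ^ 2) / (((k:ℝ) + 2) * (2 * (k:ℝ) + 3)) := by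
            gcongr
        _ = 4 * s / (((k:ℝ) + 2) * (2 * (k:ℝ) + 3)) := step2
        _ ≤ 2 / (((k:ℝ) + 2) * t) := by
            rw [div_le_div_iff₀ (by positivity) (by positivity)]
            have hk2 : (0:ℝ) < (k:ℝ) + 2 := by positivity
            nlinarith [mul_le_mul_of_nonneg_left hst (le_of_lt hk2)]
        _ = 2 / ((((k+1 : ℕ):ℝ) + 1) * Real.sqrt (((k+1:ℕ):ℝ) + 1)) := by
            have e : ((k+1 : ℕ):ℝ) + 1 = (k:ℝ) + 2 := by push_cast; ring
            rw [e]

lemma summable_A : Summable A := by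
  have h1 : Summable (fun n : ℕ => ((n : ℝ)) ^ (-(3/2) : ℝ)) :=
    Real.summable_nat_rpow.2 (by norm_num)
  have h2 : Summable (fun n : ℕ => (((n+1 : ℕ) : ℝ)) ^ (-(3/2) : ℝ)) :=
    (summable_nat_add_iff 1).2 h1
  have h3 : Summable (fun n : ℕ => 2 * (((n+1 : ℕ) : ℝ)) ^ (-(3/2) : ℝ)) := h2.mul_left 2
  apply h3.of_nonneg_of_le (fun k => (A_pos k).le)
  intro k
  have hk : (0:ℝ) < (k : ℝ) + 1 := by positivity
  have : (((k+1 : ℕ):ℝ)) ^ (-(3/2) : ℝ) = 1 / (((k:ℝ) + 1) * Real.sqrt ((k:ℝ) + 1)) := by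
    push_cast
    rw [Real.rpow_neg hk.le, show (3/2 : ℝ) = 1 + 1/2 by norm_num, Real.rpow_add hk,
      Real.rpow_one, ← Real.sqrt_eq_rpow, one_div]
  rw [this, mul_one_div]
  have := A_le k
  linarith

lemma A_le_two (k : ℕ) : A k ≤ 2 := by
  have h := A_le k
  have h1 : (1:ℝ) ≤ ((k:ℝ) + 1) * Real.sqrt ((k:ℝ) + 1) := by
    have : (1:ℝ) ≤ Real.sqrt ((k:ℝ) + 1) := by
      nlinarith [Real.sqrt_nonneg ((k:ℝ)+1), Real.sq_sqrt (show (0:ℝ) ≤ (k:ℝ)+1 by positivity),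
        Nat.cast_nonneg (α := ℝ) k, sq_nonneg (Real.sqrt ((k:ℝ)+1) - 1)]
    nlinarith [Nat.cast_nonneg (α := ℝ) k]
  calc A k ≤ 2 / (((k:ℝ) + 1) * Real.sqrt ((k:ℝ) + 1)) := h
    _ ≤ 2 / 1 := by gcongr
    _ = 2 := by norm_num

lemma d_le (k : ℕ) : d k ≤ 4 * ((k:ℝ) + 1) := by
  have h := A_le_two k
  have h2 := A_pos k
  unfold d
  nlinarith

/-- The series functions. -/
noncomputable def g (x : ℝ) : ℝ := ∑' k, A k * x ^ (2*k+2)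
noncomputable def D (x : ℝ) : ℝ := ∑' k, d k * x ^ (2*k+1)
noncomputable def E (x : ℝ) : ℝ := ∑' k, d k * (2*k+1) * x ^ (2*k)

lemma summable_aux {r : ℝ} (hr : |r| < 1) :
    Summable (fun k : ℕ => ((k:ℝ)+1)^2 * r^(2*k)) := by
  have hr2 : ‖r^2‖ < 1 := by
    rw [Real.norm_eq_abs, abs_pow]
    exact pow_lt_one₀ (abs_nonneg r) hr two_ne_zero
  have h0 := summable_pow_mul_geometric_of_norm_lt_one (R := ℝ) 0 hr2
  have h1 := summable_pow_mul_geometric_of_norm_lt_one (R := ℝ) 1 hr2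
  have h2 := summable_pow_mul_geometric_of_norm_lt_one (R := ℝ) 2 hr2
  have := h2.add ((h1.mul_left 2).add h0)
  apply this.congr
  intro n
  simp only [pow_zero, pow_one]
  rw [show r^(2*n) = (r^2)^n by rw [pow_mul]]
  ring

lemma norm_term_le {r : ℝ} (hr0 : 0 < r) (hr1 : r < 1) (k : ℕ) {y : ℝ} (hy : |y| ≤ r) :
    ‖d k * (2*(k:ℝ)+1) * y^(2*k)‖ ≤ 8 * (((k:ℝ)+1)^2 * r^(2*k)) := by
  have hd := d_le k
  have hdp := d_pos k
  have hyk : |y|^(2*k) ≤ r^(2*k) := pow_le_pow_left₀ (abs_nonneg y) hy _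
  have hk1 : (1:ℝ) ≤ (k:ℝ) + 1 := by linarith [Nat.cast_nonneg (α := ℝ) k]
  calc ‖d k * (2*(k:ℝ)+1) * y^(2*k)‖ = d k * (2*(k:ℝ)+1) * |y|^(2*k) := by
        rw [Real.norm_eq_abs, abs_mul, abs_mul, abs_pow, abs_of_pos hdp,
          abs_of_pos (by positivity : (0:ℝ) < 2*(k:ℝ)+1)]
    _ ≤ (4 * ((k:ℝ)+1)) * (2*(k:ℝ)+2) * r^(2*k) := by
        gcongr
        linarith
    _ ≤ 8 * (((k:ℝ)+1)^2 * r^(2*k)) := by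
        have := pow_nonneg hr0.le (2*k)
        nlinarith
lemma norm_term_le' {r : ℝ} (hr0 : 0 < r) (hr1 : r < 1) (k : ℕ) {y : ℝ} (hy : |y| ≤ r) :
    ‖d k * y^(2*k+1)‖ ≤ 8 * (((k:ℝ)+1)^2 * r^(2*k)) := by
  have h := norm_term_le hr0 hr1 k hy
  have hdp := d_pos k
  have h1 : ‖d k * y^(2*k+1)‖ ≤ ‖d k * (2*(k:ℝ)+1) * y^(2*k)‖ := by
    rw [Real.norm_eq_abs, Real.norm_eq_abs, abs_mul, abs_mul, abs_mul, abs_pow, abs_pow,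
      abs_of_pos hdp, abs_of_pos (by positivity : (0:ℝ) < 2*(k:ℝ)+1), pow_succ]
    have hy1 : |y| ≤ 1 := le_trans hy hr1.le
    have : |y|^(2*k) * |y| ≤ |y|^(2*k) * (2*(k:ℝ)+1) := by
      have := pow_nonneg (abs_nonneg y) (2*k)
      nlinarith
    nlinarith [pow_nonneg (abs_nonneg y) (2*k)]
  linarith

lemma hasDerivAt_term_g (k : ℕ) (y : ℝ) :
    HasDerivAt (fun y : ℝ => A k * y^(2*k+2)) (d k * y^(2*k+1)) y := by
  have h := (hasDerivAt_pow (2*k+2) y).const_mul (A k)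
  refine h.congr_deriv ?_
  rw [show 2*k+2-1 = 2*k+1 from by omega]
  unfold d
  push_cast
  ring

lemma hasDerivAt_term_D (k : ℕ) (y : ℝ) :
    HasDerivAt (fun y : ℝ => d k * y^(2*k+1)) (d k * (2*(k:ℝ)+1) * y^(2*k)) y := by
  have h := (hasDerivAt_pow (2*k+1) y).const_mul (d k)
  refine h.congr_deriv ?_
  rw [show 2*k+1-1 = 2*k from by omega]
  push_cast
  ring

lemma hasDerivAt_g {x : ℝ} (hx : |x| < 1) : HasDerivAt g (D x) x := by
  set r := (|x| + 1) / 2 with hrdef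
  have hx0 := abs_nonneg x
  have hr0 : 0 < r := by rw [hrdef]; linarith
  have hr1 : r < 1 := by rw [hrdef]; linarith
  have hxr : |x| < r := by rw [hrdef]; linarith
  have hu : Summable (fun k : ℕ => 8 * (((k:ℝ)+1)^2 * r^(2*k))) :=
    (summable_aux (by rwa [abs_of_pos hr0])).mul_left 8
  exact hasDerivAt_tsum_of_isPreconnected hu isOpen_Ioo (convex_Ioo (-r) r).isPreconnected
    (fun k y _ => hasDerivAt_term_g k y)
    (fun k y hy => norm_term_le' hr0 hr1 k (le_of_lt (abs_lt.2 ⟨hy.1, hy.2⟩)))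
    (Set.mem_Ioo.2 ⟨by linarith, hr0⟩)
    (Summable.congr summable_zero (fun k => by simp))
    (Set.mem_Ioo.2 ⟨(abs_lt.1 hxr).1, (abs_lt.1 hxr).2⟩)

lemma hasDerivAt_D {x : ℝ} (hx : |x| < 1) : HasDerivAt D (E x) x := by
  set r := (|x| + 1) / 2 with hrdef
  have hx0 := abs_nonneg x
  have hr0 : 0 < r := by rw [hrdef]; linarith
  have hr1 : r < 1 := by rw [hrdef]; linarith
  have hxr : |x| < r := by rw [hrdef]; linarith
  have hu : Summable (fun k : ℕ => 8 * (((k:ℝ)+1)^2 * r^(2*k))) :=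
    (summable_aux (by rwa [abs_of_pos hr0])).mul_left 8
  exact hasDerivAt_tsum_of_isPreconnected hu isOpen_Ioo (convex_Ioo (-r) r).isPreconnected
    (fun k y _ => hasDerivAt_term_D k y)
    (fun k y hy => norm_term_le hr0 hr1 k (le_of_lt (abs_lt.2 ⟨hy.1, hy.2⟩)))
    (Set.mem_Ioo.2 ⟨by linarith, hr0⟩)
    (Summable.congr summable_zero (fun k => by simp))
    (Set.mem_Ioo.2 ⟨(abs_lt.1 hxr).1, (abs_lt.1 hxr).2⟩)


lemma d_zero : d 0 = 2 := by
  have : A 0 = 1 := by simp [A, Nat.centralBinom, Nat.choose]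
  unfold d
  rw [this]
  norm_num

lemma norm_term_le_gen (k : ℕ) (y : ℝ) :
    ‖d k * (2*(k:ℝ)+1) * y^(2*k)‖ ≤ 8 * (((k:ℝ)+1)^2 * |y|^(2*k)) := by
  have hd := d_le k
  have hdp := d_pos k
  rw [Real.norm_eq_abs, abs_mul, abs_mul, abs_pow, abs_of_pos hdp,
    abs_of_pos (by positivity : (0:ℝ) < 2*(k:ℝ)+1)]
  have hp := pow_nonneg (abs_nonneg y) (2*k)
  have hk1 : (0:ℝ) ≤ (k:ℝ) := Nat.cast_nonneg k
  nlinarith [mul_le_mul_of_nonneg_right hd hp]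

lemma norm_term_le_gen' (k : ℕ) {y : ℝ} (hy : |y| ≤ 1) :
    ‖d k * y^(2*k+1)‖ ≤ 8 * (((k:ℝ)+1)^2 * |y|^(2*k)) := by
  have hd := d_le k
  have hdp := d_pos k
  rw [Real.norm_eq_abs, abs_mul, abs_pow, abs_of_pos hdp, pow_succ]
  have hp := pow_nonneg (abs_nonneg y) (2*k)
  have hk1 : (0:ℝ) ≤ (k:ℝ) := Nat.cast_nonneg k
  have hab := abs_nonneg y
  nlinarith [mul_le_mul_of_nonneg_right (mul_le_mul_of_nonneg_left hy hdp.le) hp,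
    mul_le_mul_of_nonneg_right hd hp, mul_nonneg hk1 hp, mul_nonneg (mul_nonneg hk1 hk1) hp]

lemma summable_t {x : ℝ} (hx : |x| < 1) :
    Summable (fun k : ℕ => d k * (2*(k:ℝ)+1) * x^(2*k)) := by
  exact Summable.of_norm_bounded (((summable_aux (r := |x|) (by rwa [abs_abs]))).mul_left 8)
    (fun k => norm_term_le_gen k x)

lemma summable_D {x : ℝ} (hx : |x| < 1) :
    Summable (fun k : ℕ => d k * x^(2*k+1)) := by
  exact Summable.of_norm_bounded (((summable_aux (r := |x|) (by rwa [abs_abs]))).mul_left 8)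
    (fun k => norm_term_le_gen' k hx.le)

lemma ode {x : ℝ} (hx : |x| < 1) : (1 - x^2) * E x - x * D x = 2 := by
  set t : ℕ → ℝ := fun k => d k * (2*(k:ℝ)+1) * x^(2*k) with htdef
  have hsum_t : Summable t := summable_t hx
  have hsum_t1 : Summable (fun k => t (k+1)) := (summable_nat_add_iff 1).2 hsum_t
  have hsum_D : Summable (fun k : ℕ => d k * x^(2*k+1)) := summable_D hx
  have hE : HasSum t (E x) := hsum_t.hasSum
  have hD : HasSum (fun k : ℕ => d k * x^(2*k+1)) (D x) := hsum_D.hasSum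
  have combined : HasSum (fun k => (1 - x^2) * t k - x * (d k * x^(2*k+1)))
      ((1 - x^2) * E x - x * D x) := (hE.mul_left _).sub (hD.mul_left _)
  have ptwise : (fun k => (1 - x^2) * t k - x * (d k * x^(2*k+1)))
      = fun k => t k - t (k+1) := by
    funext k
    simp only [htdef]
    push_cast
    linear_combination (x^(2*k+2)) * d_rec k
  rw [ptwise] at combined
  have htend : Filter.Tendsto (fun n => ∑ i ∈ Finset.range n, (t i - t (i+1)))
      Filter.atTop (nhds (t 0)) := by
    have h1 : (fun n => ∑ i ∈ Finset.range n, (t i - t (i+1))) = fun n => t 0 - t n := by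
      funext n
      exact Finset.sum_range_sub' t n
    rw [h1]
    have h2 : Filter.Tendsto t Filter.atTop (nhds 0) := hsum_t.tendsto_atTop_zero
    simpa using (tendsto_const_nhds (x := t 0)).sub h2
  have heq : (1 - x^2) * E x - x * D x = t 0 :=
    tendsto_nhds_unique combined.tendsto_sum_nat htend
  rw [heq, htdef]
  simp [d_zero]

lemma D_zero : D 0 = 0 := by
  unfold D
  have : ∀ k : ℕ, d k * (0:ℝ)^(2*k+1) = 0 := fun k => by simp
  simp [this]

lemma g_zero : g 0 = 0 := by
  unfold g
  have : ∀ k : ℕ, A k * (0:ℝ)^(2*k+2) = 0 := fun k => by simp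
  simp [this]

lemma eqOn_of_deriv {a b : ℝ} {f p : ℝ → ℝ} {f' : ℝ → ℝ}
    (hf : ∀ t ∈ Set.Ioo a b, HasDerivAt f (f' t) t)
    (hp : ∀ t ∈ Set.Ioo a b, HasDerivAt p (f' t) t)
    {c : ℝ} (hc : c ∈ Set.Ioo a b) (h0 : f c = p c) :
    ∀ t ∈ Set.Ioo a b, f t = p t := by
  intro y hy
  have hderiv0 : ∀ t ∈ Set.Ioo a b, HasDerivAt (fun u => f u - p u) 0 t := by
    intro t ht
    exact ((hf t ht).sub (hp t ht)).congr_deriv (sub_self _)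
  have hdiff : DifferentiableOn ℝ (fun u => f u - p u) (Set.Ioo a b) :=
    fun t ht => ((hderiv0 t ht).differentiableAt).differentiableWithinAt
  have hfd : ∀ t ∈ Set.Ioo a b, fderivWithin ℝ (fun u => f u - p u) (Set.Ioo a b) t = 0 := by
    intro t ht
    rw [fderivWithin_of_isOpen isOpen_Ioo ht]
    rw [(hderiv0 t ht).hasFDerivAt.fderiv]
    exact ContinuousLinearMap.ext fun z => by simp
  have := (convex_Ioo a b).is_const_of_fderivWithin_eq_zero hdiff hfd hy hc
  have h2 : f y - p y = f c - p c := this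
  rw [h0] at h2
  linarith [h2]


lemma abs_sin_lt {θ : ℝ} (hθ : θ ∈ Set.Ioo (-(π/2)) (π/2)) : |Real.sin θ| < 1 := by
  have hc : 0 < Real.cos θ := Real.cos_pos_of_mem_Ioo hθ
  have h1 := Real.sin_sq_add_cos_sq θ
  rw [← sq_lt_one_iff_abs_lt_one]
  nlinarith

lemma zero_mem_I : (0:ℝ) ∈ Set.Ioo (-(π/2)) (π/2) :=
  ⟨by linarith [Real.pi_div_two_pos], Real.pi_div_two_pos⟩

lemma G_deriv : ∀ θ ∈ Set.Ioo (-(π/2)) (π/2),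
    HasDerivAt (fun u : ℝ => D (Real.sin u) * Real.cos u) ((fun _ : ℝ => (2:ℝ)) θ) θ := by
  intro θ hθ
  have hD := (hasDerivAt_D (abs_sin_lt hθ)).comp θ (Real.hasDerivAt_sin θ)
  have h := hD.mul (Real.hasDerivAt_cos θ)
  have hval : E (Real.sin θ) * Real.cos θ * Real.cos θ + D (Real.sin θ) * -Real.sin θ = 2 := by
    have h1 := ode (abs_sin_lt hθ)
    have h2 := Real.sin_sq_add_cos_sq θ
    linear_combination h1 + E (Real.sin θ) * h2
  rw [← hval]
  exact h

lemma G_eq : ∀ θ ∈ Set.Ioo (-(π/2)) (π/2), D (Real.sin θ) * Real.cos θ = 2 * θ := by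
  apply eqOn_of_deriv (f' := fun _ : ℝ => (2:ℝ)) G_deriv
  · intro t _
    simpa using (hasDerivAt_id t).const_mul (2:ℝ)
  · exact zero_mem_I
  · simp [D_zero]

lemma F_eq : ∀ θ ∈ Set.Ioo (-(π/2)) (π/2), g (Real.sin θ) = θ^2 := by
  apply eqOn_of_deriv (f' := fun u : ℝ => 2 * u)
  · intro θ hθ
    have h := (hasDerivAt_g (abs_sin_lt hθ)).comp θ (Real.hasDerivAt_sin θ)
    rw [show D (Real.sin θ) * Real.cos θ = 2 * θ from G_eq θ hθ] at h
    exact h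
  · intro θ _
    simpa using hasDerivAt_pow 2 θ
  · exact zero_mem_I
  · simp [g_zero]

lemma g_eq_arcsin_sq {x : ℝ} (hx : |x| < 1) : g x = Real.arcsin x ^ 2 := by
  have h := abs_lt.1 hx
  have hθ : Real.arcsin x ∈ Set.Ioo (-(π/2)) (π/2) :=
    ⟨Real.neg_pi_div_two_lt_arcsin.2 h.1, Real.arcsin_lt_pi_div_two.2 h.2⟩
  have := F_eq (Real.arcsin x) hθ
  rwa [Real.sin_arcsin h.1.le h.2.le] at this

lemma g_contOn : ContinuousOn g (Set.Icc (-1:ℝ) 1) := by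
  have tu := tendstoUniformlyOn_tsum summable_A
    (f := fun (k : ℕ) (x : ℝ) => A k * x^(2*k+2)) (s := Set.Icc (-1:ℝ) 1) ?_
  · exact tu.continuousOn (Filter.Eventually.of_forall fun t =>
      (continuous_finset_sum t fun i _ =>
        (continuous_const.mul (continuous_pow _))).continuousOn).frequently
  · intro k x hx
    have hx1 : |x| ≤ 1 := abs_le.2 ⟨hx.1, hx.2⟩
    have := A_pos k
    rw [Real.norm_eq_abs, abs_mul, abs_of_pos this, abs_pow]
    nlinarith [pow_le_one₀ (abs_nonneg x) hx1 (n := 2*k+2), pow_nonneg (abs_nonneg x) (2*k+2)]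

lemma g_eqOn_Icc : Set.EqOn g (fun x => Real.arcsin x ^ 2) (Set.Icc (-1:ℝ) 1) := by
  apply Set.EqOn.of_subset_closure (s := Set.Ioo (-1:ℝ) 1)
    (fun x hx => g_eq_arcsin_sq (abs_lt.2 ⟨hx.1, hx.2⟩))
    g_contOn ((Real.continuous_arcsin.pow 2).continuousOn)
    Set.Ioo_subset_Icc_self
  rw [closure_Ioo (by norm_num : (-1:ℝ) ≠ 1)]

end AuxArcsinSq

open AuxArcsinSq in
theorem stmt_12 (x : ℝ) (hx : |x| ≤ 1) :
    HasSum (fun k : ℕ =>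
      2 ^ (2 * (k + 1) - 1) /
        (((k + 1 : ℕ) : ℝ) ^ 2 * (Nat.choose (2 * (k + 1)) (k + 1) : ℝ))
        * x ^ (2 * (k + 1)))
      ((Real.arcsin x) ^ 2) := by
  have hsum : Summable (fun k : ℕ => A k * x^(2*k+2)) := by
    apply Summable.of_norm_bounded summable_A
    intro k
    have := A_pos k
    rw [Real.norm_eq_abs, abs_mul, abs_of_pos this, abs_pow]
    nlinarith [pow_le_one₀ (abs_nonneg x) hx (n := 2*k+2), pow_nonneg (abs_nonneg x) (2*k+2)]
  have hgs : HasSum (fun k : ℕ => A k * x^(2*k+2)) (g x) := hsum.hasSum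
  rw [g_eqOn_Icc (Set.mem_Icc.2 (abs_le.1 hx))] at hgs
  have hfun : (fun k : ℕ =>
      2 ^ (2 * (k + 1) - 1) /
        (((k + 1 : ℕ) : ℝ) ^ 2 * (Nat.choose (2 * (k + 1)) (k + 1) : ℝ))
        * x ^ (2 * (k + 1)))
      = fun k : ℕ => A k * x^(2*k+2) := by
    funext k
    rw [show 2*(k+1)-1 = 2*k+1 from by omega, show 2*(k+1) = 2*k+2 from by ring]
    rfl
  rw [hfun]
  exact hgs


end
end

section
/- For every positive integer n, the multiple zeta value ζ({2}^n) = ∑_{n₁>n₂>⋯>nₙ≥1} 1/(n₁²⋯nₙ²) equals π^(2n)/(2n+1)!. -/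
open Real Filter Finset Topology

namespace Stmt13

noncomputable def a (k : ℕ) : ℝ := 1 / ((k : ℝ) + 1) ^ 2

lemma a_nonneg (k : ℕ) : 0 ≤ a k := by
  unfold a; positivity

lemma summable_a : Summable a := by
  have h : Summable (fun k : ℕ => 1 / (k : ℝ) ^ 2) := by
    simpa using Real.summable_one_div_nat_pow.mpr (by norm_num : 1 < 2)
  have := (summable_nat_add_iff 1).mpr h
  refine this.congr fun k => ?_
  simp only [a]
  push_cast
  ring_nf

noncomputable def B : ℝ := ∑' k, a k

lemma B_nonneg : 0 ≤ B := tsum_nonneg a_nonneg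

noncomputable def g (n : ℕ) : {s : Finset ℕ // s.card = n} → ℝ := fun s => ∏ k ∈ s.1, a k

lemma g_nonneg (n : ℕ) (s : {s : Finset ℕ // s.card = n}) : 0 ≤ g n s :=
  Finset.prod_nonneg fun k _ => a_nonneg k

lemma summable_g_and_le (n : ℕ) : Summable (g n) ∧ ∑' s, g n s ≤ B ^ n := by
  induction n with
  | zero =>
      have hs : HasSum (g 0) (g 0 ⟨∅, rfl⟩) := by
        apply hasSum_single
        intro b hb
        exact absurd (Subtype.ext (Finset.card_eq_zero.mp b.2)) hb
      refine ⟨hs.summable, ?_⟩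
      rw [hs.tsum_eq]
      simp [g]
  | succ n ih =>
      obtain ⟨ihs, ihle⟩ := ih
      -- the injection into ℕ × {s // s.card = n}
      set G : ℕ × {s : Finset ℕ // s.card = n} → ℝ := fun p => a p.1 * g n p.2 with hG
      have hGsum : Summable G := summable_a.mul_of_nonneg ihs a_nonneg (g_nonneg n)
      have hGnonneg : ∀ p, 0 ≤ G p := fun p => mul_nonneg (a_nonneg _) (g_nonneg n _)
      have hne : ∀ s : {s : Finset ℕ // s.card = n + 1}, s.1.Nonempty := fun s =>
        Finset.card_pos.mp (by rw [s.2]; exact Nat.succ_pos n)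
      set i : {s : Finset ℕ // s.card = n + 1} → ℕ × {s : Finset ℕ // s.card = n} :=
        fun s => (s.1.min' (hne s), ⟨s.1.erase (s.1.min' (hne s)), by
          rw [Finset.card_erase_of_mem (Finset.min'_mem _ _), s.2]; rfl⟩) with hi
      have hkey : ∀ s, g (n + 1) s = G (i s) := by
        intro s
        simp only [g, G, i]
        exact (Finset.mul_prod_erase s.1 a (Finset.min'_mem _ _)).symm
      have hinj : Function.Injective i := by
        intro s t hst
        have h1 : s.1.min' (hne s) = t.1.min' (hne t) := congrArg Prod.fst hst
        have h2 : s.1.erase (s.1.min' (hne s)) = t.1.erase (t.1.min' (hne t)) :=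
          congrArg (fun p => (Prod.snd p).1) hst
        apply Subtype.ext
        rw [← Finset.insert_erase (Finset.min'_mem s.1 (hne s)), h2, h1,
          Finset.insert_erase (Finset.min'_mem t.1 (hne t))]
      have hsum : Summable (g (n + 1)) := by
        refine (hGsum.comp_injective hinj).congr fun s => (hkey s).symm
      refine ⟨hsum, ?_⟩
      have h1 : ∑' s, g (n + 1) s = ∑' s, (G ∘ i) s := tsum_congr fun s => hkey s
      have h2 : ∑' s, (G ∘ i) s ≤ ∑' p, G p :=
        tsum_comp_le_tsum_of_inj hGsum hGnonneg hinj
      have h3 : ∑' p, G p = B * ∑' s, g n s := by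
        exact (summable_a.hasSum.mul_eq ihs.hasSum hGsum.hasSum).symm
      calc ∑' s, g (n + 1) s ≤ B * ∑' s, g n s := by rw [h1, ← h3]; exact h2
        _ ≤ B * B ^ n := by
            exact mul_le_mul_of_nonneg_left ihle B_nonneg
        _ = B ^ (n + 1) := by ring

noncomputable def c (n : ℕ) : ℝ := ∑' s, g n s

lemma summable_g (n : ℕ) : Summable (g n) := (summable_g_and_le n).1

lemma c_nonneg (n : ℕ) : 0 ≤ c n := tsum_nonneg (g_nonneg n)

lemma c_le (n : ℕ) : c n ≤ B ^ n := (summable_g_and_le n).2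


lemma ha (j : ℕ) : a j = 1 / ((j : ℝ) + 1) ^ 2 := rfl

noncomputable def e (N n : ℕ) : ℝ := ∑ s ∈ (Finset.range N).powersetCard n, ∏ k ∈ s, a k

noncomputable def F (n : ℕ) (N : ℕ) : Finset {s : Finset ℕ // s.card = n} :=
  ((Finset.range N).powerset).subtype (fun s => s.card = n)

lemma sum_F (n N : ℕ) : ∑ s ∈ F n N, g n s = e N n := by
  rw [F, e, Finset.powersetCard_eq_filter]
  exact Finset.sum_subtype_eq_sum_filter (fun s => ∏ k ∈ s, a k)

lemma e_le_c (N n : ℕ) : e N n ≤ c n := by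
  rw [← sum_F]
  exact Summable.sum_le_tsum _ (fun s _ => g_nonneg n s) (summable_g n)

lemma e_nonneg (N n : ℕ) : 0 ≤ e N n :=
  Finset.sum_nonneg fun s _ => Finset.prod_nonneg fun k _ => a_nonneg k

lemma tendsto_e (n : ℕ) : Tendsto (fun N => e N n) atTop (𝓝 (c n)) := by
  have h1 : Tendsto (F n) atTop atTop := by
    apply Filter.tendsto_atTop_finset_of_monotone
    · intro N M hNM
      intro s hs
      simp only [F, Finset.mem_subtype, Finset.mem_powerset] at hs ⊢
      exact hs.trans (Finset.range_subset_range.mpr hNM)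
    · intro s
      refine ⟨s.1.sup id + 1, ?_⟩
      simp only [F, Finset.mem_subtype, Finset.mem_powerset]
      intro k hk
      exact Finset.mem_range.mpr (Nat.lt_succ_of_le (Finset.le_sup (f := id) hk))
  have h2 := (summable_g n).hasSum.comp h1
  simpa only [Function.comp_def, sum_F, c] using h2

lemma prod_eq_sum (x : ℝ) (N : ℕ) :
    ∏ j ∈ Finset.range N, (1 - x ^ 2 * a j)
      = ∑ m ∈ Finset.range (N + 1), (-1) ^ m * e N m * x ^ (2 * m) := by
  have h1 : ∀ j ∈ Finset.range N, (1 - x ^ 2 * a j) = (-(x ^ 2)) * a j + 1 := by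
    intro j _; ring
  rw [Finset.prod_congr rfl h1, Finset.prod_add]
  have h2 : ∀ t ∈ (Finset.range N).powerset,
      (∏ i ∈ t, (-(x ^ 2)) * a i) * ∏ i ∈ Finset.range N \ t, (1 : ℝ)
        = (-1) ^ t.card * x ^ (2 * t.card) * ∏ i ∈ t, a i := by
    intro t _
    rw [Finset.prod_const_one, mul_one, Finset.prod_mul_distrib, Finset.prod_const]
    rw [neg_pow, pow_mul]
  rw [Finset.sum_congr rfl h2]
  have h3 : ∀ t ∈ (Finset.range N).powerset, t.card ∈ Finset.range (N + 1) := by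
    intro t ht
    exact Finset.mem_range.mpr (Nat.lt_succ_of_le
      ((Finset.card_le_card (Finset.mem_powerset.mp ht)).trans_eq (Finset.card_range N)))
  rw [← Finset.sum_fiberwise_of_maps_to h3]
  refine Finset.sum_congr rfl fun m _ => ?_
  rw [← Finset.powersetCard_eq_filter]
  have hcc : ∀ t ∈ Finset.powersetCard m (Finset.range N),
      (-1 : ℝ) ^ t.card * x ^ (2 * t.card) * ∏ i ∈ t, a i
        = (-1) ^ m * x ^ (2 * m) * ∏ i ∈ t, a i := fun t ht => by
    rw [(Finset.mem_powersetCard.mp ht).2]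
  rw [Finset.sum_congr rfl hcc, ← Finset.mul_sum, e]
  ring

lemma e_eq_zero (N n : ℕ) (h : N < n) : e N n = 0 := by
  rw [e, Finset.powersetCard_eq_empty.mpr (by rwa [Finset.card_range]), Finset.sum_empty]


noncomputable def p (m : ℕ) : ℝ := π ^ (2 * m) / (Nat.factorial (2 * m + 1) : ℝ)

lemma p_nonneg (m : ℕ) : 0 ≤ p m := by unfold p; positivity

lemma p_le (m : ℕ) : p m ≤ (π ^ 2) ^ m := by
  rw [p, ← pow_mul]
  apply div_le_self (by positivity)
  exact_mod_cast Nat.one_le_iff_ne_zero.mpr (Nat.factorial_ne_zero _)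


lemma norm_term_eq (q x : ℝ) (hq : 0 ≤ q) (m : ℕ) :
    ‖(-1 : ℝ) ^ m * q * x ^ (2 * m)‖ = q * (x ^ 2) ^ m := by
  rw [norm_mul, norm_mul, norm_pow, norm_neg, norm_one, one_pow, one_mul,
    Real.norm_eq_abs, Real.norm_eq_abs, abs_of_nonneg hq, pow_mul,
    abs_of_nonneg (by positivity : (0 : ℝ) ≤ (x ^ 2) ^ m)]

lemma norm_term_le {q r x : ℝ} {m : ℕ} (hq : 0 ≤ q) (hqr : q ≤ r ^ m) :
    ‖(-1 : ℝ) ^ m * q * x ^ (2 * m)‖ ≤ (r * x ^ 2) ^ m := by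
  rw [norm_term_eq q x hq, mul_pow]
  exact mul_le_mul_of_nonneg_right hqr (by positivity)

lemma summable_c_pow {x : ℝ} (hB : B * x ^ 2 < 1) :
    Summable (fun m => (-1 : ℝ) ^ m * c m * x ^ (2 * m)) := by
  apply Summable.of_norm_bounded (g := fun m => (B * x ^ 2) ^ m)
    (summable_geometric_of_lt_one (mul_nonneg B_nonneg (sq_nonneg x)) hB)
  intro m
  exact norm_term_le (c_nonneg m) (c_le m)

lemma sin_eq_c {x : ℝ} (hx : 0 < x) (hB : B * x ^ 2 < 1) :
    π * x * ∑' m, (-1 : ℝ) ^ m * c m * x ^ (2 * m) = Real.sin (π * x) := by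
  have hBx : 0 ≤ B * x ^ 2 := mul_nonneg B_nonneg (sq_nonneg x)
  have hgeo : Summable (fun m => (B * x ^ 2) ^ m) := summable_geometric_of_lt_one hBx hB
  set h : ℕ → ℕ → ℝ := fun N m => (-1 : ℝ) ^ m * e N m * x ^ (2 * m) with hh
  have hbound : ∀ N m, ‖h N m‖ ≤ (B * x ^ 2) ^ m := by
    intro N m
    exact norm_term_le (e_nonneg N m) ((e_le_c N m).trans (c_le m))
  have htendsto : Tendsto (fun N => ∑' m, h N m) atTop
      (𝓝 (∑' m, (-1 : ℝ) ^ m * c m * x ^ (2 * m))) := by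
    apply tendsto_tsum_of_dominated_convergence hgeo
    · intro m
      exact ((tendsto_e m).const_mul ((-1 : ℝ) ^ m)).mul_const (x ^ (2 * m))
    · exact Eventually.of_forall fun N => hbound N
  have heq : ∀ N, ∑' m, h N m = ∏ j ∈ Finset.range N, (1 - x ^ 2 * a j) := by
    intro N
    rw [prod_eq_sum]
    apply tsum_eq_sum
    intro m hm
    rw [hh]
    simp only
    rw [e_eq_zero N m (by simpa using Nat.lt_of_succ_le (Nat.succ_le_of_lt
      (by simpa [Finset.mem_range] using hm)))]
    ring
  have h1 : Tendsto (fun N => π * x * ∑' m, h N m) atTop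
      (𝓝 (π * x * ∑' m, (-1 : ℝ) ^ m * c m * x ^ (2 * m))) := htendsto.const_mul _
  have h2 : Tendsto (fun N => π * x * ∑' m, h N m) atTop (𝓝 (Real.sin (π * x))) := by
    have := Real.tendsto_euler_sin_prod x
    apply this.congr
    intro N
    rw [heq N]
    congr 1
    apply Finset.prod_congr rfl
    intro j _
    rw [ha j]
    field_simp
  exact tendsto_nhds_unique h1 h2

lemma summable_p_pow (x : ℝ) (hp2 : π ^ 2 * x ^ 2 < 1) :
    Summable (fun m => (-1 : ℝ) ^ m * p m * x ^ (2 * m)) := by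
  apply Summable.of_norm_bounded (g := fun m => (π ^ 2 * x ^ 2) ^ m)
    (summable_geometric_of_lt_one (by positivity) hp2)
  intro m
  exact norm_term_le (p_nonneg m) (p_le m)

lemma sin_eq_p (x : ℝ) :
    π * x * ∑' m, (-1 : ℝ) ^ m * p m * x ^ (2 * m) = Real.sin (π * x) := by
  have hs := Real.hasSum_sin (π * x)
  have hkey : ∀ m : ℕ, (-1 : ℝ) ^ m * (π * x) ^ (2 * m + 1) / ((2 * m + 1).factorial : ℝ)
      = π * x * ((-1 : ℝ) ^ m * p m * x ^ (2 * m)) := by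
    intro m
    rw [p, pow_succ, mul_pow]
    field_simp
  rw [show (fun n : ℕ => (-1 : ℝ) ^ n * (π * x) ^ (2 * n + 1) / ((2 * n + 1).factorial : ℝ))
      = fun m : ℕ => π * x * ((-1 : ℝ) ^ m * p m * x ^ (2 * m)) from funext hkey] at hs
  rw [← hs.tsum_eq, tsum_mul_left]

set_option maxHeartbeats 1000000 in
lemma coeff_zero {K : ℝ} (hK : 1 ≤ K) {d : ℕ → ℝ} (hb : ∀ m, |d m| ≤ 2 * K ^ m)
    (hz : ∀ y : ℝ, 0 < y → y * K < 1 / 2 → ∑' m, d m * y ^ m = 0) : ∀ m, d m = 0 := by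
  have hK0 : 0 < K := lt_of_lt_of_le one_pos hK
  intro m
  induction m using Nat.strong_induction_on with
  | _ m IH =>
  -- key estimate for all small y
  have key : ∀ y : ℝ, 0 < y → y * K < 1 / 2 → |d m| ≤ 4 * K ^ (m + 1) * y := by
    intro y hy hyK
    have hKy0 : 0 ≤ K * y := le_of_lt (mul_pos hK0 hy)
    have hKy1 : K * y < 1 / 2 := by rwa [mul_comm] at hyK
    have hKy1' : K * y < 1 := hKy1.trans (by norm_num)
    have hgeo : Summable (fun j : ℕ => (K * y) ^ j) := summable_geometric_of_lt_one hKy0 hKy1'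
    -- summability of shifted series
    have hsum : ∀ l : ℕ, Summable (fun j : ℕ => d (j + l) * y ^ j) := by
      intro l
      apply Summable.of_norm_bounded (g := fun j => (2 * K ^ l) * (K * y) ^ j) (hgeo.mul_left _)
      intro j
      rw [Real.norm_eq_abs, abs_mul, abs_pow, abs_of_nonneg hy.le, mul_pow]
      calc |d (j + l)| * y ^ j ≤ 2 * K ^ (j + l) * y ^ j :=
            mul_le_mul_of_nonneg_right (hb _) (by positivity)
        _ = 2 * K ^ l * (K ^ j * y ^ j) := by rw [pow_add]; ring
    have hsum0 : Summable (fun j : ℕ => d j * y ^ j) := by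
      simpa using hsum 0
    -- the full sum vanishes
    have h0 : ∑' j, d j * y ^ j = 0 := hz y hy hyK
    -- split off the first m terms (which vanish by IH)
    have hsplit := (Summable.sum_add_tsum_nat_add (f := fun j => d j * y ^ j) m hsum0).symm
    have hfin : ∑ j ∈ Finset.range m, d j * y ^ j = 0 := by
      apply Finset.sum_eq_zero
      intro j hj
      rw [IH j (Finset.mem_range.mp hj), zero_mul]
    rw [h0, hfin, zero_add] at hsplit
    -- hsplit : ∑' j, d (j + m) * y ^ (j + m) = 0
    have hym : (0:ℝ) < y ^ m := pow_pos hy m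
    have hsplit2 : ∑' j, d (j + m) * y ^ j = 0 := by
      have : ∀ j : ℕ, d (j + m) * y ^ (j + m) = y ^ m * (d (j + m) * y ^ j) := by
        intro j; rw [pow_add]; ring
      rw [tsum_congr this, tsum_mul_left] at hsplit
      rcases mul_eq_zero.mp hsplit.symm with h | h
      · exact absurd h hym.ne'
      · exact h
    -- split off first term
    have hsplit3 := (Summable.sum_add_tsum_nat_add (f := fun j => d (j + m) * y ^ j) 1 (hsum m)).symm
    rw [hsplit2] at hsplit3
    simp only [Finset.range_one, Finset.sum_singleton, pow_zero, mul_one, Nat.zero_add] at hsplit3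
    -- hsplit3 : 0 = d m + ∑' j, d (j + 1 + m) * y ^ (j + 1)
    have habs : |d m| = |∑' j : ℕ, d (j + 1 + m) * y ^ (j + 1)| := by
      have : d m = -∑' j : ℕ, d (j + 1 + m) * y ^ (j + 1) := by linarith [hsplit3]
      rw [this, abs_neg]
    rw [habs]
    have hsum' : Summable (fun j : ℕ => d (j + 1 + m) * y ^ (j + 1)) := by
      have := (hsum (m + 1)).mul_right y
      apply this.congr
      intro j
      rw [pow_succ]
      ring_nf
    calc |∑' j : ℕ, d (j + 1 + m) * y ^ (j + 1)|
        ≤ ∑' j : ℕ, |d (j + 1 + m) * y ^ (j + 1)| := by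
          have := norm_tsum_le_tsum_norm (f := fun j : ℕ => d (j + 1 + m) * y ^ (j + 1))
            (by simpa only [Real.norm_eq_abs] using hsum'.abs)
          simpa only [Real.norm_eq_abs] using this
      _ ≤ ∑' j : ℕ, (2 * K ^ (m + 1) * y) * (K * y) ^ j := by
          apply Summable.tsum_le_tsum _ hsum'.abs (hgeo.mul_left _)
          intro j
          rw [abs_mul, abs_pow, abs_of_nonneg hy.le]
          calc |d (j + 1 + m)| * y ^ (j + 1)
              ≤ 2 * K ^ (j + 1 + m) * y ^ (j + 1) :=
                mul_le_mul_of_nonneg_right (hb _) (by positivity)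
            _ = 2 * K ^ (m + 1) * y * (K ^ j * y ^ j) := by
                rw [pow_add, pow_add, pow_succ, pow_succ]; ring
            _ = 2 * K ^ (m + 1) * y * (K * y) ^ j := by rw [mul_pow]
      _ = (2 * K ^ (m + 1) * y) * (1 - K * y)⁻¹ := by
          rw [tsum_mul_left, tsum_geometric_of_lt_one hKy0 hKy1']
      _ ≤ (2 * K ^ (m + 1) * y) * 2 := by
          apply mul_le_mul_of_nonneg_left _ (by positivity)
          rw [inv_le_comm₀ (by linarith) (by norm_num)]
          linarith
      _ = 4 * K ^ (m + 1) * y := by ring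
  -- conclude d m = 0
  by_contra hdm
  have hC : (0:ℝ) < 4 * K ^ (m + 1) := by positivity
  set y0 : ℝ := min (1 / (4 * K)) (|d m| / (8 * K ^ (m + 1))) with hy0
  have hy0pos : 0 < y0 := lt_min (by positivity) (by positivity)
  have h1 : y0 * K < 1 / 2 := by
    calc y0 * K ≤ (1 / (4 * K)) * K := mul_le_mul_of_nonneg_right (min_le_left _ _) hK0.le
      _ = 1 / 4 := by field_simp
      _ < 1 / 2 := by norm_num
  have h2 := key y0 hy0pos h1
  have h3 : 4 * K ^ (m + 1) * y0 ≤ |d m| / 2 := by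
    calc 4 * K ^ (m + 1) * y0 ≤ 4 * K ^ (m + 1) * (|d m| / (8 * K ^ (m + 1))) :=
          mul_le_mul_of_nonneg_left (min_le_right _ _) (by positivity)
      _ = |d m| / 2 := by field_simp; ring
  have : |d m| ≤ |d m| / 2 := h2.trans h3
  have : |d m| ≤ 0 := by linarith
  exact hdm (abs_eq_zero.mp (le_antisymm this (abs_nonneg _)))


lemma c_eq_p (n : ℕ) : c n = p n := by
  set K : ℝ := B + π ^ 2 + 1 with hKdef
  have hBK : B ≤ K := by nlinarith [sq_nonneg π]
  have hpK : π ^ 2 ≤ K := by nlinarith [B_nonneg]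
  have hK : 1 ≤ K := by nlinarith [B_nonneg, sq_nonneg π]
  have hK0 : 0 < K := lt_of_lt_of_le one_pos hK
  set d : ℕ → ℝ := fun m => (-1 : ℝ) ^ m * (c m - p m) with hd
  have hb : ∀ m, |d m| ≤ 2 * K ^ m := by
    intro m
    have h1 : c m ≤ K ^ m := (c_le m).trans (pow_le_pow_left₀ B_nonneg hBK m)
    have h2 : p m ≤ K ^ m := (p_le m).trans (pow_le_pow_left₀ (sq_nonneg π) hpK m)
    have : |d m| = |c m - p m| := by
      rw [hd]; simp [abs_mul, abs_pow]
    rw [this, abs_sub_le_iff]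
    constructor
    · linarith [p_nonneg m]
    · linarith [c_nonneg m]
  have hz : ∀ y : ℝ, 0 < y → y * K < 1 / 2 → ∑' m, d m * y ^ m = 0 := by
    intro y hy hyK
    set x : ℝ := Real.sqrt y with hx
    have hx0 : 0 < x := Real.sqrt_pos.mpr hy
    have hx2 : x ^ 2 = y := Real.sq_sqrt hy.le
    have hKy1 : K * y < 1 := by
      rw [mul_comm]
      calc y * K < 1 / 2 := hyK
        _ < 1 := by norm_num
    have hBy : B * x ^ 2 < 1 := by
      rw [hx2]
      calc B * y ≤ K * y := mul_le_mul_of_nonneg_right hBK hy.le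
        _ < 1 := hKy1
    have hpy : π ^ 2 * x ^ 2 < 1 := by
      rw [hx2]
      calc π ^ 2 * y ≤ K * y := mul_le_mul_of_nonneg_right hpK hy.le
        _ < 1 := hKy1
    have hpix : π * x ≠ 0 := by positivity
    have hAP : ∑' m, (-1 : ℝ) ^ m * c m * x ^ (2 * m)
        = ∑' m, (-1 : ℝ) ^ m * p m * x ^ (2 * m) :=
      mul_left_cancel₀ hpix ((sin_eq_c hx0 hBy).trans (sin_eq_p x).symm)
    have hterm : ∀ m : ℕ, d m * y ^ m
        = (-1 : ℝ) ^ m * c m * x ^ (2 * m) - (-1 : ℝ) ^ m * p m * x ^ (2 * m) := by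
      intro m
      rw [hd, pow_mul, hx2]
      ring
    rw [tsum_congr hterm, Summable.tsum_sub (summable_c_pow hBy) (summable_p_pow x hpy), hAP, sub_self]
  have := coeff_zero hK hb hz n
  rw [hd] at this
  simp only [mul_eq_zero] at this
  rcases this with h | h
  · exact absurd h (by positivity)
  · linarith

noncomputable def equivT (n : ℕ) :
    {s : Finset ℕ // s.card = n} ≃ {f : Fin n → ℕ // StrictAnti f ∧ ∀ i, 0 < f i} where
  toFun s := ⟨fun i => s.1.orderEmbOfFin s.2 i.rev + 1, by
      constructor
      · intro i j hij
        exact Nat.add_lt_add_right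
          ((s.1.orderEmbOfFin s.2).strictMono (Fin.rev_lt_rev.mpr hij)) 1
      · intro i; exact Nat.succ_pos _⟩
  invFun f := ⟨Finset.image (fun i => f.1 i - 1) Finset.univ, by
      have hinj : Function.Injective (fun i => f.1 i - 1) := by
        intro i j hij
        apply f.2.1.injective
        have hi := f.2.2 i
        have hj := f.2.2 j
        simpa using Nat.sub_one_cancel hi hj (by simpa using hij)
      rw [Finset.card_image_of_injective _ hinj, Finset.card_univ, Fintype.card_fin]⟩
  left_inv s := by
    apply Subtype.ext
    simp only
    ext k
    simp only [Finset.mem_image, Finset.mem_univ, true_and, Nat.add_sub_cancel]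
    constructor
    · rintro ⟨i, rfl⟩
      exact Finset.orderEmbOfFin_mem _ _ _
    · intro hk
      have : k ∈ Set.range (s.1.orderEmbOfFin s.2) := by
        rw [Finset.range_orderEmbOfFin]; exact hk
      obtain ⟨i, hi⟩ := this
      exact ⟨i.rev, by rw [Fin.rev_rev]; exact hi⟩
  right_inv f := by
    apply Subtype.ext
    simp only
    set s : Finset ℕ := Finset.image (fun i => f.1 i - 1) Finset.univ with hs
    have hcard : s.card = n := by
      have hinj : Function.Injective (fun i => f.1 i - 1) := by
        intro i j hij
        apply f.2.1.injective
        have hi := f.2.2 i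
        have hj := f.2.2 j
        simpa using Nat.sub_one_cancel hi hj (by simpa using hij)
      rw [hs, Finset.card_image_of_injective _ hinj, Finset.card_univ, Fintype.card_fin]
    have hmono : StrictMono (fun j : Fin n => f.1 j.rev - 1) := by
      intro j j' hjj'
      have h1 : j'.rev < j.rev := Fin.rev_lt_rev.mpr hjj'
      have h2 : f.1 j.rev < f.1 j'.rev := f.2.1 h1
      have h3 := f.2.2 j.rev
      show f.1 j.rev - 1 < f.1 j'.rev - 1
      omega
    have hmem : ∀ j : Fin n, f.1 j.rev - 1 ∈ s := by
      intro j
      exact Finset.mem_image.mpr ⟨j.rev, Finset.mem_univ _, rfl⟩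
    have huniq := Finset.orderEmbOfFin_unique hcard hmem hmono
    funext i
    have := congrFun huniq i.rev
    rw [Fin.rev_rev] at this
    have hpos := f.2.2 i
    -- goal : s.orderEmbOfFin hcard i.rev + 1 = f.1 i
    rw [← this]
    omega
  
lemma image_emb {n : ℕ} (s : {s : Finset ℕ // s.card = n}) :
    Finset.image (s.1.orderEmbOfFin s.2) Finset.univ = s.1 := by
  ext k
  simp only [Finset.mem_image, Finset.mem_univ, true_and]
  constructor
  · rintro ⟨i, rfl⟩; exact Finset.orderEmbOfFin_mem _ _ _
  · intro hk
    have : k ∈ Set.range (s.1.orderEmbOfFin s.2) := by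
      rw [Finset.range_orderEmbOfFin]; exact hk
    exact this

lemma tsum_T_eq (n : ℕ) :
    ∑' f : {f : Fin n → ℕ // StrictAnti f ∧ ∀ i, 0 < f i},
      (∏ i : Fin n, (1 : ℝ) / (f.1 i) ^ 2) = c n := by
  rw [← (equivT n).tsum_eq
    (fun f : {f : Fin n → ℕ // StrictAnti f ∧ ∀ i, 0 < f i} => ∏ i : Fin n, (1 : ℝ) / (f.1 i) ^ 2)]
  apply tsum_congr
  intro s
  show (∏ i : Fin n, (1 : ℝ) / ((s.1.orderEmbOfFin s.2 i.rev + 1 : ℕ) : ℝ) ^ 2) = g n s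
  have h1 : ∀ i : Fin n, (1 : ℝ) / ((s.1.orderEmbOfFin s.2 i.rev + 1 : ℕ) : ℝ) ^ 2
      = a (s.1.orderEmbOfFin s.2 i.rev) := by
    intro i
    rw [a]
    push_cast
    ring_nf
  rw [Finset.prod_congr rfl (fun i _ => h1 i)]
  have h2 : (∏ i : Fin n, a (s.1.orderEmbOfFin s.2 i.rev))
      = ∏ i : Fin n, a (s.1.orderEmbOfFin s.2 i) :=
    Equiv.prod_comp (Fin.revPerm) (fun i => a (s.1.orderEmbOfFin s.2 i))
  have h3 : ∏ k ∈ Finset.image (s.1.orderEmbOfFin s.2) Finset.univ, a k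
      = ∏ i : Fin n, a (s.1.orderEmbOfFin s.2 i) := by
    apply Finset.prod_image
    intro i _ j _ hij
    exact (s.1.orderEmbOfFin s.2).injective hij
  rw [image_emb s] at h3
  rw [h2, g, ← h3]


end Stmt13

open Real

theorem stmt_13 (n : ℕ) (hn : 0 < n) :
    ∑' f : {f : Fin n → ℕ // StrictAnti f ∧ ∀ i, 0 < f i},
      (∏ i : Fin n, (1 : ℝ) / (f.1 i) ^ 2)
      = π ^ (2 * n) / (Nat.factorial (2 * n + 1) : ℝ) := by
  rw [Stmt13.tsum_T_eq n, Stmt13.c_eq_p n, Stmt13.p]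
end
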